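/- arXiv:2207.07544 — 8 statements merged into one kernel-verified Lean document; each statement's English description precedes it below -/
import Mathlib

section
/- A stochastic kernel Ψ on S1×S2 given S3 is semi-uniform Feller if and only if Ψ is WTV-continuous, i.e., for each open set O ⊆ S1 and each sequence s3^(n) converging to s3 in S3, liminf_{n→∞} inf_{B ∈ B(S2)} ( Ψ(O×B|s3^(n)) − Ψ(O×B|s3) ) ≥ 0. -/
/-!
Write `Ψ(ds1, B | s)` for the measure `A ↦ Ψ(A × B | s)` on `S1` and read "uniformly in `B` as
`n → ∞`" as convergence along the filter `atTop ×ˢ ⊤` on `ℕ × B(S2)`. Both conditions then become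
portmanteau-type statements about the pair of families `Ψ(ds1, B | s3⁽ⁿ⁾)`, `Ψ(ds1, B | s3)`.

From open sets to integrals: a `[0, 1]`-valued continuous `f` lies within `1/k` of the step function
`k⁻¹ ∑ᵢ 1{f > (i+1)/k}`, whose integral is a sum of measures of open superlevel sets; a general
bounded `f` is an affine image of such a function, which needs the convergence of total masses.

From integrals to open sets: by inner regularity of the marginal `Ψ(ds1 | s3)` choose a closed
`F ⊆ O` of almost full measure and a Urysohn function between `F` and `Oᶜ`. It serves for all `B`
at once, since every `Ψ(ds1, B | s3)` is dominated by that marginal.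
-/

open MeasureTheory ProbabilityTheory Filter Topology

/-- A stochastic kernel `Ψ` on `X × Y` given `T` is *semi-uniform Feller* if for every
sequence `t n → t` in `T` and every bounded continuous `f : X → ℝ`,
`sup_{B ∈ B(Y)} |∫ f dΨ(·, B | t n) − ∫ f dΨ(·, B | t)| → 0`, where `Ψ(A, B | t) = Ψ(A × B | t)`. -/
def SemiUniformFeller {X Y T : Type*} [TopologicalSpace X] [MeasurableSpace X]
    [MeasurableSpace Y] [TopologicalSpace T] [MeasurableSpace T]
    (Ψ : Kernel T (X × Y)) : Prop :=
  ∀ (s : ℕ → T) (t : T), Tendsto s atTop (𝓝 t) → ∀ f : BoundedContinuousFunction X ℝ,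
    Tendsto (fun n => ⨆ B : {B : Set Y // MeasurableSet B},
      |(∫ x in Set.univ ×ˢ B.1, f x.1 ∂(Ψ (s n))) - ∫ x in Set.univ ×ˢ B.1, f x.1 ∂(Ψ t)|)
      atTop (𝓝 0)

open Set
open scoped Finset BoundedContinuousFunction

lemma card_filter_add_one_lt_bounds {c : ℝ} {k : ℕ} (hc0 : 0 ≤ c) (hck : c ≤ k) :
    (#{i ∈ Finset.range k | ((i : ℕ) : ℝ) + 1 < c} : ℝ) ≤ c ∧
      c ≤ #{i ∈ Finset.range k | ((i : ℕ) : ℝ) + 1 < c} + 1 := by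
  have hceil : ⌈c⌉₊ ≤ k := Nat.ceil_le.2 hck
  have hfilter : {i ∈ Finset.range k | ((i : ℕ) : ℝ) + 1 < c} = Finset.range (⌈c⌉₊ - 1) := by
    ext i
    have : (i : ℝ) + 1 < c ↔ i + 1 < ⌈c⌉₊ := by exact_mod_cast Nat.lt_ceil.symm
    simp only [Finset.mem_filter, Finset.mem_range, this]
    omega
  rw [hfilter, Finset.card_range]
  constructor
  · calc ((⌈c⌉₊ - 1 : ℕ) : ℝ) ≤ ⌊c⌋₊ := by
          exact_mod_cast Nat.sub_le_of_le_add (Nat.ceil_le_floor_add_one c)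
      _ ≤ c := Nat.floor_le hc0
  · calc c ≤ ⌈c⌉₊ := Nat.le_ceil c
      _ ≤ ((⌈c⌉₊ - 1 : ℕ) : ℝ) + 1 := by exact_mod_cast le_tsub_add

lemma sum_indicator_superlevel_bounds {X : Type*} {f : X → ℝ} (hf01 : ∀ x, f x ∈ Icc 0 1)
    (k : ℕ) (x : X) :
    ∑ i ∈ Finset.range k, {y | (i + 1 : ℝ) < k * f y}.indicator 1 x ≤ k * f x ∧
      k * f x ≤ ∑ i ∈ Finset.range k, {y | (i + 1 : ℝ) < k * f y}.indicator 1 x + 1 := by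
  have hsum : ∑ i ∈ Finset.range k, {y | (i + 1 : ℝ) < k * f y}.indicator (1 : X → ℝ) x
      = #{i ∈ Finset.range k | ((i : ℕ) : ℝ) + 1 < k * f x} := by
    simp only [indicator_apply, mem_ofPred_eq, Pi.one_apply, Finset.sum_boole]
  rw [hsum]
  exact card_filter_add_one_lt_bounds (by nlinarith [(hf01 x).1])
    (by nlinarith [(hf01 x).1, (hf01 x).2])

section Approximation

variable {X : Type*} [TopologicalSpace X] [MeasurableSpace X] [OpensMeasurableSpace X]

lemma sum_measureReal_superlevel_bounds (μ : Measure X) [IsFiniteMeasure μ] {f : X → ℝ}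
    (hf : Continuous f) (hf01 : ∀ x, f x ∈ Icc 0 1) (k : ℕ) :
    ∑ i ∈ Finset.range k, μ.real {x | (i + 1 : ℝ) < k * f x} ≤ k * ∫ x, f x ∂μ ∧
      k * ∫ x, f x ∂μ ≤ ∑ i ∈ Finset.range k, μ.real {x | (i + 1 : ℝ) < k * f x} + μ.real univ := by
  have hmeas : ∀ i : ℕ, MeasurableSet {x | (i + 1 : ℝ) < k * f x} := fun i =>
    (isOpen_lt continuous_const (continuous_const.mul hf)).measurableSet
  have hint_ind : ∀ i ∈ Finset.range k,
      Integrable ({x | (i + 1 : ℝ) < k * f x}.indicator (1 : X → ℝ)) μ :=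
    fun i _ => (integrable_const 1).indicator (hmeas i)
  have hint_sum := integrable_finsetSum _ hint_ind
  have hint_f : Integrable f μ := .of_bound hf.aestronglyMeasurable 1 <| ae_of_all _ fun x => by
    rw [Real.norm_eq_abs, abs_le]; constructor <;> linarith [(hf01 x).1, (hf01 x).2]
  have hsum : ∫ x, ∑ i ∈ Finset.range k, {y | (i + 1 : ℝ) < k * f y}.indicator 1 x ∂μ
      = ∑ i ∈ Finset.range k, μ.real {x | (i + 1 : ℝ) < k * f x} := by
    rw [integral_finsetSum _ hint_ind]
    exact Finset.sum_congr rfl fun i _ => integral_indicator_one (hmeas i)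
  rw [← integral_const_mul, ← hsum]
  constructor
  · exact integral_mono hint_sum (hint_f.const_mul _)
      fun x => (sum_indicator_superlevel_bounds hf01 k x).1
  · have hconst : ∫ _ : X, (1 : ℝ) ∂μ = μ.real univ := by simp
    rw [← hconst, ← integral_add hint_sum (integrable_const _)]
    exact integral_mono (hint_f.const_mul _) (hint_sum.add (integrable_const _))
      fun x => (sum_indicator_superlevel_bounds hf01 k x).2

variable {α : Type*} {l : Filter α} {μ ν : α → Measure X}
  [∀ a, IsFiniteMeasure (μ a)] [∀ a, IsFiniteMeasure (ν a)]

lemma eventually_integral_sub_le_integral_of_mem_Icc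
    (hopen : ∀ O, IsOpen O → ∀ ε > 0, ∀ᶠ a in l, (ν a).real O - ε ≤ (μ a).real O)
    (hν : ∀ a, (ν a).real univ ≤ 1) {f : X → ℝ} (hf : Continuous f)
    (hf01 : ∀ x, f x ∈ Icc 0 1) {ε : ℝ} (hε : 0 < ε) :
    ∀ᶠ a in l, ∫ x, f x ∂ν a - ε ≤ ∫ x, f x ∂μ a := by
  obtain ⟨k, hk⟩ := exists_nat_gt (2 / ε)
  have hk0 : (0 : ℝ) < k := (div_pos two_pos hε).trans hk
  have hkε : 2 < k * ε := by rwa [div_lt_iff₀ hε] at hk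
  have hsuperlevel : ∀ᶠ a in l, ∀ i ∈ Finset.range k,
      (ν a).real {x | (i + 1 : ℝ) < k * f x} - ε / 2 ≤ (μ a).real {x | (i + 1 : ℝ) < k * f x} :=
    (Finset.eventually_all _).2 fun i _ =>
      hopen _ (isOpen_lt continuous_const (continuous_const.mul hf)) _ (half_pos hε)
  filter_upwards [hsuperlevel] with a ha
  have hsum : ∑ i ∈ Finset.range k, (ν a).real {x | (i + 1 : ℝ) < k * f x}
      ≤ ∑ i ∈ Finset.range k, (μ a).real {x | (i + 1 : ℝ) < k * f x} + k * (ε / 2) := by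
    calc _ ≤ ∑ i ∈ Finset.range k, ((μ a).real {x | (i + 1 : ℝ) < k * f x} + ε / 2) :=
          Finset.sum_le_sum fun i hi => by linarith [ha i hi]
      _ = _ := by simp [Finset.sum_add_distrib]
  have hν_le := (sum_measureReal_superlevel_bounds (ν a) hf hf01 k).2
  have hμ_ge := (sum_measureReal_superlevel_bounds (μ a) hf hf01 k).1
  have : k * (∫ x, f x ∂ν a - ε) ≤ k * ∫ x, f x ∂μ a := by rw [mul_sub]; linarith [hν a]
  exact le_of_mul_le_mul_left this hk0

lemma eventually_integral_sub_le_integral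
    (hopen : ∀ O, IsOpen O → ∀ ε > 0, ∀ᶠ a in l, (ν a).real O - ε ≤ (μ a).real O)
    (huniv : Tendsto (fun a => (μ a).real univ - (ν a).real univ) l (𝓝 0))
    (hν : ∀ a, (ν a).real univ ≤ 1) (f : X →ᵇ ℝ) {ε : ℝ} (hε : 0 < ε) :
    ∀ᶠ a in l, ∫ x, f x ∂ν a - ε ≤ ∫ x, f x ∂μ a := by
  set M := ‖f‖
  have hM : 0 ≤ M := norm_nonneg f
  set g : X → ℝ := fun x => (f x + M) / (2 * M + 1)
  have hg01 : ∀ x, g x ∈ Icc 0 1 := fun x => by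
    have := abs_le.1 (f.norm_coe_le_norm x)
    constructor
    · exact div_nonneg (by linarith) (by linarith)
    · rw [div_le_one (by linarith)]; linarith
  have hfg : ∀ (ρ : Measure X) [IsFiniteMeasure ρ],
      ∫ x, f x ∂ρ = (2 * M + 1) * ∫ x, g x ∂ρ - M * ρ.real univ := fun ρ _ => by
    have hg : Integrable g ρ := ((f.integrable ρ).add (integrable_const M)).div_const _
    rw [← integral_const_mul, mul_comm M, ← smul_eq_mul (a := ρ.real univ), ← integral_const,
      ← integral_sub (hg.const_mul _) (integrable_const M)]
    congr 1 with x
    simp only [g]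
    field_simp
    ring
  set δ := ε / (3 * M + 1)
  have hδ : 0 < δ := by positivity
  have hδε : (3 * M + 1) * δ = ε := mul_div_cancel₀ ε (by positivity)
  filter_upwards [eventually_integral_sub_le_integral_of_mem_Icc hopen hν
      (by fun_prop) hg01 hδ, huniv.eventually (Metric.closedBall_mem_nhds 0 hδ)]
    with a hgle hmass
  rw [dist_zero_right, Real.norm_eq_abs, abs_le] at hmass
  rw [hfg (μ a), hfg (ν a)]
  nlinarith [mul_le_mul_of_nonneg_left hgle (by linarith : 0 ≤ 2 * M + 1),
    mul_le_mul_of_nonneg_left hmass.1 hM]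

theorem tendsto_integral_sub_integral_of_forall_isOpen
    (hopen : ∀ O, IsOpen O → ∀ ε > 0, ∀ᶠ a in l, (ν a).real O - ε ≤ (μ a).real O)
    (huniv : Tendsto (fun a => (μ a).real univ - (ν a).real univ) l (𝓝 0))
    (hν : ∀ a, (ν a).real univ ≤ 1) (f : X →ᵇ ℝ) :
    Tendsto (fun a => ∫ x, f x ∂μ a - ∫ x, f x ∂ν a) l (𝓝 0) := by
  refine Metric.nhds_basis_closedBall.tendsto_right_iff.2 fun ε hε => ?_
  filter_upwards [eventually_integral_sub_le_integral hopen huniv hν f hε,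
    eventually_integral_sub_le_integral hopen huniv hν (-f) hε] with a hf hnegf
  simp only [BoundedContinuousFunction.coe_neg, Pi.neg_apply, integral_neg] at hnegf
  rw [Metric.mem_closedBall, dist_zero_right, Real.norm_eq_abs, abs_le]
  constructor <;> linarith

end Approximation

section OpenSets

variable {X : Type*} [TopologicalSpace X] [TopologicalSpace.PseudoMetrizableSpace X]
  [MeasurableSpace X] [BorelSpace X]

lemma IsOpen.exists_le_indicator_forall_measureReal_sub_le_integral {O : Set X} (hO : IsOpen O)
    (ν₀ : Measure X) [IsFiniteMeasure ν₀] {ε : ℝ} (hε : 0 < ε) :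
    ∃ f : X →ᵇ ℝ, (∀ x, f x ≤ O.indicator 1 x) ∧
      ∀ ν ≤ ν₀, ν.real O - ε ≤ ∫ x, f x ∂ν := by
  obtain ⟨F, hFO, hF, hOF⟩ := hO.measurableSet.exists_isClosed_sdiff_lt (measure_ne_top ν₀ O)
    (ENNReal.ofReal_pos.2 hε).ne'
  obtain ⟨f, hf0, hf1, hf01⟩ :=
    exists_bounded_zero_one_of_closed hO.isClosed_compl hF (disjoint_compl_left.mono_right hFO)
  refine ⟨f, fun x => ?_, fun ν hν => ?_⟩
  · by_cases hx : x ∈ O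
    · simpa [hx] using (hf01 x).2
    · simpa [hx] using (hf0 hx).le
  have : IsFiniteMeasure ν := isFiniteMeasure_of_le ν₀ hν
  have hF_le : ν.real F ≤ ∫ x, f x ∂ν := by
    rw [← integral_indicator_one hF.measurableSet]
    refine integral_mono ((integrable_const 1).indicator hF.measurableSet) (f.integrable ν)
      fun x => ?_
    by_cases hx : x ∈ F
    · simp [hx, hf1 hx]
    · simpa [hx] using (hf01 x).1
  have hOF_le : ν.real (O \ F) ≤ ε := by
    calc ν.real (O \ F) ≤ ν₀.real (O \ F) := ENNReal.toReal_mono (measure_ne_top _ _) (hν _)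
      _ ≤ ε := ENNReal.toReal_le_of_le_ofReal hε.le hOF.le
  have hO_le : ν.real O ≤ ν.real F + ν.real (O \ F) :=
    (measureReal_mono (by simp)).trans (measureReal_union_le F (O \ F))
  linarith

variable {α : Type*} {l : Filter α} {μ ν : α → Measure X} [∀ a, IsFiniteMeasure (μ a)]

theorem eventually_measureReal_sub_le_of_tendsto_integral {ν₀ : Measure X} [IsFiniteMeasure ν₀]
    (hν : ∀ a, ν a ≤ ν₀)
    (h : ∀ f : X →ᵇ ℝ, Tendsto (fun a => ∫ x, f x ∂μ a - ∫ x, f x ∂ν a) l (𝓝 0))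
    {O : Set X} (hO : IsOpen O) {ε : ℝ} (hε : 0 < ε) :
    ∀ᶠ a in l, (ν a).real O - ε ≤ (μ a).real O := by
  obtain ⟨f, hfO, hνf⟩ :=
    hO.exists_le_indicator_forall_measureReal_sub_le_integral ν₀ (half_pos hε)
  filter_upwards [(h f).eventually (Ioi_mem_nhds (neg_lt_zero.2 (half_pos hε)))] with a ha
  have hμf : ∫ x, f x ∂μ a ≤ (μ a).real O := by
    rw [← integral_indicator_one hO.measurableSet]
    exact integral_mono (f.integrable _) ((integrable_const 1).indicator hO.measurableSet) hfO
  linarith [hνf (ν a) (hν a)]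

end OpenSets

section UniformLimits

variable {α ι : Type*} [Nonempty ι] {l : Filter α}

lemma tendsto_iSup_abs_iff_tendsto_prod_top {g : α → ι → ℝ}
    (hg : ∀ a, BddAbove (range fun i => |g a i|)) :
    Tendsto (fun a => ⨆ i, |g a i|) l (𝓝 0) ↔ Tendsto (fun p => g p.1 p.2) (l ×ˢ ⊤) (𝓝 0) := by
  simp only [Metric.nhds_basis_closedBall.tendsto_right_iff, Metric.mem_closedBall,
    dist_zero_right, Real.norm_eq_abs]
  refine forall₂_congr fun ε _ => ?_
  refine (eventually_congr (.of_forall fun a => ?_)).trans mem_prod_top.symm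
  rw [abs_of_nonneg ((abs_nonneg _).trans (le_ciSup (hg a) (Classical.arbitrary ι))),
    ciSup_le_iff (hg a)]
  rfl

lemma le_liminf_iInf_iff_forall_eventually_prod_top [l.NeBot] {g : α → ι → ℝ} {C : ℝ}
    (hg : ∀ a i, |g a i| ≤ C) :
    0 ≤ liminf (fun a => ⨅ i, g a i) l ↔ ∀ ε > 0, ∀ᶠ p in l ×ˢ ⊤, -ε ≤ g p.1 p.2 := by
  have hbdd : ∀ a, BddBelow (range (g a)) := fun a =>
    ⟨-C, forall_mem_range.2 fun i => (abs_le.1 (hg a i)).1⟩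
  have hbelow : IsBoundedUnder (· ≥ ·) l fun a => ⨅ i, g a i :=
    isBoundedUnder_of ⟨-C, fun a => le_ciInf fun i => (abs_le.1 (hg a i)).1⟩
  have habove : IsCoboundedUnder (· ≥ ·) l fun a => ⨅ i, g a i :=
    (isBoundedUnder_of ⟨C, fun a => (ciInf_le (hbdd a) (Classical.arbitrary ι)).trans
      (abs_le.1 (hg a _)).2⟩).isCoboundedUnder_ge
  have hprod : ∀ ε, (∀ᶠ p in l ×ˢ ⊤, -ε ≤ g p.1 p.2) ↔ ∀ᶠ a in l, -ε ≤ ⨅ i, g a i := fun ε =>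
    mem_prod_top.trans (eventually_congr (.of_forall fun a => (le_ciInf_iff (hbdd a)).symm))
  simp only [hprod]
  refine ⟨fun h ε hε => ?_, fun h => le_of_forall_pos_le_add fun ε hε => ?_⟩
  · exact (eventually_lt_of_lt_liminf (neg_lt_zero.2 hε |>.trans_le h) hbelow).mono
      fun a => le_of_lt
  · linarith [le_liminf_of_le habove (h ε hε)]

end UniformLimits

instance {Y : Type*} [MeasurableSpace Y] : Nonempty {B : Set Y // MeasurableSet B} :=
  ⟨⟨∅, .empty⟩⟩

section Marginal

variable {X Y α : Type*} [MeasurableSpace X] [MeasurableSpace Y]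

/-- `marginalFamily μ (a, B)` is the measure `A ↦ μ a (A ×ˢ B)` on `X`, the paper's
`Ψ(ds1, B | s3)` when `μ a = Ψ(· | s3)`. -/
noncomputable def marginalFamily (μ : α → Measure (X × Y))
    (p : α × {B : Set Y // MeasurableSet B}) : Measure X :=
  ((μ p.1).restrict (univ ×ˢ p.2.1)).fst

variable {μ ν : α → Measure (X × Y)}

instance [∀ a, IsFiniteMeasure (μ a)] (p : α × {B : Set Y // MeasurableSet B}) :
    IsFiniteMeasure (marginalFamily μ p) := by
  unfold marginalFamily; infer_instance

lemma marginalFamily_real_apply (p : α × {B : Set Y // MeasurableSet B}) {O : Set X}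
    (hO : MeasurableSet O) : (marginalFamily μ p).real O = (μ p.1).real (O ×ˢ p.2.1) := by
  rw [marginalFamily, measureReal_def, measureReal_def, Measure.fst_apply hO,
    Measure.restrict_apply (hO.preimage measurable_fst), ← prod_univ, prod_inter_prod,
    inter_univ, univ_inter]

lemma integral_marginalFamily {E : Type*} [NormedAddCommGroup E] [NormedSpace ℝ E]
    (p : α × {B : Set Y // MeasurableSet B}) {f : X → E} (hf : StronglyMeasurable f) :
    ∫ x, f x ∂marginalFamily μ p = ∫ q in univ ×ˢ p.2.1, f q.1 ∂μ p.1 :=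
  integral_map measurable_fst.aemeasurable hf.aestronglyMeasurable

lemma marginalFamily_const_le (ν : Measure (X × Y)) (p : α × {B : Set Y // MeasurableSet B}) :
    marginalFamily (fun _ => ν) p ≤ ν.fst :=
  Measure.fst_mono Measure.restrict_le_self

variable {l : Filter α}

lemma tendsto_iSup_abs_setIntegral_sub_iff [TopologicalSpace X] [OpensMeasurableSpace X]
    [∀ a, IsFiniteMeasure (μ a)] [∀ a, IsFiniteMeasure (ν a)] (f : X →ᵇ ℝ) :
    Tendsto (fun a => ⨆ B : {B : Set Y // MeasurableSet B},
        |∫ q in univ ×ˢ B.1, f q.1 ∂μ a - ∫ q in univ ×ˢ B.1, f q.1 ∂ν a|) l (𝓝 0) ↔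
      Tendsto (fun p => ∫ x, f x ∂marginalFamily μ p - ∫ x, f x ∂marginalFamily ν p)
        (l ×ˢ ⊤) (𝓝 0) := by
  simp only [integral_marginalFamily _ f.continuous.stronglyMeasurable]
  refine tendsto_iSup_abs_iff_tendsto_prod_top fun a =>
    ⟨(μ a).real univ * ‖f‖ + (ν a).real univ * ‖f‖, forall_mem_range.2 fun B => ?_⟩
  simp only [← integral_marginalFamily (a, B) f.continuous.stronglyMeasurable]
  refine (abs_sub _ _).trans (add_le_add ?_ ?_) <;>
  refine (f.norm_integral_le_mul_norm _).trans (mul_le_mul_of_nonneg_right ?_ (norm_nonneg f)) <;>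
  rw [marginalFamily_real_apply _ .univ] <;> exact measureReal_mono (subset_univ _)

variable [∀ a, IsProbabilityMeasure (μ a)] [∀ a, IsProbabilityMeasure (ν a)]

lemma le_liminf_iInf_measureReal_sub_iff [l.NeBot] {O : Set X} (hO : MeasurableSet O) :
    0 ≤ liminf (fun a => ⨅ B : {B : Set Y // MeasurableSet B},
        ((μ a (O ×ˢ B.1)).toReal - (ν a (O ×ˢ B.1)).toReal)) l ↔
      ∀ ε > 0, ∀ᶠ p in l ×ˢ ⊤,
        (marginalFamily ν p).real O - ε ≤ (marginalFamily μ p).real O := by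
  simp only [← measureReal_def, marginalFamily_real_apply _ hO, sub_le_iff_le_add,
    ← neg_le_sub_iff_le_add]
  exact le_liminf_iInf_iff_forall_eventually_prod_top fun a B =>
    abs_sub_le_of_nonneg_of_le measureReal_nonneg measureReal_le_one measureReal_nonneg
      measureReal_le_one

/-- Total masses converge because the lower bounds for `B` and for `Bᶜ` add up to `1`. -/
lemma tendsto_measureReal_marginalFamily_univ_sub
    (h : ∀ ε > 0, ∀ᶠ p in l ×ˢ ⊤,
      (marginalFamily ν p).real univ - ε ≤ (marginalFamily μ p).real univ) :
    Tendsto (fun p => (marginalFamily μ p).real univ - (marginalFamily ν p).real univ)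
      (l ×ˢ ⊤) (𝓝 0) := by
  have hcompl : ∀ (ρ : Measure (X × Y)) [IsProbabilityMeasure ρ] {B : Set Y}, MeasurableSet B →
      ρ.real (univ ×ˢ Bᶜ) = 1 - ρ.real (univ ×ˢ B) := fun ρ _ B hB => by
    rw [← probReal_compl_eq_one_sub (MeasurableSet.univ.prod hB)]
    congr 1
    ext
    simp
  refine Metric.nhds_basis_closedBall.tendsto_right_iff.2 fun ε hε => mem_prod_top.2 ?_
  filter_upwards [mem_prod_top.1 (h ε hε)] with a ha B
  have hB := ha B
  have hBc := ha ⟨B.1ᶜ, B.2.compl⟩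
  simp only [marginalFamily_real_apply _ .univ, hcompl _ B.2] at hB hBc
  rw [Metric.mem_closedBall, dist_zero_right, Real.norm_eq_abs, abs_le,
    marginalFamily_real_apply _ .univ, marginalFamily_real_apply _ .univ]
  constructor <;> linarith

end Marginal

theorem semiUniformFeller_iff_wtv_continuous_general
    {S1 S2 S3 : Type*}
    [MetricSpace S1] [MeasurableSpace S1] [BorelSpace S1]
    [MeasurableSpace S2]
    [MetricSpace S3] [MeasurableSpace S3]
    (Ψ : Kernel S3 (S1 × S2)) [IsMarkovKernel Ψ] :
    SemiUniformFeller Ψ ↔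
      ∀ (O : Set S1), IsOpen O → ∀ (s : ℕ → S3) (t : S3), Tendsto s atTop (𝓝 t) →
        0 ≤ Filter.liminf (fun n => ⨅ B : {B : Set S2 // MeasurableSet B},
          (((Ψ (s n)) (O ×ˢ B.1)).toReal - ((Ψ t) (O ×ˢ B.1)).toReal)) atTop := by
  refine ⟨fun h O hO s t hst => ?_, fun h s t hst f => ?_⟩
  · have hf := fun f => (tendsto_iSup_abs_setIntegral_sub_iff f).1 (h s t hst f)
    exact (le_liminf_iInf_measureReal_sub_iff hO.measurableSet).2 fun ε hε =>
      eventually_measureReal_sub_le_of_tendsto_integral (marginalFamily_const_le (Ψ t)) hf hO hε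
  · have hopen := fun O (hO : IsOpen O) =>
      (le_liminf_iInf_measureReal_sub_iff hO.measurableSet).1 (h O hO s t hst)
    refine (tendsto_iSup_abs_setIntegral_sub_iff f).2
      (tendsto_integral_sub_integral_of_forall_isOpen hopen
        (tendsto_measureReal_marginalFamily_univ_sub (hopen univ isOpen_univ)) (fun p => ?_) f)
    rw [marginalFamily_real_apply _ .univ]
    exact measureReal_le_one

/-- A stochastic kernel `Ψ` on `S1 × S2` given `S3` is semi-uniform Feller if and only if it is
WTV-continuous: for each open `O ⊆ S1` and each sequence `s3⁽ⁿ⁾ → s3` in `S3`,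
`liminf_{n → ∞} inf_{B ∈ B(S2)} (Ψ(O × B | s3⁽ⁿ⁾) − Ψ(O × B | s3)) ≥ 0`. -/
theorem semiUniformFeller_iff_wtv_continuous
    {S1 S2 S3 : Type*}
    [MetricSpace S1] [TopologicalSpace.SeparableSpace S1] [MeasurableSpace S1] [BorelSpace S1]
    [StandardBorelSpace S1] [Nonempty S1]
    [MetricSpace S2] [TopologicalSpace.SeparableSpace S2] [MeasurableSpace S2] [BorelSpace S2]
    [StandardBorelSpace S2] [Nonempty S2]
    [MetricSpace S3] [TopologicalSpace.SeparableSpace S3] [MeasurableSpace S3] [BorelSpace S3]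
    [StandardBorelSpace S3] [Nonempty S3]
    (Ψ : Kernel S3 (S1 × S2)) [IsMarkovKernel Ψ] :
    SemiUniformFeller Ψ ↔
      ∀ (O : Set S1), IsOpen O → ∀ (s : ℕ → S3) (t : S3), Tendsto s atTop (𝓝 t) →
        0 ≤ Filter.liminf (fun n => ⨅ B : {B : Set S2 // MeasurableSet B},
          (((Ψ (s n)) (O ×ˢ B.1)).toReal - ((Ψ t) (O ×ˢ B.1)).toReal)) atTop :=
  semiUniformFeller_iff_wtv_continuous_general Ψ
end

section
/- A stochastic kernel Ψ on S1×S2 given S3 is semi-uniform Feller if and only if for every sequence s3^(n) converging to s3 in S3 and every closed set C ⊆ S1, lim_{n→∞} sup_{B ∈ B(S2)} ( Ψ(C×B|s3^(n)) − Ψ(C×B|s3) ) = 0. -/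
open MeasureTheory ProbabilityTheory Filter Topology
open scoped BoundedContinuousFunction

/-!
Write `Ψ(·, B | t)` for the measure `A ↦ Ψ(A × B | t)`. Both conditions say that
`Ψ(·, B | s n) → Ψ(·, B | t)` uniformly in `B`: one when tested against bounded continuous
functions, the other, one-sidedly, against closed sets.

Closed sets are reached from functions through thickened indicators `1_C ≤ g_k → 1_C`: the error
`∫ g_k dΨ(·, B | t) - Ψ(C × B | t)` is the integral of `g_k - 1_C ≥ 0`, hence at most its value
for `B = S2`, which is small independently of `B`. Conversely, a continuous `0 ≤ g ≤ kδ` lies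
within `δ` above the staircase `δ ∑_{i ≤ k} 1_{g ≥ iδ}` built on closed level sets, which bounds
`∫ g dΨ(·, B | s n) - ∫ g dΨ(·, B | t)` from above. A general `f` is shifted to `‖f‖ + f ≥ 0`;
the shift costs `‖f‖` times the mass defect `Ψ(S1 × B | t) - Ψ(S1 × B | s n)`, which equals
the excess on `S1 × Bᶜ` and so is controlled by the closed set `S1`. Applying this to `f` and
`-f` gives the two-sided bound.
-/

lemma tendsto_ciSup_nhds_zero_iff {α ι : Type*} {l : Filter α} {u : α → ι → ℝ}
    (hbdd : ∀ a, BddAbove (Set.range (u a))) (hnonneg : ∀ a, ∃ i, 0 ≤ u a i) :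
    Tendsto (fun a => ⨆ i, u a i) l (𝓝 0) ↔ ∀ ε > 0, ∀ᶠ a in l, ∀ i, u a i ≤ ε := by
  have hsup_nonneg (a : α) : 0 ≤ ⨆ i, u a i := by
    obtain ⟨i, hi⟩ := hnonneg a
    exact le_ciSup_of_le (hbdd a) i hi
  constructor
  · intro h ε hε
    filter_upwards [(tendsto_order.1 h).2 ε hε] with a ha i
    exact (le_ciSup (hbdd a) i).trans ha.le
  · intro h
    refine tendsto_order.2 ⟨fun b hb => .of_forall fun a => hb.trans_le (hsup_nonneg a),
      fun b hb => ?_⟩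
    filter_upwards [h (b / 2) (by positivity)] with a ha
    have : Nonempty ι := ⟨(hnonneg a).choose⟩
    exact (ciSup_le ha).trans_lt (by linarith)

lemma sum_Icc_ite_mul_le_eq_floor_mul {δ y : ℝ} (hδ : 0 < δ) (hy : 0 ≤ y) {k : ℕ}
    (hyk : y ≤ k * δ) :
    ∑ i ∈ Finset.Icc 1 k, (if (i : ℝ) * δ ≤ y then δ else 0) = ⌊y / δ⌋₊ * δ := by
  have hfloor : ⌊y / δ⌋₊ ≤ k := Nat.floor_le_of_le ((div_le_iff₀ hδ).2 hyk)
  have hfilter :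
      (Finset.Icc 1 k).filter (fun i : ℕ => (i : ℝ) * δ ≤ y) = Finset.Icc 1 ⌊y / δ⌋₊ := by
    ext i
    simp only [Finset.mem_filter, Finset.mem_Icc, ← le_div_iff₀ hδ,
      ← Nat.le_floor_iff (div_nonneg hy hδ.le)]
    omega
  rw [← Finset.sum_filter, hfilter, Finset.sum_const, Nat.card_Icc, nsmul_eq_mul,
    Nat.add_sub_cancel]

lemma floor_div_mul_le {δ y : ℝ} (hδ : 0 < δ) (hy : 0 ≤ y) : (⌊y / δ⌋₊ : ℝ) * δ ≤ y :=
  (le_div_iff₀ hδ).1 (Nat.floor_le (div_nonneg hy hδ.le))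

lemma lt_floor_div_mul_add {δ y : ℝ} (hδ : 0 < δ) : y < (⌊y / δ⌋₊ : ℝ) * δ + δ := by
  rw [← add_one_mul]
  exact (div_lt_iff₀ hδ).1 (Nat.lt_floor_add_one _)

section LevelSets

variable {X : Type*} [MeasurableSpace X] (ρ : Measure X) [IsFiniteMeasure ρ]
  {g : X → ℝ} {δ : ℝ} {k : ℕ}

lemma integral_floor_div_mul_eq_sum_measureReal (hg : Measurable g) (hδ : 0 < δ)
    (hg0 : ∀ x, 0 ≤ g x) (hgk : ∀ x, g x ≤ k * δ) :
    ∫ x, (⌊g x / δ⌋₊ : ℝ) * δ ∂ρ = (∑ i ∈ Finset.Icc 1 k, ρ.real {x | (i : ℝ) * δ ≤ g x}) * δ := by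
  have hlevel (i : ℕ) : MeasurableSet {x | (i : ℝ) * δ ≤ g x} :=
    measurableSet_le measurable_const hg
  have hstair (x : X) : (⌊g x / δ⌋₊ : ℝ) * δ =
      ∑ i ∈ Finset.Icc 1 k, {x | (i : ℝ) * δ ≤ g x}.indicator (fun _ => δ) x := by
    rw [← sum_Icc_ite_mul_le_eq_floor_mul hδ (hg0 x) (hgk x)]
    rfl
  simp_rw [hstair]
  rw [integral_finsetSum _ fun i _ => (integrable_const δ).indicator (hlevel i), Finset.sum_mul]
  simp_rw [integral_indicator_const _ (hlevel _), smul_eq_mul]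

lemma sum_measureReal_mul_le_integral (hg : Measurable g) (hδ : 0 < δ)
    (hg0 : ∀ x, 0 ≤ g x) (hgk : ∀ x, g x ≤ k * δ) :
    (∑ i ∈ Finset.Icc 1 k, ρ.real {x | (i : ℝ) * δ ≤ g x}) * δ ≤ ∫ x, g x ∂ρ := by
  rw [← integral_floor_div_mul_eq_sum_measureReal ρ hg hδ hg0 hgk]
  have hint : Integrable g ρ := .of_bound hg.aestronglyMeasurable (k * δ)
    (.of_forall fun x => (Real.norm_of_nonneg (hg0 x)).trans_le (hgk x))
  exact integral_mono_of_nonneg (.of_forall fun x => by positivity) hint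
    (.of_forall fun x => floor_div_mul_le hδ (hg0 x))

lemma integral_le_sum_measureReal_mul_add (hg : Measurable g) (hδ : 0 < δ)
    (hg0 : ∀ x, 0 ≤ g x) (hgk : ∀ x, g x ≤ k * δ) :
    ∫ x, g x ∂ρ ≤
      (∑ i ∈ Finset.Icc 1 k, ρ.real {x | (i : ℝ) * δ ≤ g x}) * δ + ρ.real Set.univ * δ := by
  have hmeas : Measurable fun x => (⌊g x / δ⌋₊ : ℝ) * δ :=
    (measurable_from_nat.comp (hg.div_const δ).nat_floor).mul_const δ
  have hbdd : Integrable (fun x => (⌊g x / δ⌋₊ : ℝ) * δ) ρ :=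
    .of_bound hmeas.aestronglyMeasurable (k * δ) (.of_forall fun x =>
      (Real.norm_of_nonneg (by positivity)).trans_le
        ((floor_div_mul_le hδ (hg0 x)).trans (hgk x)))
  rw [← integral_floor_div_mul_eq_sum_measureReal ρ hg hδ hg0 hgk, ← smul_eq_mul,
    ← integral_const, ← integral_add hbdd (integrable_const _)]
  exact integral_mono_of_nonneg (.of_forall fun x => hg0 x) (hbdd.add (integrable_const _))
    (.of_forall fun x => (lt_floor_div_mul_add hδ).le)

end LevelSets

lemma integral_sub_measureReal_le_of_le {X : Type*} [MeasurableSpace X] {ν ν' : Measure X}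
    [IsFiniteMeasure ν'] (hνν' : ν ≤ ν') {C : Set X} (hC : MeasurableSet C) {h : X → ℝ}
    (hint : Integrable h ν') (hCh : C.indicator 1 ≤ h) :
    ∫ x, h x ∂ν - ν.real C ≤ ∫ x, h x ∂ν' - ν'.real C := by
  have hC1 : Integrable (C.indicator (1 : X → ℝ)) ν' := (integrable_const 1).indicator hC
  rw [← integral_indicator_one hC, ← integral_indicator_one hC,
    ← integral_sub (hint.mono_measure hνν') (hC1.mono_measure hνν'), ← integral_sub hint hC1]
  exact integral_mono_measure hνν' (.of_forall fun x => sub_nonneg.2 (hCh x)) (hint.sub hC1)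

namespace MeasureTheory.Measure

variable {X Y : Type*} [MeasurableSpace X] [MeasurableSpace Y] (ρ : Measure (X × Y))

/-- The measure `A ↦ ρ (A ×ˢ B)` on `X`; for `ρ = Ψ(· | s₃)` it is `Ψ(ds₁, B | s₃)`. -/
noncomputable def fstOn (B : Set Y) : Measure X := (ρ.restrict (Set.univ ×ˢ B)).fst

instance [IsFiniteMeasure ρ] (B : Set Y) : IsFiniteMeasure (ρ.fstOn B) := by
  unfold fstOn; infer_instance

lemma fstOn_apply {A : Set X} (hA : MeasurableSet A) (B : Set Y) :
    ρ.fstOn B A = ρ (A ×ˢ B) := by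
  rw [fstOn, fst_apply hA, restrict_apply (hA.preimage measurable_fst)]
  congr 1
  ext p
  simp

@[simp]
lemma fstOn_empty : ρ.fstOn ∅ = 0 := by simp [fstOn]

lemma fstOn_le_fst (B : Set Y) : ρ.fstOn B ≤ ρ.fst := fst_mono restrict_le_self

lemma real_fstOn_apply {A : Set X} (hA : MeasurableSet A) (B : Set Y) :
    (ρ.fstOn B).real A = ρ.real (A ×ˢ B) := by
  rw [measureReal_def, fstOn_apply ρ hA, measureReal_def]

lemma real_fstOn_univ_add_real_fstOn_compl [IsProbabilityMeasure ρ] {B : Set Y}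
    (hB : MeasurableSet B) : (ρ.fstOn B).real Set.univ + (ρ.fstOn Bᶜ).real Set.univ = 1 := by
  rw [real_fstOn_apply ρ .univ, real_fstOn_apply ρ .univ, Set.univ_prod, Set.univ_prod,
    Set.preimage_compl]
  exact probReal_add_probReal_compl (hB.preimage measurable_snd)

lemma real_fstOn_le_one [IsProbabilityMeasure ρ] (A : Set X) (B : Set Y) :
    (ρ.fstOn B).real A ≤ 1 :=
  (measureReal_mono (Set.subset_univ A)).trans
    ((ρ.real_fstOn_apply .univ B).trans_le measureReal_le_one)

lemma integral_fstOn {E : Type*} [NormedAddCommGroup E] [NormedSpace ℝ E] {f : X → E}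
    (hf : StronglyMeasurable f) (B : Set Y) :
    ∫ x, f x ∂ρ.fstOn B = ∫ p in Set.univ ×ˢ B, f p.1 ∂ρ :=
  integral_map measurable_fst.aemeasurable hf.aestronglyMeasurable

end MeasureTheory.Measure

section UniformConvergence

variable {X Y : Type*} [TopologicalSpace X] [MeasurableSpace X] [MeasurableSpace Y]

def TendstoIntegralUniformly (μ : ℕ → Measure (X × Y)) (μ₀ : Measure (X × Y)) : Prop :=
  ∀ f : X →ᵇ ℝ, ∀ ε > 0, ∀ᶠ n in atTop, ∀ B, MeasurableSet B →
    |∫ x, f x ∂(μ n).fstOn B - ∫ x, f x ∂μ₀.fstOn B| ≤ ε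

def LimsupMeasureLeUniformly (μ : ℕ → Measure (X × Y)) (μ₀ : Measure (X × Y)) : Prop :=
  ∀ C : Set X, IsClosed C → ∀ ε > 0, ∀ᶠ n in atTop, ∀ B, MeasurableSet B →
    ((μ n).fstOn B).real C - (μ₀.fstOn B).real C ≤ ε

variable {μ : ℕ → Measure (X × Y)} {μ₀ : Measure (X × Y)}

lemma forall_tendsto_iSup_integral_iff [OpensMeasurableSpace X]
    [∀ n, IsProbabilityMeasure (μ n)] [IsProbabilityMeasure μ₀] :
    (∀ f : X →ᵇ ℝ, Tendsto (fun n => ⨆ B : {B : Set Y // MeasurableSet B},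
      |(∫ x in Set.univ ×ˢ B.1, f x.1 ∂(μ n)) - ∫ x in Set.univ ×ˢ B.1, f x.1 ∂μ₀|)
      atTop (𝓝 0)) ↔ TendstoIntegralUniformly μ μ₀ := by
  refine forall_congr' fun f => ?_
  have hbound (ν : Measure X) [IsFiniteMeasure ν] (hν : ν.real Set.univ ≤ 1) :
      |∫ x, f x ∂ν| ≤ ‖f‖ :=
    (f.norm_integral_le_mul_norm ν).trans (mul_le_of_le_one_left (norm_nonneg f) hν)
  simp only [← Measure.integral_fstOn _ f.continuous.measurable.stronglyMeasurable]
  rw [tendsto_ciSup_nhds_zero_iff (fun n => ⟨‖f‖ + ‖f‖, Set.forall_mem_range.2 fun B =>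
      (abs_sub _ _).trans (add_le_add (hbound _ ((μ n).real_fstOn_le_one _ _))
        (hbound _ (μ₀.real_fstOn_le_one _ _)))⟩)
    fun n => ⟨⟨∅, .empty⟩, abs_nonneg _⟩]
  simp only [Subtype.forall]

lemma forall_tendsto_iSup_measure_iff [OpensMeasurableSpace X]
    [∀ n, IsProbabilityMeasure (μ n)] [IsProbabilityMeasure μ₀] :
    (∀ C : Set X, IsClosed C → Tendsto (fun n => ⨆ B : {B : Set Y // MeasurableSet B},
      ((μ n (C ×ˢ B.1)).toReal - (μ₀ (C ×ˢ B.1)).toReal)) atTop (𝓝 0)) ↔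
      LimsupMeasureLeUniformly μ μ₀ := by
  refine forall₂_congr fun C hC => ?_
  simp only [← measureReal_def, ← Measure.real_fstOn_apply _ hC.measurableSet]
  rw [tendsto_ciSup_nhds_zero_iff (fun n => ⟨1, Set.forall_mem_range.2 fun B => by
      linarith [(μ n).real_fstOn_le_one C B.1, measureReal_nonneg (μ := μ₀.fstOn B.1) (s := C)]⟩)
    fun n => ⟨⟨∅, .empty⟩, by simp⟩]
  simp only [Subtype.forall]

namespace LimsupMeasureLeUniformly

lemma eventually_integral_sub_le_of_nonneg [OpensMeasurableSpace X]
    [∀ n, IsProbabilityMeasure (μ n)] [IsFiniteMeasure μ₀] (h : LimsupMeasureLeUniformly μ μ₀)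
    {g : X → ℝ} (hg : Continuous g) (hg0 : ∀ x, 0 ≤ g x) {M : ℝ} (hgM : ∀ x, g x ≤ M)
    {ε : ℝ} (hε : 0 < ε) :
    ∀ᶠ n in atTop, ∀ B, MeasurableSet B →
      ∫ x, g x ∂(μ n).fstOn B - ∫ x, g x ∂μ₀.fstOn B ≤ ε := by
  set δ := ε / 2
  have hδ : 0 < δ := half_pos hε
  obtain ⟨k, hk⟩ : ∃ k : ℕ, M ≤ k * δ := ⟨⌈M / δ⌉₊, (div_le_iff₀ hδ).1 (Nat.le_ceil _)⟩
  have hgk (x : X) : g x ≤ k * δ := (hgM x).trans hk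
  have hlevels : ∀ᶠ n in atTop, ∀ i ∈ Finset.Icc 1 k, ∀ B, MeasurableSet B →
      ((μ n).fstOn B).real {x | (i : ℝ) * δ ≤ g x} - (μ₀.fstOn B).real {x | (i : ℝ) * δ ≤ g x}
        ≤ 1 / (k + 1) :=
    (eventually_all_finset _).2 fun i _ =>
      h _ (isClosed_le continuous_const hg) _ Nat.one_div_pos_of_nat
  filter_upwards [hlevels] with n hn B hB
  have hsum : ∑ i ∈ Finset.Icc 1 k, ((μ n).fstOn B).real {x | (i : ℝ) * δ ≤ g x}
      - ∑ i ∈ Finset.Icc 1 k, (μ₀.fstOn B).real {x | (i : ℝ) * δ ≤ g x} ≤ 1 := by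
    rw [← Finset.sum_sub_distrib]
    calc _ ≤ ∑ i ∈ Finset.Icc 1 k, (1 / (k + 1) : ℝ) := Finset.sum_le_sum fun i hi => hn i hi B hB
      _ = k / (k + 1) := by simp [div_eq_mul_inv]
      _ ≤ 1 := (div_le_one (by positivity)).2 (by linarith)
  have hupper := integral_le_sum_measureReal_mul_add ((μ n).fstOn B) hg.measurable hδ hg0 hgk
  have hlower := sum_measureReal_mul_le_integral (μ₀.fstOn B) hg.measurable hδ hg0 hgk
  have hmass := (μ n).real_fstOn_le_one Set.univ B
  calc ∫ x, g x ∂(μ n).fstOn B - ∫ x, g x ∂μ₀.fstOn B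
      ≤ (∑ i ∈ Finset.Icc 1 k, ((μ n).fstOn B).real {x | (i : ℝ) * δ ≤ g x}
        - ∑ i ∈ Finset.Icc 1 k, (μ₀.fstOn B).real {x | (i : ℝ) * δ ≤ g x}) * δ
        + ((μ n).fstOn B).real Set.univ * δ := by linarith
    _ ≤ 1 * δ + 1 * δ := by gcongr
    _ = ε := by ring

lemma eventually_real_univ_sub_le [∀ n, IsProbabilityMeasure (μ n)] [IsProbabilityMeasure μ₀]
    (h : LimsupMeasureLeUniformly μ μ₀) {ε : ℝ} (hε : 0 < ε) :
    ∀ᶠ n in atTop, ∀ B, MeasurableSet B →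
      (μ₀.fstOn B).real Set.univ - ((μ n).fstOn B).real Set.univ ≤ ε := by
  filter_upwards [h Set.univ isClosed_univ ε hε] with n hn B hB
  linarith [hn Bᶜ hB.compl, (μ n).real_fstOn_univ_add_real_fstOn_compl hB,
    μ₀.real_fstOn_univ_add_real_fstOn_compl hB]

lemma eventually_integral_sub_le [OpensMeasurableSpace X] [∀ n, IsProbabilityMeasure (μ n)]
    [IsProbabilityMeasure μ₀] (h : LimsupMeasureLeUniformly μ μ₀) (f : X →ᵇ ℝ) {ε : ℝ}
    (hε : 0 < ε) :
    ∀ᶠ n in atTop, ∀ B, MeasurableSet B →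
      ∫ x, f x ∂(μ n).fstOn B - ∫ x, f x ∂μ₀.fstOn B ≤ ε := by
  set M := ‖f‖
  have hfM (x : X) : |f x| ≤ M := by simpa using f.norm_coe_le_norm x
  have hshift (x : X) : (f + .const X M) x = f x + M := rfl
  have hη : 0 < ε / (2 * (M + 1)) := by positivity
  have hMη : M * (ε / (2 * (M + 1))) ≤ ε / 2 := by
    rw [mul_div_assoc', div_le_div_iff₀ (by positivity) two_pos]
    nlinarith
  filter_upwards [h.eventually_integral_sub_le_of_nonneg (f + .const X M).continuous
      (fun x => by linarith [hshift x, (abs_le.1 (hfM x)).1]) (M := 2 * M)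
      (fun x => by linarith [hshift x, (abs_le.1 (hfM x)).2]) (half_pos hε),
    h.eventually_real_univ_sub_le hη] with n hshifted hmass B hB
  have hmass' := mul_le_mul_of_nonneg_left (hmass B hB) (norm_nonneg f : 0 ≤ M)
  have hshifted' := hshifted B hB
  rw [f.integral_add_const, f.integral_add_const, smul_eq_mul, smul_eq_mul] at hshifted'
  rw [mul_sub] at hmass'
  linarith

lemma tendstoIntegralUniformly [OpensMeasurableSpace X] [∀ n, IsProbabilityMeasure (μ n)]
    [IsProbabilityMeasure μ₀] (h : LimsupMeasureLeUniformly μ μ₀) :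
    TendstoIntegralUniformly μ μ₀ := by
  intro f ε hε
  filter_upwards [h.eventually_integral_sub_le f hε, h.eventually_integral_sub_le (-f) hε]
    with n hf hnegf B hB
  have hnegf' := hnegf B hB
  simp only [BoundedContinuousFunction.coe_neg, Pi.neg_apply, integral_neg] at hnegf'
  exact abs_le.2 ⟨by linarith, hf B hB⟩

end LimsupMeasureLeUniformly

end UniformConvergence

section PseudoEMetricSpace

variable {X Y : Type*} [PseudoEMetricSpace X] [MeasurableSpace X] [OpensMeasurableSpace X]
  [MeasurableSpace Y] {μ : ℕ → Measure (X × Y)} {μ₀ : Measure (X × Y)}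

lemma TendstoIntegralUniformly.limsupMeasureLeUniformly [∀ n, IsFiniteMeasure (μ n)]
    [IsFiniteMeasure μ₀] (h : TendstoIntegralUniformly μ μ₀) :
    LimsupMeasureLeUniformly μ μ₀ := by
  intro C hC ε hε
  have hpos (k : ℕ) : (0 : ℝ) < 1 / (k + 1) := Nat.one_div_pos_of_nat
  let g (k : ℕ) : X →ᵇ ℝ := .comp _ NNReal.isometry_coe.lipschitz (thickenedIndicator (hpos k) C)
  have hCg (k : ℕ) : C.indicator 1 ≤ ⇑(g k) := fun x => by
    simpa [g, Pi.one_def] using NNReal.coe_le_coe.2 (indicator_le_thickenedIndicator (hpos k) C x)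
  obtain ⟨k, hk⟩ : ∃ k, ∫ x, g k x ∂μ₀.fst - μ₀.fst.real C < ε / 2 := by
    have hlim := (tendsto_integral_thickenedIndicator_of_isClosed μ₀.fst hC hpos
      tendsto_one_div_add_atTop_nhds_zero_nat).sub_const (μ₀.fst.real C)
    rw [sub_self] at hlim
    exact ((tendsto_order.1 hlim).2 _ (half_pos hε)).exists
  filter_upwards [h (g k) (ε / 2) (half_pos hε)] with n hn B hB
  have hupper : ((μ n).fstOn B).real C ≤ ∫ x, g k x ∂(μ n).fstOn B := by
    rw [← integral_indicator_one hC.measurableSet]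
    exact integral_mono ((integrable_const 1).indicator hC.measurableSet) ((g k).integrable _)
      (hCg k)
  have hdeficit := integral_sub_measureReal_le_of_le (μ₀.fstOn_le_fst B) hC.measurableSet
    ((g k).integrable _) (hCg k)
  linarith [(abs_le.1 (hn B hB)).2]

lemma tendstoIntegralUniformly_iff_limsupMeasureLeUniformly [∀ n, IsProbabilityMeasure (μ n)]
    [IsProbabilityMeasure μ₀] :
    TendstoIntegralUniformly μ μ₀ ↔ LimsupMeasureLeUniformly μ μ₀ :=
  ⟨TendstoIntegralUniformly.limsupMeasureLeUniformly,
    LimsupMeasureLeUniformly.tendstoIntegralUniformly⟩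

end PseudoEMetricSpace

theorem semiUniformFeller_iff_closed_sets_general
    {S1 S2 S3 : Type*}
    [MetricSpace S1] [MeasurableSpace S1] [BorelSpace S1]
    [MeasurableSpace S2]
    [MetricSpace S3] [MeasurableSpace S3]
    (Ψ : Kernel S3 (S1 × S2)) [IsMarkovKernel Ψ] :
    SemiUniformFeller Ψ ↔
      ∀ (s : ℕ → S3) (t : S3), Tendsto s atTop (𝓝 t) → ∀ (C : Set S1), IsClosed C →
        Tendsto (fun n => ⨆ B : {B : Set S2 // MeasurableSet B},
          (((Ψ (s n)) (C ×ˢ B.1)).toReal - ((Ψ t) (C ×ˢ B.1)).toReal)) atTop (𝓝 0) :=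
  forall₂_congr fun _ _ => imp_congr_right fun _ =>
    forall_tendsto_iSup_integral_iff.trans <|
      tendstoIntegralUniformly_iff_limsupMeasureLeUniformly.trans
        forall_tendsto_iSup_measure_iff.symm

/-- A stochastic kernel `Ψ` on `S1 × S2` given `S3` is semi-uniform Feller if and only if for
every sequence `s3⁽ⁿ⁾ → s3` in `S3` and every closed `C ⊆ S1`,
`lim_{n → ∞} sup_{B ∈ B(S2)} (Ψ(C × B | s3⁽ⁿ⁾) − Ψ(C × B | s3)) = 0`. -/
theorem semiUniformFeller_iff_closed_sets
    {S1 S2 S3 : Type*}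
    [MetricSpace S1] [TopologicalSpace.SeparableSpace S1] [MeasurableSpace S1] [BorelSpace S1]
    [StandardBorelSpace S1] [Nonempty S1]
    [MetricSpace S2] [TopologicalSpace.SeparableSpace S2] [MeasurableSpace S2] [BorelSpace S2]
    [StandardBorelSpace S2] [Nonempty S2]
    [MetricSpace S3] [TopologicalSpace.SeparableSpace S3] [MeasurableSpace S3] [BorelSpace S3]
    [StandardBorelSpace S3] [Nonempty S3]
    (Ψ : Kernel S3 (S1 × S2)) [IsMarkovKernel Ψ] :
    SemiUniformFeller Ψ ↔
      ∀ (s : ℕ → S3) (t : S3), Tendsto s atTop (𝓝 t) → ∀ (C : Set S1), IsClosed C →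
        Tendsto (fun n => ⨆ B : {B : Set S2 // MeasurableSet B},
          (((Ψ (s n)) (C ×ˢ B.1)).toReal - ((Ψ t) (C ×ˢ B.1)).toReal)) atTop (𝓝 0) :=
  semiUniformFeller_iff_closed_sets_general Ψ
end

section
/- A stochastic kernel Ψ on S1×S2 given S3 is semi-uniform Feller if and only if for every sequence s3^(n) converging to s3 in S3 and every Borel set A ⊆ S1 whose boundary ∂A satisfies Ψ(∂A × S2 | s3) = 0, lim_{n→∞} sup_{B ∈ B(S2)} | Ψ(A×B|s3^(n)) − Ψ(A×B|s3) | = 0. -/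
open MeasureTheory ProbabilityTheory Filter Topology

/-!
Pass to the marginals `Ψ(· × B | s)` on `S1`. They are all dominated by the marginal `ν₀` of
`Ψ(· | t)`, which turns the statement into a portmanteau theorem holding uniformly in `B`. Both
directions are sandwich arguments: if `l ≤ g ≤ u`, `∫ (u - l) dν₀` is small and the integrals
of `l` and `u` converge uniformly in `B`, then so do those of `g`. The indicator of a
`ν₀`-continuity set lies between two thickened indicators, which are continuous; a bounded
continuous `f` lies between two step functions built on level sets `{c < f}` with
`ν₀ {f = c} = 0`. Such sets are continuity sets, and all but countably many levels `c` qualify.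
-/

open Set BoundedContinuousFunction

section UniformConvergence

variable {α ι : Type*} {p : Filter α}

lemma tendsto_iSup_abs_sub_iff_tendstoUniformly [Nonempty ι] {F : α → ι → ℝ} {G : ι → ℝ}
    {C : ℝ} (hF : ∀ a i, |F a i| ≤ C) (hG : ∀ i, |G i| ≤ C) :
    Tendsto (fun a => ⨆ i, |F a i - G i|) p (𝓝 0) ↔ TendstoUniformly F G p := by
  have hbdd : ∀ a, BddAbove (range fun i => |F a i - G i|) := fun a =>
    ⟨C + C, forall_mem_range.2 fun i => (abs_sub _ _).trans (add_le_add (hF a i) (hG i))⟩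
  rw [Metric.tendstoUniformly_iff, Metric.tendsto_nhds]
  refine ⟨fun h ε hε => ?_, fun h ε hε => ?_⟩
  · filter_upwards [h ε hε] with a ha i
    rw [Real.dist_eq, sub_zero] at ha
    rw [dist_comm, Real.dist_eq]
    exact (le_ciSup (hbdd a) i).trans_lt ((le_abs_self _).trans_lt ha)
  · filter_upwards [h (ε / 2) (half_pos hε)] with a ha
    have hsup : ⨆ i, |F a i - G i| ≤ ε / 2 :=
      ciSup_le fun i => by simpa [dist_comm, Real.dist_eq] using (ha i).le
    rw [Real.dist_eq, sub_zero, abs_of_nonneg (Real.iSup_nonneg fun _ => abs_nonneg _)]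
    linarith

lemma TendstoUniformly.const_mul_real {F : α → ι → ℝ} {G : ι → ℝ} (h : TendstoUniformly F G p)
    (c : ℝ) : TendstoUniformly (fun a i => c * F a i) (fun i => c * G i) p :=
  (uniformContinuous_mul_left' c).comp_tendstoUniformly h

lemma tendstoUniformly_finset_sum_real {κ : Type*} {s : Finset κ} {F : κ → α → ι → ℝ}
    {G : κ → ι → ℝ} (h : ∀ k ∈ s, TendstoUniformly (F k) (G k) p) :
    TendstoUniformly (fun a i => ∑ k ∈ s, F k a i) (fun i => ∑ k ∈ s, G k i) p := by
  classical
  induction s using Finset.induction_on with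
  | empty =>
    simp only [Finset.sum_empty]
    exact fun u hu => Eventually.of_forall fun _ _ => refl_mem_uniformity hu
  | insert k s hk ih =>
    simp only [Finset.sum_insert hk]
    exact (h k (Finset.mem_insert_self k s)).add
      (ih fun j hj => h j (Finset.mem_insert_of_mem hj))

end UniformConvergence

section Sandwich

variable {X : Type*} [MeasurableSpace X]

lemma dist_integral_le_of_sandwich {μ ν ν₀ : Measure X} [IsFiniteMeasure μ] [IsFiniteMeasure ν₀]
    (hν : ν ≤ ν₀) {g l u : X → ℝ} (hg : Measurable g) (hl : Measurable l) (hu : Measurable u)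
    {C : ℝ} (hlC : ∀ x, |l x| ≤ C) (huC : ∀ x, |u x| ≤ C) (hlg : l ≤ g) (hgu : g ≤ u) :
    dist (∫ x, g x ∂μ) (∫ x, g x ∂ν) ≤
      dist (∫ x, u x ∂μ) (∫ x, u x ∂ν) + dist (∫ x, l x ∂μ) (∫ x, l x ∂ν) +
        ∫ x, u x - l x ∂ν₀ := by
  have := isFiniteMeasure_of_le ν₀ hν
  have hgC : ∀ x, |g x| ≤ C := fun x =>
    abs_le.2 ⟨(abs_le.1 (hlC x)).1.trans (hlg x), (hgu x).trans (abs_le.1 (huC x)).2⟩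
  have integrable {f : X → ℝ} (hf : Measurable f) (hfC : ∀ x, |f x| ≤ C) (ρ : Measure X)
      [IsFiniteMeasure ρ] : Integrable f ρ :=
    .of_bound hf.aestronglyMeasurable C (.of_forall hfC)
  have hgap : ∀ {f₁ f₂ : X → ℝ}, Measurable f₁ → Measurable f₂ → (∀ x, |f₁ x| ≤ C) →
      (∀ x, |f₂ x| ≤ C) → l ≤ f₁ → f₂ ≤ u →
      ∫ x, f₂ x ∂ν - ∫ x, f₁ x ∂ν ≤ ∫ x, u x - l x ∂ν₀ := by
    intro f₁ f₂ h₁ h₂ h₁C h₂C hl₁ h₂u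
    rw [← integral_sub (integrable h₂ h₂C ν) (integrable h₁ h₁C ν)]
    calc ∫ x, f₂ x - f₁ x ∂ν ≤ ∫ x, u x - l x ∂ν :=
          integral_mono ((integrable h₂ h₂C ν).sub (integrable h₁ h₁C ν))
            ((integrable hu huC ν).sub (integrable hl hlC ν))
            fun x => sub_le_sub (h₂u x) (hl₁ x)
      _ ≤ ∫ x, u x - l x ∂ν₀ :=
          integral_mono_measure hν (.of_forall fun x => sub_nonneg.2 ((hlg x).trans (hgu x)))
            ((integrable hu huC ν₀).sub (integrable hl hlC ν₀))
  have hug := hgap hg hu hgC huC hlg le_rfl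
  have hgl := hgap hl hg hlC hgC le_rfl hgu
  have hμug : ∫ x, g x ∂μ ≤ ∫ x, u x ∂μ :=
    integral_mono (integrable hg hgC μ) (integrable hu huC μ) hgu
  have hμlg : ∫ x, l x ∂μ ≤ ∫ x, g x ∂μ :=
    integral_mono (integrable hl hlC μ) (integrable hg hgC μ) hlg
  rw [Real.dist_eq, Real.dist_eq, Real.dist_eq, abs_sub_le_iff]
  constructor
  · linarith [le_abs_self (∫ x, u x ∂μ - ∫ x, u x ∂ν), abs_nonneg (∫ x, l x ∂μ - ∫ x, l x ∂ν)]
  · linarith [neg_abs_le (∫ x, l x ∂μ - ∫ x, l x ∂ν), abs_nonneg (∫ x, u x ∂μ - ∫ x, u x ∂ν)]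

end Sandwich

section IntegralsTendstoUniformly

variable {α ι X : Type*} [MeasurableSpace X] {p : Filter α}

def IntegralsTendstoUniformly (μ : α → ι → Measure X) (ν : ι → Measure X) (p : Filter α)
    (g : X → ℝ) : Prop :=
  TendstoUniformly (fun a i => ∫ x, g x ∂μ a i) (fun i => ∫ x, g x ∂ν i) p

variable {μ : α → ι → Measure X} {ν : ι → Measure X}

lemma integralsTendstoUniformly_indicator_one_iff {A : Set X} (hA : MeasurableSet A) :
    IntegralsTendstoUniformly μ ν p (A.indicator 1) ↔
      TendstoUniformly (fun a i => (μ a i).real A) (fun i => (ν i).real A) p := by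
  simp only [IntegralsTendstoUniformly, integral_indicator_one hA]

lemma integral_const_add_sum_indicator (ρ : Measure X) [IsFiniteMeasure ρ] {κ : Type*}
    (b : ℝ) (s : Finset κ) (w : κ → ℝ) {A : κ → Set X} (hA : ∀ k, MeasurableSet (A k)) :
    ∫ x, b + ∑ k ∈ s, w k * (A k).indicator 1 x ∂ρ =
      b * ρ.real univ + ∑ k ∈ s, w k * ρ.real (A k) := by
  have hint : ∀ k ∈ s, Integrable (fun x => w k * (A k).indicator 1 x) ρ := fun k _ =>
    ((integrable_const 1).indicator (hA k)).const_mul (w k)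
  rw [integral_add (integrable_const b) (integrable_finsetSum s hint), integral_const,
    integral_finsetSum s hint, smul_eq_mul, mul_comm]
  simp only [integral_const_mul, integral_indicator_one (hA _)]

lemma integralsTendstoUniformly_const_add_sum_indicator [∀ a i, IsFiniteMeasure (μ a i)]
    [∀ i, IsFiniteMeasure (ν i)] {κ : Type*} (b : ℝ) (s : Finset κ) (w : κ → ℝ)
    {A : κ → Set X} (hA : ∀ k, MeasurableSet (A k))
    (huniv : TendstoUniformly (fun a i => (μ a i).real univ) (fun i => (ν i).real univ) p)
    (hconv : ∀ k ∈ s,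
      TendstoUniformly (fun a i => (μ a i).real (A k)) (fun i => (ν i).real (A k)) p) :
    IntegralsTendstoUniformly μ ν p (fun x => b + ∑ k ∈ s, w k * (A k).indicator 1 x) := by
  simp only [IntegralsTendstoUniformly, integral_const_add_sum_indicator _ b s w hA]
  exact (huniv.const_mul_real b).add
    (tendstoUniformly_finset_sum_real fun k hk => (hconv k hk).const_mul_real (w k))

lemma IntegralsTendstoUniformly.of_sandwich {ν₀ : Measure X} [∀ a i, IsFiniteMeasure (μ a i)]
    [IsFiniteMeasure ν₀] (hν : ∀ i, ν i ≤ ν₀) {g : X → ℝ} (hg : Measurable g)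
    (h : ∀ ε > 0, ∃ l u : X → ℝ, Measurable l ∧ Measurable u ∧ (∃ C, ∀ x, |l x| ≤ C ∧ |u x| ≤ C) ∧
      l ≤ g ∧ g ≤ u ∧ ∫ x, u x - l x ∂ν₀ < ε ∧
      IntegralsTendstoUniformly μ ν p l ∧ IntegralsTendstoUniformly μ ν p u) :
    IntegralsTendstoUniformly μ ν p g := by
  rw [IntegralsTendstoUniformly, Metric.tendstoUniformly_iff]
  intro ε hε
  obtain ⟨l, u, hl, hu, ⟨C, hC⟩, hlg, hgu, hgap, hl_lim, hu_lim⟩ := h (ε / 3) (by positivity)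
  filter_upwards [Metric.tendstoUniformly_iff.1 hu_lim _ (by positivity : 0 < ε / 3),
    Metric.tendstoUniformly_iff.1 hl_lim _ (by positivity : 0 < ε / 3)] with a hua hla i
  have := dist_integral_le_of_sandwich (μ := μ a i) (hν i) hg hl hu (fun x => (hC x).1)
    (fun x => (hC x).2) hlg hgu
  rw [dist_comm, dist_comm (∫ x, u x ∂μ a i), dist_comm (∫ x, l x ∂μ a i)] at this
  linarith [hua i, hla i]

end IntegralsTendstoUniformly

section ContinuitySets

variable {X : Type*} [PseudoMetricSpace X]

noncomputable def thickenedIndicatorReal {δ : ℝ} (hδ : 0 < δ) (E : Set X) : X →ᵇ ℝ :=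
  (thickenedIndicator hδ E).comp _ NNReal.isometry_coe.lipschitz

lemma thickenedIndicatorReal_apply {δ : ℝ} (hδ : 0 < δ) (E : Set X) (x : X) :
    thickenedIndicatorReal hδ E x = thickenedIndicator hδ E x :=
  rfl

lemma thickenedIndicatorReal_mem_Icc {δ : ℝ} (hδ : 0 < δ) (E : Set X) (x : X) :
    thickenedIndicatorReal hδ E x ∈ Icc 0 1 :=
  ⟨NNReal.coe_nonneg _, by exact_mod_cast thickenedIndicator_le_one hδ E x⟩

lemma thickenedIndicatorReal_of_mem {δ : ℝ} (hδ : 0 < δ) {E : Set X} {x : X} (hx : x ∈ E) :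
    thickenedIndicatorReal hδ E x = 1 := by
  rw [thickenedIndicatorReal_apply, thickenedIndicator_one hδ E hx, NNReal.coe_one]

lemma tendsto_thickenedIndicatorReal {δ : ℕ → ℝ} (hδ : ∀ k, 0 < δ k)
    (hδ_lim : Tendsto δ atTop (𝓝 0)) (E : Set X) (x : X) :
    Tendsto (fun k => thickenedIndicatorReal (hδ k) E x) atTop
      (𝓝 ((closure E).indicator 1 x)) := by
  have h := (NNReal.continuous_coe.tendsto _).comp
    (tendsto_pi_nhds.1 (thickenedIndicator_tendsto_indicator_closure hδ hδ_lim E) x)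
  rw [NNReal.coe_indicator] at h
  exact h

lemma indicator_closure_sub_one_sub_indicator_closure_compl (A : Set X) :
    (closure A).indicator (1 : X → ℝ) - (1 - (closure Aᶜ).indicator 1) =
      (frontier A).indicator 1 := by
  rw [closure_compl, indicator_compl, frontier, indicator_sdiff interior_subset_closure]
  abel

variable [MeasurableSpace X] [OpensMeasurableSpace X]

lemma exists_bcf_sandwich_indicator (ν : Measure X) [IsFiniteMeasure ν] {A : Set X}
    (hA : ν (frontier A) = 0) {ε : ℝ} (hε : 0 < ε) :
    ∃ l u : X →ᵇ ℝ, ⇑l ≤ A.indicator 1 ∧ A.indicator 1 ≤ ⇑u ∧ ∫ x, u x - l x ∂ν < ε := by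
  have hδ : ∀ k : ℕ, 0 < 1 / ((k : ℝ) + 1) := fun k => by positivity
  set T := fun (k : ℕ) (E : Set X) => thickenedIndicatorReal (hδ k) E
  have hlim : Tendsto (fun k => ∫ x, T k A x - (1 - T k Aᶜ x) ∂ν) atTop
      (𝓝 (∫ x, (frontier A).indicator 1 x ∂ν)) := by
    refine tendsto_integral_of_dominated_convergence (fun _ => 1) (fun k =>
        ((T k A).continuous.sub (continuous_const.sub (T k Aᶜ).continuous)).aestronglyMeasurable)
      (integrable_const 1) (fun k => .of_forall fun x => ?_) (.of_forall fun x => ?_)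
    · obtain ⟨h₀, h₁⟩ := thickenedIndicatorReal_mem_Icc (hδ k) A x
      obtain ⟨h₂, h₃⟩ := thickenedIndicatorReal_mem_Icc (hδ k) Aᶜ x
      rw [Real.norm_eq_abs, abs_le]
      constructor <;> linarith
    · have h := (tendsto_thickenedIndicatorReal hδ tendsto_one_div_add_atTop_nhds_zero_nat A x).sub
        ((tendsto_const_nhds (x := (1 : ℝ))).sub
          (tendsto_thickenedIndicatorReal hδ tendsto_one_div_add_atTop_nhds_zero_nat Aᶜ x))
      simpa using congrFun (indicator_closure_sub_one_sub_indicator_closure_compl A) x ▸ h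
  rw [integral_indicator_one isClosed_frontier.measurableSet, measureReal_def, hA,
    ENNReal.toReal_zero] at hlim
  obtain ⟨k, hk⟩ := (hlim.eventually (gt_mem_nhds hε)).exists
  refine ⟨1 - T k Aᶜ, T k A, fun x => ?_, fun x => ?_, by simpa using hk⟩
  · rw [coe_sub, coe_one, Pi.sub_apply, Pi.one_apply]
    by_cases hx : x ∈ A
    · rw [indicator_of_mem hx, Pi.one_apply]
      linarith [(thickenedIndicatorReal_mem_Icc (hδ k) Aᶜ x).1]
    · rw [indicator_of_notMem hx, thickenedIndicatorReal_of_mem (hδ k) (mem_compl hx), sub_self]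
  · by_cases hx : x ∈ A
    · rw [indicator_of_mem hx, Pi.one_apply, thickenedIndicatorReal_of_mem (hδ k) hx]
    · rw [indicator_of_notMem hx]
      exact (thickenedIndicatorReal_mem_Icc (hδ k) A x).1

end ContinuitySets

section LevelSteps

/-- For monotone `c` and `c 0 < y`, the largest `c k < y` with `k ≤ m`, written as a combination
of indicators of the sets `{y | c i < y}` so that its integrals are combinations of measures of
level sets. -/
noncomputable def levelStep (c : ℕ → ℝ) (m : ℕ) (y : ℝ) : ℝ :=
  c 0 + ∑ i ∈ Finset.range m, (c (i + 1) - c i) * (Ioi (c (i + 1))).indicator 1 y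

lemma exists_levelStep_eq {c : ℕ → ℝ} (hc : Monotone c) {y : ℝ} (hy : c 0 < y) (m : ℕ) :
    ∃ k ≤ m, levelStep c m y = c k ∧ c k < y ∧ (k = m ∨ y ≤ c (k + 1)) := by
  induction m with
  | zero => exact ⟨0, le_rfl, by simp [levelStep], hy, .inl rfl⟩
  | succ m ih =>
    obtain ⟨k, hkm, hk, hky, hk'⟩ := ih
    have hstep : levelStep c (m + 1) y =
        levelStep c m y + (c (m + 1) - c m) * (Ioi (c (m + 1))).indicator 1 y := by
      rw [levelStep, levelStep, Finset.sum_range_succ, add_assoc]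
    by_cases hym : c (m + 1) < y
    · have hkm' : k = m := by
        rcases hk' with rfl | hk'
        · rfl
        · exact absurd (hk'.trans (hc (by omega))) (not_le.2 hym)
      subst hkm'
      refine ⟨k + 1, le_rfl, ?_, hym, .inl rfl⟩
      rw [hstep, hk, indicator_of_mem (mem_Ioi.2 hym), Pi.one_apply]
      ring
    · refine ⟨k, hkm.trans (Nat.le_succ m), ?_, hky, .inr ?_⟩
      · rw [hstep, hk, indicator_of_notMem (fun h => hym (mem_Ioi.1 h)), mul_zero, add_zero]
      · rcases hk' with rfl | hk'
        · exact not_lt.1 hym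
        · exact hk'

lemma levelStep_mem_Ico {c : ℕ → ℝ} (hc : Monotone c) {δ : ℝ} (hδ : ∀ i, c (i + 1) - c i ≤ δ)
    {m : ℕ} {y : ℝ} (h₀ : c 0 < y) (hm : y ≤ c m) : levelStep c m y ∈ Ico (y - δ) y := by
  obtain ⟨k, -, hk, hky, hk'⟩ := exists_levelStep_eq hc h₀ m
  have hyk : y ≤ c (k + 1) := by
    rcases hk' with rfl | hk'
    · exact absurd hm (not_le.2 hky)
    · exact hk'
  rw [hk]
  exact ⟨by linarith [hδ k], hky⟩

lemma exists_levels_notMem {N : Set ℝ} (hN : N.Countable) (a b : ℝ) {δ : ℝ} (hδ : 0 < δ) :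
    ∃ (c : ℕ → ℝ) (m : ℕ), Monotone c ∧ (∀ i, c i ∉ N) ∧ c 0 < a ∧ b ≤ c m ∧
      ∀ i, c (i + 1) - c i ≤ δ := by
  have hchoice : ∀ i : ℕ, ∃ t ∉ N, t ∈ Ioo (a + ((i : ℝ) - 1) * (δ / 2)) (a + i * (δ / 2)) :=
    fun i => (hN.dense_compl ℝ).exists_mem_open isOpen_Ioo (nonempty_Ioo.2 (by linarith))
  choose c hcN hc using hchoice
  obtain ⟨m, hm⟩ := exists_nat_ge ((b - a) / (δ / 2) + 1)
  have hbm : b - a ≤ ((m : ℝ) - 1) * (δ / 2) :=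
    (div_le_iff₀ (by positivity)).1 (by linarith)
  refine ⟨c, m, (strictMono_nat_of_lt_succ fun i => ?_).monotone, hcN, ?_, ?_, fun i => ?_⟩
  · have h₂ := (hc (i + 1)).1
    push_cast at h₂
    linarith [(hc i).2]
  · simpa using (hc 0).2
  · linarith [(hc m).1]
  · have h₂ := (hc (i + 1)).2
    push_cast at h₂
    linarith [(hc i).1]

end LevelSteps

section Portmanteau

variable {α ι X : Type*} [MeasurableSpace X] {p : Filter α} {μ : α → ι → Measure X}
  {ν : ι → Measure X}

lemma measurable_levelStep (c : ℕ → ℝ) (m : ℕ) : Measurable (levelStep c m) :=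
  measurable_const.add <| Finset.measurable_sum _ fun _ _ =>
    (measurable_one.indicator measurableSet_Ioi).const_mul _

lemma integralsTendstoUniformly_levelStep_comp_add [∀ a i, IsFiniteMeasure (μ a i)]
    [∀ i, IsFiniteMeasure (ν i)] {g : X → ℝ} (hg : Measurable g) (c : ℕ → ℝ) (m : ℕ) (b : ℝ)
    (huniv : TendstoUniformly (fun a i => (μ a i).real univ) (fun i => (ν i).real univ) p)
    (hlevel : ∀ k, TendstoUniformly (fun a i => (μ a i).real {x | c k < g x})
      (fun i => (ν i).real {x | c k < g x}) p) :
    IntegralsTendstoUniformly μ ν p (fun x => levelStep c m (g x) + b) := by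
  have hsum : (fun x => levelStep c m (g x) + b) = fun x => (c 0 + b) +
      ∑ i ∈ Finset.range m, (c (i + 1) - c i) * {x | c (i + 1) < g x}.indicator 1 x := by
    ext x
    rw [levelStep, add_right_comm]
    rfl
  rw [hsum]
  exact integralsTendstoUniformly_const_add_sum_indicator _ _ _
    (fun i => measurableSet_lt measurable_const hg) huniv fun i _ => hlevel (i + 1)

lemma exists_levelStep_comp_mem_Ico {g : X → ℝ} (hg : Measurable g) {M : ℝ}
    (hM : ∀ x, |g x| ≤ M) (ν₀ : Measure X) [SFinite ν₀] {δ : ℝ} (hδ : 0 < δ) :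
    ∃ (c : ℕ → ℝ) (m : ℕ), (∀ k, ν₀ {x | g x = c k} = 0) ∧
      ∀ x, levelStep c m (g x) ∈ Ico (g x - δ) (g x) := by
  obtain ⟨c, m, hc, hcN, hc₀, hcm, hgap⟩ :=
    exists_levels_notMem (Measure.countable_meas_level_set_pos hg (μ := ν₀)) (-M) M hδ
  refine ⟨c, m, fun k => nonpos_iff_eq_zero.1 (not_lt.1 (hcN k)), fun x => ?_⟩
  obtain ⟨hx₁, hx₂⟩ := abs_le.1 (hM x)
  exact levelStep_mem_Ico hc hgap (by linarith) (by linarith)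

variable [PseudoMetricSpace X] [OpensMeasurableSpace X]

lemma tendstoUniformly_measureReal_of_integrals {ν₀ : Measure X}
    [∀ a i, IsFiniteMeasure (μ a i)] [IsFiniteMeasure ν₀] (hν : ∀ i, ν i ≤ ν₀)
    (H : ∀ f : X →ᵇ ℝ, IntegralsTendstoUniformly μ ν p f) {A : Set X} (hA : MeasurableSet A)
    (hA₀ : ν₀ (frontier A) = 0) :
    TendstoUniformly (fun a i => (μ a i).real A) (fun i => (ν i).real A) p := by
  rw [← integralsTendstoUniformly_indicator_one_iff hA]
  refine .of_sandwich hν (measurable_one.indicator hA) fun ε hε => ?_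
  obtain ⟨l, u, hlA, hAu, hlu⟩ := exists_bcf_sandwich_indicator ν₀ hA₀ hε
  refine ⟨l, u, l.continuous.measurable, u.continuous.measurable, ⟨max ‖l‖ ‖u‖, fun x =>
    ⟨(l.norm_coe_le_norm x).trans (le_max_left _ _),
      (u.norm_coe_le_norm x).trans (le_max_right _ _)⟩⟩, hlA, hAu, hlu, H l, H u⟩

lemma integralsTendstoUniformly_of_measureReal {ν₀ : Measure X}
    [∀ a i, IsFiniteMeasure (μ a i)] [IsFiniteMeasure ν₀] (hν : ∀ i, ν i ≤ ν₀)
    (H : ∀ A, MeasurableSet A → ν₀ (frontier A) = 0 →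
      TendstoUniformly (fun a i => (μ a i).real A) (fun i => (ν i).real A) p)
    (f : X →ᵇ ℝ) : IntegralsTendstoUniformly μ ν p f := by
  have := fun i => isFiniteMeasure_of_le ν₀ (hν i)
  have hf := f.continuous.measurable
  have huniv := H univ MeasurableSet.univ (by simp)
  have hlevel (t : ℝ) (ht : ν₀ {x | f x = t} = 0) :
      TendstoUniformly (fun a i => (μ a i).real {x | t < f x})
        (fun i => (ν i).real {x | t < f x}) p :=
    H _ (measurableSet_lt measurable_const hf) <| measure_mono_null
      (fun x hx => (frontier_lt_subset_eq continuous_const f.continuous hx).symm) ht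
  refine .of_sandwich hν hf fun ε hε => ?_
  set δ := ε / (ν₀.real univ + 1)
  have hδ : 0 < δ := by positivity
  obtain ⟨c, m, hc, hcf⟩ := exists_levelStep_comp_mem_Ico hf f.norm_coe_le_norm ν₀ hδ
  have hL := (measurable_levelStep c m).comp hf
  have hlim (b : ℝ) : IntegralsTendstoUniformly μ ν p (fun x => levelStep c m (f x) + b) :=
    integralsTendstoUniformly_levelStep_comp_add hf c m b huniv fun k => hlevel _ (hc k)
  refine ⟨fun x => levelStep c m (f x), fun x => levelStep c m (f x) + δ, hL, hL.add_const δ,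
    ⟨‖f‖ + 2 * δ, fun x => ?_⟩, fun x => (hcf x).2.le, fun x => by linarith [(hcf x).1], ?_,
    by simpa using hlim 0, hlim δ⟩
  · obtain ⟨hx₁, hx₂⟩ := abs_le.1 (f.norm_coe_le_norm x)
    obtain ⟨hL₁, hL₂⟩ := hcf x
    exact ⟨abs_le.2 ⟨by linarith, by linarith⟩, abs_le.2 ⟨by linarith, by linarith⟩⟩
  · simp only [add_sub_cancel_left, integral_const, smul_eq_mul]
    have h₀ : 0 ≤ ν₀.real univ := measureReal_nonneg
    calc ν₀.real univ * δ < (ν₀.real univ + 1) * δ := by nlinarith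
      _ = ε := mul_div_cancel₀ ε (by positivity)

theorem forall_integralsTendstoUniformly_iff {ν₀ : Measure X} [∀ a i, IsFiniteMeasure (μ a i)]
    [IsFiniteMeasure ν₀] (hν : ∀ i, ν i ≤ ν₀) :
    (∀ f : X →ᵇ ℝ, IntegralsTendstoUniformly μ ν p f) ↔
      ∀ A, MeasurableSet A → ν₀ (frontier A) = 0 →
        TendstoUniformly (fun a i => (μ a i).real A) (fun i => (ν i).real A) p :=
  ⟨fun H _ hA hA₀ => tendstoUniformly_measureReal_of_integrals hν H hA hA₀,
    integralsTendstoUniformly_of_measureReal hν⟩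

end Portmanteau

section Marginals

variable {X Y : Type*} [MeasurableSpace X] [MeasurableSpace Y]

lemma integral_fst_restrict (ρ : Measure (X × Y)) (S : Set (X × Y)) {f : X → ℝ}
    (hf : Measurable f) : ∫ x, f x ∂(ρ.restrict S).fst = ∫ z in S, f z.1 ∂ρ :=
  integral_map measurable_fst.aemeasurable hf.aestronglyMeasurable

lemma fst_restrict_univ_prod_apply (ρ : Measure (X × Y)) {A : Set X} (hA : MeasurableSet A)
    (B : Set Y) : (ρ.restrict (univ ×ˢ B)).fst A = ρ (A ×ˢ B) := by
  rw [Measure.fst_apply hA, Measure.restrict_apply (measurable_fst hA), ← prod_univ,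
    prod_inter_prod, inter_univ, univ_inter]

lemma abs_setIntegral_comp_fst_le [TopologicalSpace X] (ρ : Measure (X × Y))
    [IsProbabilityMeasure ρ] (f : X →ᵇ ℝ) (S : Set (X × Y)) : |∫ z in S, f z.1 ∂ρ| ≤ ‖f‖ :=
  calc |∫ z in S, f z.1 ∂ρ| ≤ ‖f‖ * ρ.real S :=
        norm_setIntegral_le_of_norm_le_const (measure_lt_top ρ S) fun z _ => f.norm_coe_le_norm z.1
    _ ≤ ‖f‖ := mul_le_of_le_one_right (norm_nonneg f) measureReal_le_one

end Marginals

theorem semiUniformFeller_iff_continuity_sets_general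
    {S1 S2 S3 : Type*}
    [MetricSpace S1] [MeasurableSpace S1] [BorelSpace S1]
    [MeasurableSpace S2]
    [MetricSpace S3] [MeasurableSpace S3]
    (Ψ : Kernel S3 (S1 × S2)) [IsMarkovKernel Ψ] :
    SemiUniformFeller Ψ ↔
      ∀ (s : ℕ → S3) (t : S3), Tendsto s atTop (𝓝 t) → ∀ (A : Set S1), MeasurableSet A →
        (Ψ t) (frontier A ×ˢ (Set.univ : Set S2)) = 0 →
        Tendsto (fun n => ⨆ B : {B : Set S2 // MeasurableSet B},
          |((Ψ (s n)) (A ×ˢ B.1)).toReal - ((Ψ t) (A ×ˢ B.1)).toReal|) atTop (𝓝 0) := by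
  refine forall_congr' fun s => forall_congr' fun t => forall_congr' fun _ => ?_
  have hν (B : {B : Set S2 // MeasurableSet B}) : ((Ψ t).restrict (univ ×ˢ B.1)).fst ≤ (Ψ t).fst :=
    Measure.fst_mono Measure.restrict_le_self
  have hmeas (x : S3) (A : Set S1) (B : Set S2) : |(Ψ x (A ×ˢ B)).toReal| ≤ 1 :=
    (abs_of_nonneg ENNReal.toReal_nonneg).trans_le measureReal_le_one
  calc _ ↔ ∀ f : S1 →ᵇ ℝ, IntegralsTendstoUniformly
          (fun n (B : {B : Set S2 // MeasurableSet B}) => ((Ψ (s n)).restrict (univ ×ˢ B.1)).fst)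
          (fun B => ((Ψ t).restrict (univ ×ˢ B.1)).fst) atTop f := by
        refine forall_congr' fun f => ?_
        rw [tendsto_iSup_abs_sub_iff_tendstoUniformly (fun n B => abs_setIntegral_comp_fst_le _ f _)
          (fun B => abs_setIntegral_comp_fst_le _ f _)]
        simp only [IntegralsTendstoUniformly, integral_fst_restrict _ _ f.continuous.measurable]
    _ ↔ _ := forall_integralsTendstoUniformly_iff hν
    _ ↔ _ := by
        refine forall_congr' fun A => forall_congr' fun hA => ?_
        rw [Measure.fst_apply isClosed_frontier.measurableSet, ← prod_univ,
          tendsto_iSup_abs_sub_iff_tendstoUniformly (fun n B => hmeas _ _ _) (fun B => hmeas _ _ _)]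
        simp only [measureReal_def, fst_restrict_univ_prod_apply _ hA]

/-- A stochastic kernel `Ψ` on `S1 × S2` given `S3` is semi-uniform Feller if and only if for
every sequence `s3⁽ⁿ⁾ → s3` in `S3` and every Borel `A ⊆ S1` with `Ψ(∂A × S2 | s3) = 0`,
`lim_{n → ∞} sup_{B ∈ B(S2)} |Ψ(A × B | s3⁽ⁿ⁾) − Ψ(A × B | s3)| = 0`. -/
theorem semiUniformFeller_iff_continuity_sets
    {S1 S2 S3 : Type*}
    [MetricSpace S1] [TopologicalSpace.SeparableSpace S1] [MeasurableSpace S1] [BorelSpace S1]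
    [StandardBorelSpace S1] [Nonempty S1]
    [MetricSpace S2] [TopologicalSpace.SeparableSpace S2] [MeasurableSpace S2] [BorelSpace S2]
    [StandardBorelSpace S2] [Nonempty S2]
    [MetricSpace S3] [TopologicalSpace.SeparableSpace S3] [MeasurableSpace S3] [BorelSpace S3]
    [StandardBorelSpace S3] [Nonempty S3]
    (Ψ : Kernel S3 (S1 × S2)) [IsMarkovKernel Ψ] :
    SemiUniformFeller Ψ ↔
      ∀ (s : ℕ → S3) (t : S3), Tendsto s atTop (𝓝 t) → ∀ (A : Set S1), MeasurableSet A →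
        (Ψ t) (frontier A ×ˢ (Set.univ : Set S2)) = 0 →
        Tendsto (fun n => ⨆ B : {B : Set S2 // MeasurableSet B},
          |((Ψ (s n)) (A ×ˢ B.1)).toReal - ((Ψ t) (A ×ˢ B.1)).toReal|) atTop (𝓝 0) :=
  semiUniformFeller_iff_continuity_sets_general Ψ
end

section
/- If a stochastic kernel Ψ on S1×S2 given S3 is semi-uniform Feller, then Ψ is weakly continuous: for every sequence s3^(n) converging to s3 in S3 and every bounded continuous function g: S1×S2 → ℝ, ∫_{S1×S2} g dΨ(·|s3^(n)) → ∫_{S1×S2} g dΨ(·|s3) as n → ∞. -/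
/-!
For each Borel `B`, semi-uniform Fellerness makes the finite measures `Ψ(· × B | s n)` on `S1`
converge weakly to `Ψ(· × B | t)`, so by the portmanteau theorem `Ψ(A × B | s n) → Ψ(A × B | t)`
whenever the first marginal of `Ψ(· | t)` does not charge the frontier of `A`. These rectangles
form a π-system containing arbitrarily small neighbourhoods of every point, and convergence on
such a π-system already implies weak convergence of `Ψ(· | s n)` to `Ψ(· | t)`.
-/

open MeasureTheory ProbabilityTheory Filter Topology

open Set
open scoped BoundedContinuousFunction

namespace MeasureTheory.FiniteMeasure

theorem tendsto_measure_of_null_frontier_of_tendsto {Ω ι : Type*} {L : Filter ι}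
    [MeasurableSpace Ω] [TopologicalSpace Ω] [OpensMeasurableSpace Ω] [HasOuterApproxClosed Ω]
    {μ : FiniteMeasure Ω} {μs : ι → FiniteMeasure Ω} (hμs : Tendsto μs L (𝓝 μ))
    {E : Set Ω} (hE : μ (frontier E) = 0) : Tendsto (fun i ↦ μs i E) L (𝓝 (μ E)) := by
  rcases eq_or_ne μ 0 with rfl | hμ
  · have hmass : Tendsto (fun i ↦ (μs i).mass) L (𝓝 0) := by simpa using hμs.mass
    simpa using tendsto_of_tendsto_of_tendsto_of_le_of_le tendsto_const_nhds hmass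
      (fun _ ↦ zero_le) (fun _ ↦ apply_le_mass _ _)
  have : Nonempty Ω :=
    not_isEmpty_iff.mp fun _ ↦ hμ (Subtype.ext (Measure.eq_zero_of_isEmpty _))
  have hnorm : μ.normalize (frontier E) = 0 := by simp [normalize_eq_of_nonzero μ hμ, hE]
  simp_rw [self_eq_mass_mul_normalize _ E]
  exact hμs.mass.mul (ProbabilityMeasure.tendsto_measure_of_null_frontier_of_tendsto
    (tendsto_normalize_of_tendsto hμs hμ) hnorm)

end MeasureTheory.FiniteMeasure

theorem tendsto_of_tendsto_iSup_abs_sub {ι : Type*} {a : ℕ → ι → ℝ} {b : ι → ℝ}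
    (hbdd : ∀ n, BddAbove (range fun i ↦ |a n i - b i|))
    (h : Tendsto (fun n ↦ ⨆ i, |a n i - b i|) atTop (𝓝 0)) (i : ι) :
    Tendsto (fun n ↦ a n i) atTop (𝓝 (b i)) := by
  rw [tendsto_iff_norm_sub_tendsto_zero]
  exact squeeze_zero (fun _ ↦ norm_nonneg _) (fun n ↦ le_ciSup (hbdd n) i) h

namespace MeasureTheory.Measure

theorem integral_fst_restrict_univ_prod {X Y : Type*} [TopologicalSpace X] [MeasurableSpace X]
    [OpensMeasurableSpace X] [MeasurableSpace Y] (μ : Measure (X × Y)) (B : Set Y)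
    (f : X →ᵇ ℝ) : ∫ x, f x ∂(μ.restrict (univ ×ˢ B)).fst = ∫ x in univ ×ˢ B, f x.1 ∂μ :=
  integral_map measurable_fst.aemeasurable f.continuous.aestronglyMeasurable

theorem fst_restrict_univ_prod_apply {X Y : Type*} [MeasurableSpace X] [MeasurableSpace Y]
    (μ : Measure (X × Y)) (B : Set Y) {A : Set X} (hA : MeasurableSet A) :
    (μ.restrict (univ ×ˢ B)).fst A = μ (A ×ˢ B) := by
  rw [Measure.fst_apply hA, Measure.restrict_apply (measurable_fst hA), ← prod_univ,
    prod_inter_prod, inter_univ, univ_inter]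

end MeasureTheory.Measure

namespace SemiUniformFeller

variable {X Y T : Type*} [TopologicalSpace X] [MeasurableSpace X] [MeasurableSpace Y]
  [TopologicalSpace T] [MeasurableSpace T] {Ψ : Kernel T (X × Y)} {s : ℕ → T} {t : T}

theorem tendsto_setIntegral [IsFiniteKernel Ψ] (hΨ : SemiUniformFeller Ψ)
    (hst : Tendsto s atTop (𝓝 t)) (f : X →ᵇ ℝ) {B : Set Y} (hB : MeasurableSet B) :
    Tendsto (fun n ↦ ∫ x in univ ×ˢ B, f x.1 ∂Ψ (s n)) atTop
      (𝓝 (∫ x in univ ×ˢ B, f x.1 ∂Ψ t)) := by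
  have hbound (μ : Measure (X × Y)) [IsFiniteMeasure μ] (A : Set (X × Y)) :
      ‖∫ x in A, f x.1 ∂μ‖ ≤ ‖f‖ * μ.real univ :=
    (norm_setIntegral_le_of_norm_le_const (measure_lt_top μ A)
      fun x _ ↦ f.norm_coe_le_norm x.1).trans
      (by gcongr; exacts [measure_ne_top μ univ, subset_univ A])
  refine tendsto_of_tendsto_iSup_abs_sub
    (fun n ↦ ⟨‖f‖ * (Ψ (s n)).real univ + ‖f‖ * (Ψ t).real univ, ?_⟩) (hΨ s t hst f) ⟨B, hB⟩
  rintro _ ⟨B', rfl⟩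
  exact (abs_sub _ _).trans (add_le_add (hbound _ _) (hbound _ _))

theorem tendsto_fst_restrict [IsFiniteKernel Ψ] [OpensMeasurableSpace X]
    (hΨ : SemiUniformFeller Ψ) (hst : Tendsto s atTop (𝓝 t)) {B : Set Y} (hB : MeasurableSet B) :
    Tendsto (β := FiniteMeasure X)
      (fun n ↦ ⟨((Ψ (s n)).restrict (univ ×ˢ B)).fst, inferInstance⟩) atTop
      (𝓝 ⟨((Ψ t).restrict (univ ×ˢ B)).fst, inferInstance⟩) := by
  refine FiniteMeasure.tendsto_iff_forall_integral_tendsto.mpr fun f ↦ ?_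
  simp only [FiniteMeasure.toMeasure_mk, Measure.integral_fst_restrict_univ_prod]
  exact hΨ.tendsto_setIntegral hst f hB

theorem tendsto_measure_prod [IsFiniteKernel Ψ] [OpensMeasurableSpace X] [HasOuterApproxClosed X]
    (hΨ : SemiUniformFeller Ψ) (hst : Tendsto s atTop (𝓝 t)) {A : Set X} (hA : MeasurableSet A)
    (hAfr : (Ψ t).fst (frontier A) = 0) {B : Set Y} (hB : MeasurableSet B) :
    Tendsto (fun n ↦ (Ψ (s n) (A ×ˢ B)).toNNReal) atTop (𝓝 (Ψ t (A ×ˢ B)).toNNReal) := by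
  have hfr : ((Ψ t).restrict (univ ×ˢ B)).fst (frontier A) = 0 := by
    rw [Measure.fst_restrict_univ_prod_apply _ _ isClosed_frontier.measurableSet]
    refine measure_mono_null (prod_mono subset_rfl (subset_univ B)) ?_
    rwa [prod_univ, ← Measure.fst_apply isClosed_frontier.measurableSet]
  have := FiniteMeasure.tendsto_measure_of_null_frontier_of_tendsto
    (hΨ.tendsto_fst_restrict hst hB) (E := A) (by simp [hfr])
  simpa [Measure.fst_restrict_univ_prod_apply _ _ hA] using this

theorem tendsto_probabilityMeasure {X Y T : Type*} [PseudoMetricSpace X]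
    [SecondCountableTopology X] [MeasurableSpace X] [OpensMeasurableSpace X]
    [TopologicalSpace Y] [SecondCountableTopology Y] [MeasurableSpace Y] [OpensMeasurableSpace Y]
    [TopologicalSpace T] [MeasurableSpace T]
    {Ψ : Kernel T (X × Y)} [IsMarkovKernel Ψ] (hΨ : SemiUniformFeller Ψ) {s : ℕ → T} {t : T}
    (hst : Tendsto s atTop (𝓝 t)) :
    Tendsto (β := ProbabilityMeasure (X × Y)) (fun n ↦ ⟨Ψ (s n), inferInstance⟩) atTop
      (𝓝 ⟨Ψ t, inferInstance⟩) := by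
  let S : Set (Set (X × Y)) := {E | ∃ A B, MeasurableSet A ∧ (Ψ t).fst (frontier A) = 0 ∧
    MeasurableSet B ∧ E = A ×ˢ B}
  have hS : IsPiSystem S := by
    rintro - ⟨A, B, hA, hAfr, hB, rfl⟩ - ⟨A', B', hA', hA'fr, hB', rfl⟩ -
    exact ⟨A ∩ A', B ∩ B', hA.inter hA', null_frontier_inter hAfr hA'fr, hB.inter hB',
      prod_inter_prod⟩
  refine hS.tendsto_probabilityMeasure_of_tendsto_of_mem ?_ ?_ ?_
  · rintro - ⟨A, B, hA, -, hB, rfl⟩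
    exact hA.prod hB
  · intro G hG x hx
    obtain ⟨U, V, hU, hV, hxU, hxV, hUV⟩ := isOpen_prod_iff.mp hG x.1 x.2 hx
    obtain ⟨ε, hε, hball⟩ := Metric.isOpen_iff.mp hU x.1 hxU
    obtain ⟨r, hr, hrfr⟩ := exists_null_frontier_thickening (Ψ t).fst {x.1} hε
    rw [Metric.thickening_singleton] at hrfr
    refine ⟨Metric.ball x.1 r ×ˢ V, ⟨_, V, measurableSet_ball, hrfr, hV.measurableSet, rfl⟩,
      prod_mem_nhds (Metric.ball_mem_nhds _ hr.1) (hV.mem_nhds hxV), ?_⟩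
    exact (prod_mono ((Metric.ball_subset_ball hr.2.le).trans hball) subset_rfl).trans hUV
  · rintro - ⟨A, B, hA, hAfr, hB, rfl⟩
    exact hΨ.tendsto_measure_prod hst hA hAfr hB

end SemiUniformFeller

theorem semiUniformFeller_weakly_continuous_general
    {S1 S2 S3 : Type*}
    [MetricSpace S1] [TopologicalSpace.SeparableSpace S1] [MeasurableSpace S1] [BorelSpace S1]
    [MetricSpace S2] [TopologicalSpace.SeparableSpace S2] [MeasurableSpace S2] [BorelSpace S2]
    [MetricSpace S3] [MeasurableSpace S3]
    (Ψ : Kernel S3 (S1 × S2)) [IsMarkovKernel Ψ] (hΨ : SemiUniformFeller Ψ) :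
    ∀ (s : ℕ → S3) (t : S3), Tendsto s atTop (𝓝 t) →
      ∀ g : BoundedContinuousFunction (S1 × S2) ℝ,
        Tendsto (fun n => ∫ x, g x ∂(Ψ (s n))) atTop (𝓝 (∫ x, g x ∂(Ψ t))) := by
  intro s t hst g
  have := UniformSpace.secondCountable_of_separable S1
  have := UniformSpace.secondCountable_of_separable S2
  exact ProbabilityMeasure.tendsto_iff_forall_integral_tendsto.mp
    (hΨ.tendsto_probabilityMeasure hst) g

/-- If a stochastic kernel `Ψ` on `S1 × S2` given `S3` is semi-uniform Feller, then `Ψ` is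
weakly continuous: integrals of every bounded continuous `g : S1 × S2 → ℝ` converge along every
convergent sequence of the parameter. -/
theorem semiUniformFeller_weakly_continuous
    {S1 S2 S3 : Type*}
    [MetricSpace S1] [TopologicalSpace.SeparableSpace S1] [MeasurableSpace S1] [BorelSpace S1]
    [StandardBorelSpace S1] [Nonempty S1]
    [MetricSpace S2] [TopologicalSpace.SeparableSpace S2] [MeasurableSpace S2] [BorelSpace S2]
    [StandardBorelSpace S2] [Nonempty S2]
    [MetricSpace S3] [TopologicalSpace.SeparableSpace S3] [MeasurableSpace S3] [BorelSpace S3]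
    [StandardBorelSpace S3] [Nonempty S3]
    (Ψ : Kernel S3 (S1 × S2)) [IsMarkovKernel Ψ] (hΨ : SemiUniformFeller Ψ) :
    ∀ (s : ℕ → S3) (t : S3), Tendsto s atTop (𝓝 t) →
      ∀ g : BoundedContinuousFunction (S1 × S2) ℝ,
        Tendsto (fun n => ∫ x, g x ∂(Ψ (s n))) atTop (𝓝 (∫ x, g x ∂(Ψ t))) :=
  semiUniformFeller_weakly_continuous_general Ψ hΨ
end

section
/- A stochastic kernel Ψ on S1×S2 given S3 is semi-uniform Feller if and only if the following holds: for each s3 ∈ S3 the topology of S1 has a countable base τ_b^{s3} such that (i) S1 ∈ τ_b^{s3}, and (ii) for each finite intersection O = O_1 ∩ ⋯ ∩ O_k of sets O_1, …, O_k ∈ τ_b^{s3}, the family of functions { s ↦ Ψ(O×B|s) : B ∈ B(S2) } is equicontinuous at s3, i.e., lim_{s→s3} sup_{B ∈ B(S2)} | Ψ(O×B|s) − Ψ(O×B|s3) | = 0. -/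
open MeasureTheory ProbabilityTheory Filter Topology

/-!
Fix `t` and let `μ` be the `X`-marginal of `Ψ t`. The functions `f` for which
`∫_{X × B} f dΨ(s) → ∫_{X × B} f dΨ(t)` uniformly in measurable `B ⊆ Y` form a vector space,
closed under squeezing: if `F ≤ g ≤ G` with `F`, `G` in it and `∫ (G - F) dμ` small, then `g` is
in it. Both sides of the theorem say that this space contains the indicators of all open sets `U`
with `μ (frontier U) = 0`. Such an indicator lies between `1 - φ` and `ψ` for thickened indicators
`φ` of `Uᶜ` and `ψ` of `closure U`; conversely a bounded continuous `f` lies between a staircase of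
indicators of the open sets `{c < f}` and its shift, where the levels `c` avoid the countably many
atoms of the law of `f` under `μ`. For the countable base, indicators of finite unions of basic
sets are alternating sums of indicators of finite intersections, such unions approximate `U` and
`(closure U)ᶜ` from inside in `μ`-measure, and a separable metric space has a countable basis of
balls with `μ`-null frontiers.
-/

open Set Metric TopologicalSpace
open scoped BoundedContinuousFunction

lemma tendstoUniformly_iff_tendsto_iSup_abs_sub {ι α : Type*} [Nonempty α] {l : Filter ι}
    {F : ι → α → ℝ} {f : α → ℝ} (hF : ∀ i, BddAbove (range fun a => |F i a - f a|)) :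
    TendstoUniformly F f l ↔ Tendsto (fun i => ⨆ a, |F i a - f a|) l (𝓝 0) := by
  have hsup : ∀ i, |(⨆ a, |F i a - f a|)| = ⨆ a, |F i a - f a| := fun i =>
    abs_of_nonneg (Real.iSup_nonneg fun _ => abs_nonneg _)
  simp only [Metric.tendstoUniformly_iff, Metric.tendsto_nhds, Real.dist_eq, sub_zero, hsup]
  refine ⟨fun h ε hε => (h (ε / 2) (half_pos hε)).mono fun i hi => ?_,
    fun h ε hε => (h ε hε).mono fun i hi a => ?_⟩
  · exact (ciSup_le fun a => (abs_sub_comm _ _).trans_le (hi a).le).trans_lt (half_lt_self hε)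
  · exact (abs_sub_comm _ _).trans_lt ((le_ciSup (hF i) a).trans_lt hi)

lemma IsPiSystem.indicator_biUnion_mem {α : Type*} {P : Set (Set α)} (hP : IsPiSystem P)
    {S : AddSubgroup (α → ℝ)} (hS : ∀ s ∈ P, s.indicator (1 : α → ℝ) ∈ S) {T : Finset (Set α)}
    (hT : ∀ s ∈ T, s ∈ P) : (⋃ s ∈ T, s).indicator (1 : α → ℝ) ∈ S := by
  have hincl_excl : (⋃ s ∈ T, s).indicator (1 : α → ℝ) = ∑ u ∈ T.powerset with u.Nonempty,
      (-1 : ℤ) ^ (u.card + 1) • (⋂ s ∈ u, s).indicator 1 := by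
    ext x
    simpa [Finset.sum_apply] using Finset.indicator_biUnion_eq_sum_powerset T id (1 : α → ℝ) x
  rw [hincl_excl]
  refine sum_mem fun u hu => zsmul_mem ?_ _
  rw [Finset.mem_filter, Finset.mem_powerset] at hu
  rcases (⋂ s ∈ u, s).eq_empty_or_nonempty with hempty | hne
  · simp only [hempty, indicator_empty]
    exact zero_mem S
  · exact hS _ (hP.biInter_mem hu.2 (fun s hs => hT s (hu.1 hs)) hne)

lemma exists_fin_iInter_eq_of_mem_generatePiSystem {α : Type*} {τ : Set (Set α)} {s : Set α}
    (hs : s ∈ generatePiSystem τ) :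
    ∃ k > 0, ∃ O : Fin k → Set α, (∀ i, O i ∈ τ) ∧ ⋂ i, O i = s := by
  induction hs with
  | base hs => exact ⟨1, one_pos, fun _ => _, fun _ => hs, iInter_const _⟩
  | inter _ _ _ ihs iht =>
    obtain ⟨k, hk, O, hO, rfl⟩ := ihs
    obtain ⟨m, -, O', hO', rfl⟩ := iht
    refine ⟨k + m, by omega, Fin.append O O',
      Fin.addCases (by simpa using hO) (by simpa using hO'), ?_⟩
    ext x
    simp [Fin.forall_fin_add]

lemma TopologicalSpace.IsTopologicalBasis.exists_finset_measureReal_lt {α : Type*}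
    [TopologicalSpace α] [MeasurableSpace α] {τ : Set (Set α)} (hτc : τ.Countable)
    (hτ : IsTopologicalBasis τ) (μ : Measure α) [IsFiniteMeasure μ] {V : Set α} (hV : IsOpen V)
    {ε : ℝ} (hε : 0 < ε) :
    ∃ T : Finset (Set α), (∀ s ∈ T, s ∈ τ) ∧ ⋃ s ∈ T, s ⊆ V ∧
      μ.real V < μ.real (⋃ s ∈ T, s) + ε := by
  obtain ⟨S, hSτ, rfl⟩ := hτ.open_eq_sUnion hV
  rcases S.eq_empty_or_nonempty with rfl | hS
  · exact ⟨∅, by simp, by simp, by simpa using hε⟩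
  obtain ⟨b, rfl⟩ := (hτc.mono hSτ).exists_eq_range hS
  have hlim : Tendsto (fun n => μ.real (accumulate b n)) atTop (𝓝 (μ.real (⋃ n, b n))) :=
    (ENNReal.tendsto_toReal (measure_ne_top _ _)).comp tendsto_measure_iUnion_accumulate
  rw [sUnion_range]
  obtain ⟨n, hn⟩ := (hlim.eventually (lt_mem_nhds (sub_lt_self _ hε))).exists
  have hacc : ⋃ s ∈ (Finset.range (n + 1)).image b, s = accumulate b n := by
    simp [accumulate_def]
  refine ⟨(Finset.range (n + 1)).image b, by simpa using fun i _ => hSτ (mem_range_self i),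
    ?_, ?_⟩
  · rw [hacc]; exact accumulate_subset_iUnion n
  · rw [hacc]; linarith

lemma frontier_iInter_subset_of_finite {α ι : Type*} [TopologicalSpace α] [Finite ι]
    (s : ι → Set α) : frontier (⋂ i, s i) ⊆ ⋃ i, frontier (s i) := by
  rintro x ⟨hcl, hint⟩
  rw [interior_iInter_of_finite, mem_iInter, not_forall] at hint
  obtain ⟨i, hi⟩ := hint
  exact mem_iUnion.2 ⟨i, closure_mono (iInter_subset s i) hcl, hi⟩

lemma exists_countable_basis_null_frontier {α : Type*} [PseudoMetricSpace α]
    [SecondCountableTopology α] [MeasurableSpace α] [OpensMeasurableSpace α] (μ : Measure α)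
    [SFinite μ] : ∃ τ : Set (Set α), τ.Countable ∧ IsTopologicalBasis τ ∧ univ ∈ τ ∧
      ∀ U ∈ τ, μ (frontier U) = 0 := by
  have hbasis : IsTopologicalBasis {U : Set α | IsOpen U ∧ μ (frontier U) = 0} := by
    refine isTopologicalBasis_of_isOpen_of_nhds (fun U hU => hU.1) fun x U hxU hU => ?_
    obtain ⟨ε, hε, hball⟩ := Metric.isOpen_iff.1 hU x hxU
    obtain ⟨r, hr, hr0⟩ := exists_null_frontier_thickening μ {x} hε
    rw [thickening_singleton] at hr0
    exact ⟨ball x r, ⟨isOpen_ball, hr0⟩, mem_ball_self hr.1,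
      (ball_subset_ball hr.2.le).trans hball⟩
  obtain ⟨τ, hτ, hτc, hτb⟩ := hbasis.exists_countable
  refine ⟨insert univ τ, hτc.insert _, hτb.of_isOpen_of_subset ?_ (subset_insert _ _),
    mem_insert _ _, ?_⟩
  · rintro _ (rfl | hU)
    exacts [isOpen_univ, hτb.isOpen hU]
  · rintro _ (rfl | hU)
    exacts [by simp, (hτ hU).2]

lemma exists_seq_mem_Ioo_notMem {N : Set ℝ} (hN : N.Countable) (a : ℝ) {δ : ℝ} (hδ : 0 < δ) :
    ∃ c : ℕ → ℝ, ∀ i : ℕ, c i ∈ Ioo (a + i * δ) (a + (i + 1) * δ) ∧ c i ∉ N := by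
  have : ∀ i : ℕ, ∃ r ∈ Ioo (a + i * δ) (a + (i + 1) * δ), r ∈ Nᶜ := fun i =>
    (hN.dense_compl ℝ).inter_open_nonempty _ isOpen_Ioo (nonempty_Ioo.2 (by nlinarith))
  choose c hc hcN using this
  exact ⟨c, fun i => ⟨hc i, hcN i⟩⟩

/-- The staircase sum equals the largest level `c j < y` with `j ≤ n`, or `c 0` if there is none. -/
lemma staircase_le_and_le {c : ℕ → ℝ} (hc : Monotone c) {δ y : ℝ}
    (hgap : ∀ i, c (i + 1) ≤ c i + δ) (hy : c 0 ≤ y) (n : ℕ) :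
    c 0 + ∑ i ∈ Finset.range n, (if c (i + 1) < y then c (i + 1) - c i else 0) ≤ y ∧
      (y ≤ c n →
        y ≤ c 0 + ∑ i ∈ Finset.range n, (if c (i + 1) < y then c (i + 1) - c i else 0) + δ) := by
  set S := fun n => c 0 + ∑ i ∈ Finset.range n, (if c (i + 1) < y then c (i + 1) - c i else 0)
  have hδ : 0 ≤ δ := by linarith [hc (Nat.zero_le 1), hgap 0]
  suffices H : ∀ n, (c n < y → S n = c n) ∧ S n ≤ y ∧ (y ≤ c n → y ≤ S n + δ) from
    ⟨(H n).2.1, (H n).2.2⟩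
  intro n
  induction n with
  | zero => simp only [S, Finset.range_zero, Finset.sum_empty, add_zero]; grind
  | succ n ih =>
    have hS : S (n + 1) = S n + if c (n + 1) < y then c (n + 1) - c n else 0 := by
      simp only [S, Finset.sum_range_succ, add_assoc]
    by_cases hlt : c (n + 1) < y
    · have := ih.1 ((hc n.le_succ).trans_lt hlt)
      rw [hS, if_pos hlt]
      refine ⟨fun _ => by linarith, by linarith, fun h => absurd h (not_le.2 hlt)⟩
    · rw [hS, if_neg hlt, add_zero]
      refine ⟨fun h => absurd h hlt, ih.2.1, fun h => ?_⟩
      by_cases hn : c n < y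
      · linarith [ih.1 hn, hgap n]
      · exact ih.2.2 (not_lt.1 hn)

namespace ProbabilityTheory.Kernel

variable {X Y T : Type*} [MeasurableSpace X] [MeasurableSpace Y] [MeasurableSpace T]
  {Ψ : Kernel T (X × Y)}

variable (Ψ) in
noncomputable def fstSetIntegral (f : X → ℝ) (s : T) (B : {B : Set Y // MeasurableSet B}) : ℝ :=
  ∫ p in univ ×ˢ B.1, f p.1 ∂Ψ s

lemma fstSetIntegral_add {f g : X → ℝ} (hf : ∀ s, Integrable f (Ψ s).fst)
    (hg : ∀ s, Integrable g (Ψ s).fst) :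
    Ψ.fstSetIntegral (f + g) = Ψ.fstSetIntegral f + Ψ.fstSetIntegral g := by
  ext s B
  exact integral_add ((hf s).comp_measurable measurable_fst).integrableOn
    ((hg s).comp_measurable measurable_fst).integrableOn

lemma fstSetIntegral_smul (c : ℝ) (f : X → ℝ) :
    Ψ.fstSetIntegral (c • f) = c • Ψ.fstSetIntegral f := by
  ext s B
  exact integral_smul c _

lemma fstSetIntegral_sub {f g : X → ℝ} (hf : ∀ s, Integrable f (Ψ s).fst)
    (hg : ∀ s, Integrable g (Ψ s).fst) :
    Ψ.fstSetIntegral (f - g) = Ψ.fstSetIntegral f - Ψ.fstSetIntegral g := by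
  ext s B
  exact integral_sub ((hf s).comp_measurable measurable_fst).integrableOn
    ((hg s).comp_measurable measurable_fst).integrableOn

lemma fstSetIntegral_indicator_one {U : Set X} (hU : MeasurableSet U) (s : T)
    (B : {B : Set Y // MeasurableSet B}) :
    Ψ.fstSetIntegral (U.indicator 1) s B = (Ψ s (U ×ˢ B.1)).toReal := by
  have : (fun p : X × Y => U.indicator (1 : X → ℝ) p.1) = (Prod.fst ⁻¹' U).indicator 1 := rfl
  rw [fstSetIntegral, this, integral_indicator_one (measurable_fst hU),
    measureReal_restrict_apply (measurable_fst hU), measureReal_def]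
  congr 2
  ext p
  simp

lemma fstSetIntegral_mono {f g : X → ℝ} {s : T} (hf : Integrable f (Ψ s).fst)
    (hg : Integrable g (Ψ s).fst) (hfg : f ≤ g) (B : {B : Set Y // MeasurableSet B}) :
    Ψ.fstSetIntegral f s B ≤ Ψ.fstSetIntegral g s B :=
  setIntegral_mono (hf.comp_measurable measurable_fst).integrableOn
    (hg.comp_measurable measurable_fst).integrableOn fun p => hfg p.1

lemma fstSetIntegral_le_integral {f : X → ℝ} {s : T} (hf : Integrable f (Ψ s).fst) (hf0 : 0 ≤ f)
    (B : {B : Set Y // MeasurableSet B}) :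
    Ψ.fstSetIntegral f s B ≤ ∫ x, f x ∂(Ψ s).fst := by
  rw [fstSetIntegral, Measure.fst, integral_map measurable_fst.aemeasurable hf.aestronglyMeasurable]
  exact setIntegral_le_integral (hf.comp_measurable measurable_fst)
    (Eventually.of_forall fun p => hf0 p.1)

variable (Ψ) in
noncomputable def semiUniformSubmodule (l : Filter T) (t : T) : Submodule ℝ (X → ℝ) where
  carrier := {f | (∀ s, Integrable f (Ψ s).fst) ∧
    TendstoUniformly (Ψ.fstSetIntegral f) (Ψ.fstSetIntegral f t) l}
  add_mem' := by
    rintro f g ⟨hf, hf'⟩ ⟨hg, hg'⟩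
    refine ⟨fun s => (hf s).add (hg s), ?_⟩
    rw [fstSetIntegral_add hf hg]
    exact hf'.add hg'
  zero_mem' := by
    refine ⟨fun s => integrable_zero _ _ _, ?_⟩
    have : Ψ.fstSetIntegral 0 = 0 := by
      ext
      simp [fstSetIntegral]
    rw [this]
    exact tendsto_const_nhds.tendstoUniformly_const (g := fun _ : T => (0 : ℝ))
  smul_mem' := by
    rintro c f ⟨hf, hf'⟩
    refine ⟨fun s => (hf s).smul c, ?_⟩
    rw [fstSetIntegral_smul]
    exact (uniformContinuous_const_smul c).comp_tendstoUniformly hf'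

variable {l : Filter T} {t : T}

lemma mem_semiUniformSubmodule_iff {f : X → ℝ} :
    f ∈ Ψ.semiUniformSubmodule l t ↔ (∀ s, Integrable f (Ψ s).fst) ∧
      TendstoUniformly (Ψ.fstSetIntegral f) (Ψ.fstSetIntegral f t) l :=
  Iff.rfl

lemma abs_fstSetIntegral_sub_le {F g G : X → ℝ} (hF : ∀ s, Integrable F (Ψ s).fst)
    (hg : ∀ s, Integrable g (Ψ s).fst) (hG : ∀ s, Integrable G (Ψ s).fst) (hFg : F ≤ g)
    (hgG : g ≤ G) (s : T) (B : {B : Set Y // MeasurableSet B}) :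
    |Ψ.fstSetIntegral g s B - Ψ.fstSetIntegral g t B| ≤
      max |Ψ.fstSetIntegral F s B - Ψ.fstSetIntegral F t B|
        |Ψ.fstSetIntegral G s B - Ψ.fstSetIntegral G t B| + ∫ x, G x - F x ∂(Ψ t).fst := by
  set I := Ψ.fstSetIntegral
  have hgap {f₁ f₂ : X → ℝ} (h₁ : ∀ s, Integrable f₁ (Ψ s).fst)
      (h₂ : ∀ s, Integrable f₂ (Ψ s).fst) (hF₁ : F ≤ f₁) (h₂G : f₂ ≤ G) :
      I f₂ t B - I f₁ t B ≤ ∫ x, G x - F x ∂(Ψ t).fst :=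
    calc I f₂ t B - I f₁ t B = I (f₂ - f₁) t B :=
          (congrFun (congrFun (fstSetIntegral_sub h₂ h₁) t) B).symm
      _ ≤ I (G - F) t B := fstSetIntegral_mono ((h₂ t).sub (h₁ t)) ((hG t).sub (hF t))
          (fun x => by simp only [Pi.sub_apply]; linarith [hF₁ x, h₂G x]) B
      _ ≤ ∫ x, G x - F x ∂(Ψ t).fst := fstSetIntegral_le_integral ((hG t).sub (hF t))
          (fun x => by simp only [Pi.sub_apply, Pi.zero_apply]; linarith [hFg x, hgG x]) B
  have hup := hgap hg hG hFg le_rfl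
  have hdown := hgap hF hg le_rfl hgG
  have hFs := fstSetIntegral_mono (hF s) (hg s) hFg B
  have hGs := fstSetIntegral_mono (hg s) (hG s) hgG B
  rw [abs_sub_le_iff]
  constructor
  · linarith [le_abs_self (I G s B - I G t B), le_max_right |I F s B - I F t B| |I G s B - I G t B|]
  · linarith [neg_abs_le (I F s B - I F t B), le_max_left |I F s B - I F t B| |I G s B - I G t B|]

theorem mem_semiUniformSubmodule_of_squeeze {g : X → ℝ} (hg : ∀ s, Integrable g (Ψ s).fst)
    (h : ∀ ε > 0, ∃ F ∈ Ψ.semiUniformSubmodule l t, ∃ G ∈ Ψ.semiUniformSubmodule l t,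
      F ≤ g ∧ g ≤ G ∧ ∫ x, G x - F x ∂(Ψ t).fst < ε) :
    g ∈ Ψ.semiUniformSubmodule l t := by
  refine ⟨hg, Metric.tendstoUniformly_iff.2 fun ε hε => ?_⟩
  obtain ⟨F, ⟨hF, hFl⟩, G, ⟨hG, hGl⟩, hFg, hgG, hgap⟩ := h (ε / 2) (half_pos hε)
  filter_upwards [Metric.tendstoUniformly_iff.1 hFl (ε / 2) (half_pos hε),
    Metric.tendstoUniformly_iff.1 hGl (ε / 2) (half_pos hε)] with s hFs hGs B
  rw [dist_comm, Real.dist_eq]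
  calc _ ≤ _ := abs_fstSetIntegral_sub_le hF hg hG hFg hgG s B
    _ < ε / 2 + ε / 2 := by
      rw [← Real.dist_eq, ← Real.dist_eq, dist_comm, dist_comm (Ψ.fstSetIntegral G s B)]
      exact add_lt_add (max_lt (hFs B) (hGs B)) hgap
    _ = ε := add_halves ε

variable [IsFiniteKernel Ψ]

lemma bddAbove_range_abs_fstSetIntegral_sub {f : X → ℝ} {C : ℝ}
    (hC : ∀ x, |f x| ≤ C) (s t : T) :
    BddAbove (range fun B => |Ψ.fstSetIntegral f s B - Ψ.fstSetIntegral f t B|) := by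
  have hle : ∀ s B, |Ψ.fstSetIntegral f s B| ≤ |C| * (Ψ s).real univ := fun s B =>
    calc |Ψ.fstSetIntegral f s B| ≤ |C| * (Ψ s).real (univ ×ˢ B.1) := by
          rw [← Real.norm_eq_abs, fstSetIntegral]
          exact norm_setIntegral_le_of_norm_le_const (measure_lt_top _ _)
            fun p _ => (hC p.1).trans (le_abs_self C)
      _ ≤ |C| * (Ψ s).real univ :=
          mul_le_mul_of_nonneg_left (measureReal_mono (subset_univ _)) (abs_nonneg C)
  refine ⟨|C| * (Ψ s).real univ + |C| * (Ψ t).real univ, ?_⟩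
  rintro _ ⟨B, rfl⟩
  exact (abs_sub _ _).trans (add_le_add (hle s B) (hle t B))

lemma mem_semiUniformSubmodule_iff_tendsto_iSup {f : X → ℝ} {C : ℝ}
    (hf : ∀ s, Integrable f (Ψ s).fst) (hC : ∀ x, |f x| ≤ C) :
    f ∈ Ψ.semiUniformSubmodule l t ↔ Tendsto (fun s => ⨆ B : {B : Set Y // MeasurableSet B},
      |Ψ.fstSetIntegral f s B - Ψ.fstSetIntegral f t B|) l (𝓝 0) := by
  have : Nonempty {B : Set Y // MeasurableSet B} := ⟨⟨∅, .empty⟩⟩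
  rw [mem_semiUniformSubmodule_iff, and_iff_right hf]
  exact tendstoUniformly_iff_tendsto_iSup_abs_sub fun s =>
    bddAbove_range_abs_fstSetIntegral_sub hC s t

lemma indicator_mem_semiUniformSubmodule_iff {U : Set X} (hU : MeasurableSet U) :
    U.indicator 1 ∈ Ψ.semiUniformSubmodule l t ↔
      Tendsto (fun s => ⨆ B : {B : Set Y // MeasurableSet B},
        |(Ψ s (U ×ˢ B.1)).toReal - (Ψ t (U ×ˢ B.1)).toReal|) l (𝓝 0) := by
  rw [mem_semiUniformSubmodule_iff_tendsto_iSup (f := U.indicator 1) (C := 1)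
    (fun s => (integrable_const 1).indicator hU) fun x => ?_]
  · simp only [fstSetIntegral_indicator_one hU]
  · by_cases hx : x ∈ U <;> simp [hx]

theorem semiUniformFeller_iff_forall_bcf_mem [TopologicalSpace X] [OpensMeasurableSpace X]
    [TopologicalSpace T] [FrechetUrysohnSpace T] :
    SemiUniformFeller Ψ ↔ ∀ t (f : X →ᵇ ℝ), ⇑f ∈ Ψ.semiUniformSubmodule (𝓝 t) t := by
  have key : ∀ t (f : X →ᵇ ℝ), ⇑f ∈ Ψ.semiUniformSubmodule (𝓝 t) t ↔
      ∀ u : ℕ → T, Tendsto u atTop (𝓝 t) →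
        Tendsto (fun n => ⨆ B : {B : Set Y // MeasurableSet B},
          |Ψ.fstSetIntegral f (u n) B - Ψ.fstSetIntegral f t B|) atTop (𝓝 0) := fun t f =>
    (mem_semiUniformSubmodule_iff_tendsto_iSup (fun s => f.integrable _)
      f.norm_coe_le_norm).trans tendsto_nhds_iff_seq_tendsto
  simp only [key]
  exact ⟨fun h t f u hu => h u t hu f, fun h u t hu f => h t f u hu⟩

theorem indicator_mem_semiUniformSubmodule_of_forall_bcf [PseudoEMetricSpace X]
    [OpensMeasurableSpace X] (h : ∀ f : X →ᵇ ℝ, ⇑f ∈ Ψ.semiUniformSubmodule l t) {U : Set X}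
    (hU : IsOpen U) (hUt : (Ψ t).fst (frontier U) = 0) :
    U.indicator 1 ∈ Ψ.semiUniformSubmodule l t := by
  set μ := (Ψ t).fst
  have hδ : ∀ n : ℕ, (0 : ℝ) < 1 / (n + 1) := fun n => Nat.one_div_pos_of_nat
  let thick (E : Set X) (n : ℕ) : X →ᵇ ℝ :=
    (thickenedIndicator (hδ n) E).comp (↑) (LipschitzWith.subtype_val _)
  have thick_apply (E : Set X) (n : ℕ) (x : X) : thick E n x = thickenedIndicator (hδ n) E x := rfl
  have hthick {E : Set X} (hE : IsClosed E) :
      Tendsto (fun n => ∫ x, thick E n x ∂μ) atTop (𝓝 (μ.real E)) :=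
    tendsto_integral_thickenedIndicator_of_isClosed μ hE hδ tendsto_one_div_add_atTop_nhds_zero_nat
  have hgap :
      Tendsto (fun n => ∫ x, thick (closure U) n x - (1 - thick Uᶜ n) x ∂μ) atTop (𝓝 0) := by
    have hlim := (hthick (isClosed_closure (s := U))).sub
      ((tendsto_const_nhds (x := μ.real univ)).sub (hthick hU.isClosed_compl))
    have hcl : μ.real (closure U) = μ.real U := by
      rw [measureReal_def, measure_closure_of_null_frontier hUt, measureReal_def]
    rw [measureReal_compl hU.measurableSet, sub_sub_cancel, hcl, sub_self] at hlim
    refine hlim.congr fun n => ?_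
    rw [integral_sub ((thick _ n).integrable μ) ((1 - thick Uᶜ n).integrable μ)]
    simp [integral_sub (integrable_const (1 : ℝ)) ((thick Uᶜ n).integrable μ)]
  refine mem_semiUniformSubmodule_of_squeeze
    (fun s => (integrable_const 1).indicator hU.measurableSet) fun ε hε => ?_
  obtain ⟨n, hn⟩ := (hgap.eventually (gt_mem_nhds hε)).exists
  refine ⟨_, h (1 - thick Uᶜ n), _, h (thick (closure U) n), fun x => ?_, fun x => ?_, hn⟩
  · by_cases hx : x ∈ U
    · simp [hx, thick_apply]
    · have := thickenedIndicator_one (hδ n) Uᶜ (mem_compl hx)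
      simp only [BoundedContinuousFunction.coe_sub, BoundedContinuousFunction.coe_one,
        Pi.sub_apply, Pi.one_apply, thick_apply, this, indicator_of_notMem hx, NNReal.coe_one,
        sub_self, le_refl]
  · by_cases hx : x ∈ U
    · simp [hx, thick_apply, thickenedIndicator_one _ _ (subset_closure hx)]
    · simp [hx, thick_apply]

lemma exists_mem_semiUniformSubmodule_le_le_add [TopologicalSpace X] [OpensMeasurableSpace X]
    (h : ∀ U, IsOpen U → (Ψ t).fst (frontier U) = 0 → U.indicator 1 ∈ Ψ.semiUniformSubmodule l t)
    (f : X →ᵇ ℝ) {δ : ℝ} (hδ : 0 < δ) :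
    ∃ F ∈ Ψ.semiUniformSubmodule l t, F ≤ f ∧ ∀ x, f x ≤ F x + 2 * δ := by
  have h1 : (1 : X → ℝ) ∈ Ψ.semiUniformSubmodule l t := by simpa using h univ isOpen_univ (by simp)
  -- levels avoiding the atoms of the law of `f` under `(Ψ t).fst` make `{c < f}` null-frontier
  obtain ⟨c, hc⟩ := exists_seq_mem_Ioo_notMem
    (Measure.countable_meas_level_set_pos (μ := (Ψ t).fst) f.continuous.measurable) (-‖f‖ - δ) hδ
  obtain ⟨K, hK⟩ := exists_nat_ge (2 * ‖f‖ / δ + 1)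
  have hc_succ (i : ℕ) := (hc (i + 1)).1
  push_cast at hc_succ
  have hmono : Monotone c :=
    monotone_nat_of_le_succ fun i => by linarith [(hc i).1.2, (hc_succ i).1]
  have hgap (i : ℕ) : c (i + 1) ≤ c i + 2 * δ := by linarith [(hc i).1.1, (hc_succ i).2]
  have hlow (x : X) : c 0 ≤ f x := by
    have : c 0 < -‖f‖ := by simpa using (hc 0).1.2
    linarith [neg_abs_le (f x), f.norm_coe_le_norm x, Real.norm_eq_abs (f x)]
  have hhigh (x : X) : f x ≤ c K := by
    have : 2 * ‖f‖ + δ ≤ K * δ := by rw [div_add_one hδ.ne', div_le_iff₀ hδ] at hK; linarith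
    linarith [(hc K).1.1, le_abs_self (f x), f.norm_coe_le_norm x, Real.norm_eq_abs (f x)]
  set O : ℕ → Set X := fun i => {x | c (i + 1) < f x}
  have hO (i : ℕ) : (O i).indicator 1 ∈ Ψ.semiUniformSubmodule l t := by
    refine h _ (isOpen_lt continuous_const f.continuous) (measure_mono_null
      (frontier_lt_subset_eq continuous_const f.continuous) ?_)
    simpa [eq_comm] using (hc (i + 1)).2
  set F : X → ℝ := c 0 • 1 + ∑ i ∈ Finset.range K, (c (i + 1) - c i) • (O i).indicator 1
  have hF (x : X) : F x =
      c 0 + ∑ i ∈ Finset.range K, (if c (i + 1) < f x then c (i + 1) - c i else 0) := by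
    simp [F, O, indicator_apply, Finset.sum_apply]
  refine ⟨F, add_mem (Submodule.smul_mem _ _ h1) (sum_mem fun i _ => Submodule.smul_mem _ _ (hO i)),
    fun x => ?_, fun x => ?_⟩
  · rw [hF]
    exact (staircase_le_and_le hmono hgap (hlow x) K).1
  · rw [hF]
    exact (staircase_le_and_le hmono hgap (hlow x) K).2 (hhigh x)

theorem bcf_mem_semiUniformSubmodule_of_forall_isOpen [TopologicalSpace X]
    [OpensMeasurableSpace X]
    (h : ∀ U, IsOpen U → (Ψ t).fst (frontier U) = 0 → U.indicator 1 ∈ Ψ.semiUniformSubmodule l t)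
    (f : X →ᵇ ℝ) : ⇑f ∈ Ψ.semiUniformSubmodule l t := by
  set μ := (Ψ t).fst
  have h1 : (1 : X → ℝ) ∈ Ψ.semiUniformSubmodule l t := by simpa using h univ isOpen_univ (by simp)
  refine mem_semiUniformSubmodule_of_squeeze (fun s => f.integrable _) fun ε hε => ?_
  set δ := ε / (2 * (μ.real univ + 1))
  have hδ : 0 < δ := by positivity
  obtain ⟨F, hF, hFf, hfF⟩ := exists_mem_semiUniformSubmodule_le_le_add h f hδ
  refine ⟨F, hF, F + (2 * δ) • 1, add_mem hF (Submodule.smul_mem _ _ h1), hFf,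
    fun x => by simpa using hfF x, ?_⟩
  have : 2 * δ * μ.real univ < ε := by
    rw [mul_comm 2 δ, mul_assoc, div_mul_eq_mul_div, div_lt_iff₀ (by positivity)]
    nlinarith [measureReal_nonneg (μ := μ) (s := univ)]
  simpa [mul_comm] using this

theorem forall_bcf_mem_iff_forall_isOpen [PseudoEMetricSpace X] [OpensMeasurableSpace X] :
    (∀ f : X →ᵇ ℝ, ⇑f ∈ Ψ.semiUniformSubmodule l t) ↔
      ∀ U, IsOpen U → (Ψ t).fst (frontier U) = 0 → U.indicator 1 ∈ Ψ.semiUniformSubmodule l t :=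
  ⟨fun h _ => indicator_mem_semiUniformSubmodule_of_forall_bcf h,
    bcf_mem_semiUniformSubmodule_of_forall_isOpen⟩

theorem indicator_mem_semiUniformSubmodule_of_countable_basis [TopologicalSpace X]
    [OpensMeasurableSpace X] {τ : Set (Set X)} (hτc : τ.Countable) (hτ : IsTopologicalBasis τ)
    (huniv : univ ∈ τ) (h : ∀ (k : ℕ) (O : Fin k → Set X), 0 < k → (∀ i, O i ∈ τ) →
      (⋂ i, O i).indicator 1 ∈ Ψ.semiUniformSubmodule l t)
    {U : Set X} (hU : IsOpen U) (hUt : (Ψ t).fst (frontier U) = 0) :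
    U.indicator 1 ∈ Ψ.semiUniformSubmodule l t := by
  set μ := (Ψ t).fst
  have hunion (T : Finset (Set X)) (hT : ∀ s ∈ T, s ∈ τ) :
      (⋃ s ∈ T, s).indicator 1 ∈ Ψ.semiUniformSubmodule l t := by
    refine (isPiSystem_generatePiSystem τ).indicator_biUnion_mem
      (S := (Ψ.semiUniformSubmodule l t).toAddSubgroup) (fun s hs => ?_)
      fun s hs => subset_generatePiSystem_self τ (hT s hs)
    obtain ⟨k, hk, O, hO, rfl⟩ := exists_fin_iInter_eq_of_mem_generatePiSystem hs
    exact h k O hk hO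
  have hmeas (T : Finset (Set X)) (hT : ∀ s ∈ T, s ∈ τ) : MeasurableSet (⋃ s ∈ T, s) :=
    (isOpen_biUnion fun s hs => hτ.isOpen (hT s hs)).measurableSet
  have h1 : (1 : X → ℝ) ∈ Ψ.semiUniformSubmodule l t := by
    simpa using h 1 (fun _ => univ) one_pos fun _ => huniv
  refine mem_semiUniformSubmodule_of_squeeze
    (fun s => (integrable_const 1).indicator hU.measurableSet) fun ε hε => ?_
  obtain ⟨T, hTτ, hTU, hT⟩ := hτ.exists_finset_measureReal_lt hτc μ hU (half_pos hε)
  obtain ⟨T', hT'τ, hT'U, hT'⟩ :=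
    hτ.exists_finset_measureReal_lt hτc μ isClosed_closure.isOpen_compl (half_pos hε)
  have hUW : U ⊆ (⋃ s ∈ T', s)ᶜ := subset_closure.trans (subset_compl_comm.1 hT'U)
  refine ⟨_, hunion T hTτ, _, ?_, indicator_le_indicator_of_subset hTU fun _ => zero_le_one,
    indicator_le_indicator_of_subset hUW fun _ => zero_le_one, ?_⟩
  · rw [indicator_compl]
    exact sub_mem h1 (hunion T' hT'τ)
  · have hcl : μ.real (closure U) = μ.real U := by
      rw [measureReal_def, measure_closure_of_null_frontier hUt, measureReal_def]
    have hsplit := measureReal_compl (μ := μ) (isClosed_closure (s := U)).measurableSet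
    rw [integral_sub ((integrable_const 1).indicator (hmeas T' hT'τ).compl)
      ((integrable_const 1).indicator (hmeas T hTτ)), integral_indicator_one (hmeas T' hT'τ).compl,
      integral_indicator_one (hmeas T hTτ), measureReal_compl (hmeas T' hT'τ)]
    linarith

theorem forall_isOpen_mem_iff_exists_countable_basis [PseudoMetricSpace X]
    [SecondCountableTopology X] [OpensMeasurableSpace X] :
    (∀ U, IsOpen U → (Ψ t).fst (frontier U) = 0 → U.indicator 1 ∈ Ψ.semiUniformSubmodule l t) ↔
      ∃ τ : Set (Set X), τ.Countable ∧ IsTopologicalBasis τ ∧ univ ∈ τ ∧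
        ∀ (k : ℕ) (O : Fin k → Set X), 0 < k → (∀ i, O i ∈ τ) →
          (⋂ i, O i).indicator 1 ∈ Ψ.semiUniformSubmodule l t := by
  refine ⟨fun h => ?_, fun ⟨τ, hτc, hτ, huniv, h⟩ _ =>
    indicator_mem_semiUniformSubmodule_of_countable_basis hτc hτ huniv h⟩
  obtain ⟨τ, hτc, hτ, huniv, hτ0⟩ := exists_countable_basis_null_frontier (Ψ t).fst
  refine ⟨τ, hτc, hτ, huniv, fun k O _ hO =>
    h _ (isOpen_iInter_of_finite fun i => hτ.isOpen (hO i)) ?_⟩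
  exact measure_mono_null (frontier_iInter_subset_of_finite O)
    (measure_iUnion_null fun i => hτ0 _ (hO i))

end ProbabilityTheory.Kernel

theorem semiUniformFeller_iff_countable_base_general
    {S1 S2 S3 : Type*}
    [MetricSpace S1] [TopologicalSpace.SeparableSpace S1] [MeasurableSpace S1] [BorelSpace S1]
    [MeasurableSpace S2]
    [MetricSpace S3] [MeasurableSpace S3]
    (Ψ : Kernel S3 (S1 × S2)) [IsMarkovKernel Ψ] :
    SemiUniformFeller Ψ ↔
      ∀ t : S3, ∃ τ : Set (Set S1), τ.Countable ∧ TopologicalSpace.IsTopologicalBasis τ ∧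
        (Set.univ : Set S1) ∈ τ ∧
        ∀ (k : ℕ) (O : Fin k → Set S1), 0 < k → (∀ i, O i ∈ τ) →
          Tendsto (fun s => ⨆ B : {B : Set S2 // MeasurableSet B},
            |((Ψ s) ((⋂ i, O i) ×ˢ B.1)).toReal - ((Ψ t) ((⋂ i, O i) ×ˢ B.1)).toReal|)
            (𝓝 t) (𝓝 0) := by
  rw [Kernel.semiUniformFeller_iff_forall_bcf_mem]
  refine forall_congr' fun t => ?_
  rw [Kernel.forall_bcf_mem_iff_forall_isOpen, Kernel.forall_isOpen_mem_iff_exists_countable_basis]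
  refine exists_congr fun τ => and_congr_right fun _ => and_congr_right fun hτ =>
    and_congr_right fun _ => forall₂_congr fun k O => imp_congr_right fun _ =>
      imp_congr_right fun hO => ?_
  exact Kernel.indicator_mem_semiUniformSubmodule_iff
    (MeasurableSet.iInter fun i => (hτ.isOpen (hO i)).measurableSet)

/-- A stochastic kernel `Ψ` on `S1 × S2` given `S3` is semi-uniform Feller if and only if for
each `s3 ∈ S3` the topology of `S1` has a countable base `τ` with `S1 ∈ τ` such that for each
finite intersection `O` of elements of `τ`, the family `{s ↦ Ψ(O × B | s) : B ∈ B(S2)}` is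
equicontinuous at `s3`. -/
theorem semiUniformFeller_iff_countable_base
    {S1 S2 S3 : Type*}
    [MetricSpace S1] [TopologicalSpace.SeparableSpace S1] [MeasurableSpace S1] [BorelSpace S1]
    [StandardBorelSpace S1] [Nonempty S1]
    [MetricSpace S2] [TopologicalSpace.SeparableSpace S2] [MeasurableSpace S2] [BorelSpace S2]
    [StandardBorelSpace S2] [Nonempty S2]
    [MetricSpace S3] [TopologicalSpace.SeparableSpace S3] [MeasurableSpace S3] [BorelSpace S3]
    [StandardBorelSpace S3] [Nonempty S3]
    (Ψ : Kernel S3 (S1 × S2)) [IsMarkovKernel Ψ] :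
    SemiUniformFeller Ψ ↔
      ∀ t : S3, ∃ τ : Set (Set S1), τ.Countable ∧ TopologicalSpace.IsTopologicalBasis τ ∧
        (Set.univ : Set S1) ∈ τ ∧
        ∀ (k : ℕ) (O : Fin k → Set S1), 0 < k → (∀ i, O i ∈ τ) →
          Tendsto (fun s => ⨆ B : {B : Set S2 // MeasurableSet B},
            |((Ψ s) ((⋂ i, O i) ×ˢ B.1)).toReal - ((Ψ t) ((⋂ i, O i) ×ˢ B.1)).toReal|)
            (𝓝 t) (𝓝 0) :=
  semiUniformFeller_iff_countable_base_general Ψ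
end

section
/- A stochastic kernel Ψ on S1×S2 given S3 is semi-uniform Feller if and only if there exists a countable set F(S1) of bounded continuous real-valued functions on S1 such that: (i) the constant function 1 belongs to F(S1); (ii) F(S1) determines weak convergence on P(S1), i.e., a sequence of Borel probability measures μ^(n) on S1 converges weakly to μ if and only if ∫ f dμ^(n) → ∫ f dμ for all f ∈ F(S1); and (iii) for every f ∈ F(S1) and every sequence s3^(n) converging to s3 in S3, sup_{B ∈ B(S2)} |∫_{S1} f(s1) Ψ(ds1,B|s3^(n)) − ∫_{S1} f(s1) Ψ(ds1,B|s3)| → 0 as n → ∞. -/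
open MeasureTheory ProbabilityTheory Filter Topology

/-!
Fix `s n → t` and `f`, and any sequence of measurable sets `B n`. Let `ν` be the first marginal of
`Ψ t` and let `P n` glue the first marginal of `Ψ (s n)` on `S1 × B n` to that of `Ψ t` on
`S1 × (B n)ᶜ`. Then `∫ g dP n − ∫ g dν` is exactly the rectangle difference
`∫_{S1 × B n} g dΨ(s n) − ∫_{S1 × B n} g dΨ t`, so (iii) gives `∫ g dP n → ∫ g dν` for `g ∈ F`.
As `1 ∈ F`, the masses of `P n` tend to `1`, the normalised `P n` converge weakly to `ν` because
`F` determines weak convergence, and so `∫ f dP n → ∫ f dν` for every bounded continuous `f`.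
Choosing `B n` nearly attaining the supremum gives the semi-uniform Feller property.

Conversely, on a separable metric space the functions `1 − thickenedIndicator (1/(m+1)) Uᶜ`, with
`U` a finite union of sets of a countable basis, approximate from below the measure of every open
set, so by the portmanteau theorem they determine weak convergence.
-/

open BoundedContinuousFunction Set

theorem MeasureTheory.FiniteMeasure.integral_eq_mass_mul_integral_normalize {X : Type*}
    [MeasurableSpace X] [Nonempty X] (μ : FiniteMeasure X) (g : X → ℝ) :
    ∫ x, g x ∂(μ : Measure X) = μ.mass * ∫ x, g x ∂(μ.normalize : Measure X) := by
  conv_lhs => rw [μ.self_eq_mass_smul_normalize, FiniteMeasure.toMeasure_smul]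
  rw [integral_smul_nnreal_measure, NNReal.smul_def, smul_eq_mul]
  rfl

section ConvergenceDetermining

variable {X : Type*} [TopologicalSpace X] [MeasurableSpace X] [OpensMeasurableSpace X]

def IsConvergenceDetermining (F : Set (X →ᵇ ℝ)) : Prop :=
  ∀ (μ : ℕ → ProbabilityMeasure X) (μ₀ : ProbabilityMeasure X),
    Tendsto μ atTop (𝓝 μ₀) ↔
      ∀ f ∈ F, Tendsto (fun n => ∫ x, f x ∂(μ n : Measure X)) atTop
        (𝓝 (∫ x, f x ∂(μ₀ : Measure X)))

theorem isConvergenceDetermining_of_forall_isOpen {F : Set (X →ᵇ ℝ)}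
    (hF : ∀ (ν : ProbabilityMeasure X) (G : Set X), IsOpen G → ∀ r < ν G,
      ∃ g ∈ F, (∀ x, g x ≤ G.indicator 1 x) ∧ (r : ℝ) < ∫ x, g x ∂(ν : Measure X)) :
    IsConvergenceDetermining F := by
  refine fun μ μ₀ => ⟨fun h f _ => ProbabilityMeasure.tendsto_iff_forall_integral_tendsto.mp h f,
    fun h => tendsto_of_forall_isOpen_le_liminf fun G hG => ?_⟩
  refine (le_liminf_iff (isCoboundedUnder_ge_of_le (x := 1) atTop (by simp))
    (by isBoundedDefault)).2 fun r hr => ?_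
  obtain ⟨g, hgF, hgG, hrg⟩ := hF μ₀ G hG r hr
  filter_upwards [(h g hgF).eventually (eventually_gt_nhds hrg)] with n hn
  have hgμ : ∫ x, g x ∂(μ n : Measure X) ≤ μ n G :=
    calc ∫ x, g x ∂(μ n : Measure X) ≤ ∫ x, G.indicator 1 x ∂(μ n : Measure X) :=
          integral_mono (g.integrable _) ((integrable_const 1).indicator hG.measurableSet) hgG
      _ = μ n G := by simp [integral_indicator_one hG.measurableSet]
  exact_mod_cast hn.trans_le hgμ

theorem IsConvergenceDetermining.tendsto_integral_of_tendsto [Nonempty X] {F : Set (X →ᵇ ℝ)}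
    (hF : IsConvergenceDetermining F) (h1 : 1 ∈ F) {μs : ℕ → Measure X}
    [∀ n, IsFiniteMeasure (μs n)] {ν : ProbabilityMeasure X}
    (h : ∀ g ∈ F, Tendsto (fun n => ∫ x, g x ∂μs n) atTop (𝓝 (∫ x, g x ∂(ν : Measure X))))
    (f : X →ᵇ ℝ) : Tendsto (fun n => ∫ x, f x ∂μs n) atTop (𝓝 (∫ x, f x ∂(ν : Measure X))) := by
  let μF : ℕ → FiniteMeasure X := fun n => ⟨μs n, inferInstance⟩
  have hmass : Tendsto (fun n => ((μF n).mass : ℝ)) atTop (𝓝 1) := by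
    simpa [μF, FiniteMeasure.mass, Measure.real, ENNReal.coe_toNNReal_eq_toReal] using h 1 h1
  have hnormalize : Tendsto (fun n => (μF n).normalize) atTop (𝓝 ν) := by
    refine (hF _ ν).2 fun g hg => ?_
    have hlim := (h g hg).div hmass one_ne_zero
    rw [div_one] at hlim
    refine hlim.congr' ?_
    filter_upwards [hmass.eventually_ne one_ne_zero] with n hn
    rw [Pi.div_apply, show ∫ x, g x ∂μs n = _ from
      FiniteMeasure.integral_eq_mass_mul_integral_normalize (μF n) g, mul_div_cancel_left₀ _ hn]
  have hconv : Tendsto μF atTop (𝓝 ν.toFiniteMeasure) := by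
    refine (FiniteMeasure.tendsto_normalize_iff_tendsto ν.toFiniteMeasure_nonzero).1
      ⟨by simpa using hnormalize, ?_⟩
    simpa using NNReal.tendsto_coe.1 hmass
  exact FiniteMeasure.tendsto_iff_forall_integral_tendsto.1 hconv f

end ConvergenceDetermining

section OpenRamp

variable {X : Type*} [PseudoEMetricSpace X] {U : Set X}

/-- Built from `thickenedIndicator`, which uses `infEdist`, rather than from `Metric.infDist`:
since `infDist x ∅ = 0`, the latter would give `0` instead of `1` for `U = univ`. -/
noncomputable def openRamp (U : Set X) (m : ℕ) : X →ᵇ ℝ :=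
  1 - (thickenedIndicator (Nat.one_div_pos_of_nat (n := m)) Uᶜ).comp _
    NNReal.isometry_coe.lipschitz

lemma openRamp_apply (m : ℕ) (x : X) :
    openRamp U m x = 1 - thickenedIndicator (Nat.one_div_pos_of_nat (n := m)) Uᶜ x :=
  rfl

lemma openRamp_nonneg (m : ℕ) (x : X) : 0 ≤ openRamp U m x := by
  rw [openRamp_apply, sub_nonneg]
  exact_mod_cast thickenedIndicator_le_one _ _ x

lemma openRamp_le_indicator (m : ℕ) (x : X) : openRamp U m x ≤ U.indicator 1 x := by
  by_cases hx : x ∈ U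
  · simp [openRamp_apply, hx]
  · simp [openRamp_apply, hx, thickenedIndicator_one _ Uᶜ (mem_compl hx)]

lemma tendsto_openRamp (hU : IsOpen U) (x : X) :
    Tendsto (fun m => openRamp U m x) atTop (𝓝 (U.indicator 1 x)) := by
  have h := tendsto_pi_nhds.1 (thickenedIndicator_tendsto_indicator_closure
    (fun m => Nat.one_div_pos_of_nat (n := m)) tendsto_one_div_add_atTop_nhds_zero_nat Uᶜ) x
  rw [hU.isClosed_compl.closure_eq] at h
  have := (NNReal.tendsto_coe.2 h).const_sub 1
  by_cases hx : x ∈ U <;> simpa [openRamp_apply, hx] using this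

variable [MeasurableSpace X] [OpensMeasurableSpace X]

lemma tendsto_integral_openRamp (μ : Measure X) [IsFiniteMeasure μ] (hU : IsOpen U) :
    Tendsto (fun m => ∫ x, openRamp U m x ∂μ) atTop (𝓝 (μ.real U)) := by
  rw [← integral_indicator_one hU.measurableSet]
  refine tendsto_integral_of_dominated_convergence (fun _ => 1)
    (fun m => (openRamp U m).continuous.aestronglyMeasurable) (integrable_const 1)
    (fun m => .of_forall fun x => ?_) (.of_forall (tendsto_openRamp hU))
  rw [Real.norm_of_nonneg (openRamp_nonneg m x)]
  exact (openRamp_le_indicator m x).trans (indicator_le_self' (by simp) x)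

end OpenRamp

section RampFamily

open TopologicalSpace

variable (X : Type*) [PseudoEMetricSpace X] [SecondCountableTopology X]

def rampFamily : Set (X →ᵇ ℝ) :=
  insert 1 (image2 (fun (T : Finset (Set X)) m => openRamp (⋃ t ∈ T, t) m)
    {T | ↑T ⊆ countableBasis X} univ)

theorem countable_rampFamily : (rampFamily X).Countable := by
  refine Countable.insert _ (Countable.image2 ?_ countable_univ _)
  refine ((countable_ofPred_finite_subset (countable_countableBasis X)).preimage
    Finset.coe_injective).mono fun T hT => ?_
  exact ⟨T.finite_toSet, hT⟩

variable [MeasurableSpace X] [OpensMeasurableSpace X]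

theorem isConvergenceDetermining_rampFamily : IsConvergenceDetermining (rampFamily X) := by
  refine isConvergenceDetermining_of_forall_isOpen fun ν G hG r hr => ?_
  obtain ⟨T, hTb, hrT, hTG⟩ := ν.exists_lt_measure_biUnion_of_isOpen
    (fun u hu x hx => by
      obtain ⟨v, hv, hxv, hvu⟩ := (isBasis_countableBasis X).exists_subset_of_mem_open hx hu
      exact ⟨v, hv, (isOpen_of_mem_countableBasis hv).mem_nhds hxv, hvu⟩) hG hr
  have hU : IsOpen (⋃ t ∈ T, t) :=
    isOpen_biUnion fun t ht => isOpen_of_mem_countableBasis (hTb t ht)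
  have hrT' : (r : ℝ) < (ν : Measure X).real (⋃ t ∈ T, t) := by
    simpa using NNReal.coe_lt_coe.2 hrT
  obtain ⟨m, hm⟩ := ((tendsto_integral_openRamp (ν : Measure X) hU).eventually
    (eventually_gt_nhds hrT')).exists
  refine ⟨openRamp _ m, mem_insert_of_mem _ ⟨T, hTb, m, mem_univ m, rfl⟩, fun x => ?_, hm⟩
  exact (openRamp_le_indicator m x).trans (indicator_le_indicator_of_subset hTG (by simp) x)

end RampFamily

theorem tendsto_iSup_nhds_zero_of_forall_tendsto {ι : Type*} [Nonempty ι] {a : ℕ → ι → ℝ}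
    (ha : ∀ n i, 0 ≤ a n i) (h : ∀ i : ℕ → ι, Tendsto (fun n => a n (i n)) atTop (𝓝 0)) :
    Tendsto (fun n => ⨆ j, a n j) atTop (𝓝 0) := by
  have hε : ∀ n, ∃ i, (⨆ j, a n j) - 1 / (n + 1) < a n i := fun n =>
    exists_lt_of_lt_ciSup (sub_lt_self _ Nat.one_div_pos_of_nat)
  choose i hi using hε
  have hbound : Tendsto (fun n => a n (i n) + 1 / ((n : ℝ) + 1)) atTop (𝓝 0) := by
    simpa using (h i).add tendsto_one_div_add_atTop_nhds_zero_nat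
  exact squeeze_zero (fun n => Real.iSup_nonneg (ha n)) (fun n => by linarith [hi n]) hbound

theorem abs_setIntegral_sub_setIntegral_le {Z : Type*} [MeasurableSpace Z] {g : Z → ℝ} {C : ℝ}
    (hC : 0 ≤ C) (hg : ∀ z, ‖g z‖ ≤ C) (μ ν : Measure Z) [IsProbabilityMeasure μ]
    [IsProbabilityMeasure ν] (s : Set Z) :
    |∫ z in s, g z ∂μ - ∫ z in s, g z ∂ν| ≤ 2 * C := by
  have hle : ∀ (ρ : Measure Z) [IsProbabilityMeasure ρ], ‖∫ z in s, g z ∂ρ‖ ≤ C := fun ρ _ =>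
    calc ‖∫ z in s, g z ∂ρ‖ ≤ C * ρ.real s :=
          norm_setIntegral_le_of_norm_le_const (measure_lt_top ρ s) fun z _ => hg z
      _ ≤ C * 1 := mul_le_mul_of_nonneg_left measureReal_le_one hC
      _ = C := mul_one C
  have hμ := hle μ
  have hν := hle ν
  rw [Real.norm_eq_abs] at hμ hν
  linarith [abs_sub (∫ z in s, g z ∂μ) (∫ z in s, g z ∂ν)]

section SplitMarginal

variable {X Y : Type*} [MeasurableSpace X] [MeasurableSpace Y]

noncomputable def splitFstMarginal (κ₁ κ₂ : Measure (X × Y)) (B : Set Y) : Measure X :=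
  (κ₁.restrict (univ ×ˢ B)).map Prod.fst + (κ₂.restrict (univ ×ˢ Bᶜ)).map Prod.fst

instance (κ₁ κ₂ : Measure (X × Y)) [IsFiniteMeasure κ₁] [IsFiniteMeasure κ₂] (B : Set Y) :
    IsFiniteMeasure (splitFstMarginal κ₁ κ₂ B) := by
  unfold splitFstMarginal; infer_instance

theorem integral_splitFstMarginal_sub [TopologicalSpace X] [OpensMeasurableSpace X]
    (κ₁ κ₂ : Measure (X × Y)) [IsFiniteMeasure κ₁] [IsFiniteMeasure κ₂] {B : Set Y}
    (hB : MeasurableSet B) (g : X →ᵇ ℝ) :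
    ∫ x, g x ∂splitFstMarginal κ₁ κ₂ B - ∫ x, g x ∂κ₂.map Prod.fst =
      (∫ p in univ ×ˢ B, g p.1 ∂κ₁) - ∫ p in univ ×ˢ B, g p.1 ∂κ₂ := by
  have hmap : ∀ κ : Measure (X × Y), ∫ x, g x ∂κ.map Prod.fst = ∫ p, g p.1 ∂κ := fun κ =>
    integral_map measurable_fst.aemeasurable g.continuous.aestronglyMeasurable
  have hcompl : (univ ×ˢ B)ᶜ = (univ ×ˢ Bᶜ : Set (X × Y)) := by ext; simp
  have hsplit := integral_add_compl (MeasurableSet.univ.prod hB)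
    ((g.integrable (κ₂.map Prod.fst)).comp_measurable measurable_fst)
  simp only [hcompl, Function.comp_apply] at hsplit
  rw [splitFstMarginal, integral_add_measure (g.integrable _) (g.integrable _), hmap, hmap, hmap,
    ← hsplit]
  ring

end SplitMarginal

theorem semiUniformFeller_of_isConvergenceDetermining {X Y T : Type*} [TopologicalSpace X]
    [MeasurableSpace X] [OpensMeasurableSpace X] [Nonempty X] [MeasurableSpace Y]
    [TopologicalSpace T] [MeasurableSpace T] (Ψ : Kernel T (X × Y)) [IsMarkovKernel Ψ]
    {F : Set (X →ᵇ ℝ)} (h1 : 1 ∈ F) (hF : IsConvergenceDetermining F)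
    (hΨ : ∀ f ∈ F, ∀ (s : ℕ → T) (t : T), Tendsto s atTop (𝓝 t) →
      Tendsto (fun n => ⨆ B : {B : Set Y // MeasurableSet B},
        |(∫ x in univ ×ˢ B.1, f x.1 ∂(Ψ (s n))) - ∫ x in univ ×ˢ B.1, f x.1 ∂(Ψ t)|)
        atTop (𝓝 0)) :
    SemiUniformFeller Ψ := by
  intro s t hst f
  refine tendsto_iSup_nhds_zero_of_forall_tendsto (fun _ _ => abs_nonneg _) fun B => ?_
  let ν : ProbabilityMeasure X :=
    ⟨(Ψ t).map Prod.fst, Measure.isProbabilityMeasure_map measurable_fst.aemeasurable⟩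
  let P : ℕ → Measure X := fun n => splitFstMarginal (Ψ (s n)) (Ψ t) (B n).1
  have hgap : ∀ (g : X →ᵇ ℝ) n, (∫ x in univ ×ˢ (B n).1, g x.1 ∂(Ψ (s n))) -
      ∫ x in univ ×ˢ (B n).1, g x.1 ∂(Ψ t) = ∫ x, g x ∂P n - ∫ x, g x ∂(ν : Measure X) :=
    fun g n => (integral_splitFstMarginal_sub _ _ (B n).2 g).symm
  have hPF : ∀ g ∈ F,
      Tendsto (fun n => ∫ x, g x ∂P n) atTop (𝓝 (∫ x, g x ∂(ν : Measure X))) := by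
    intro g hg
    refine tendsto_iff_norm_sub_tendsto_zero.2
      (squeeze_zero_norm (fun n => ?_) (hΨ g hg s t hst))
    rw [norm_norm, Real.norm_eq_abs, ← hgap]
    exact le_ciSup ⟨2 * ‖g‖, by
      rintro _ ⟨B', rfl⟩
      exact abs_setIntegral_sub_setIntegral_le (norm_nonneg g)
        (fun p : X × Y => g.norm_coe_le_norm p.1) (Ψ (s n)) (Ψ t) (univ ×ˢ B'.1)⟩ (B n)
  have hPf := tendsto_iff_norm_sub_tendsto_zero.1 (hF.tendsto_integral_of_tendsto h1 hPF f)
  simpa only [hgap, Real.norm_eq_abs] using hPf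

theorem semiUniformFeller_iff_assumptionM_general
    {S1 S2 S3 : Type*}
    [MetricSpace S1] [TopologicalSpace.SeparableSpace S1] [MeasurableSpace S1] [BorelSpace S1]
    [Nonempty S1]
    [MeasurableSpace S2]
    [MetricSpace S3] [MeasurableSpace S3]
    (Ψ : Kernel S3 (S1 × S2)) [IsMarkovKernel Ψ] :
    SemiUniformFeller Ψ ↔
      ∃ F : Set (BoundedContinuousFunction S1 ℝ), F.Countable ∧
        (1 : BoundedContinuousFunction S1 ℝ) ∈ F ∧
        (∀ (μ : ℕ → ProbabilityMeasure S1) (μ₀ : ProbabilityMeasure S1),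
          Tendsto μ atTop (𝓝 μ₀) ↔
            ∀ f ∈ F, Tendsto (fun n => ∫ x, f x ∂(μ n : Measure S1)) atTop
              (𝓝 (∫ x, f x ∂(μ₀ : Measure S1)))) ∧
        (∀ f ∈ F, ∀ (s : ℕ → S3) (t : S3), Tendsto s atTop (𝓝 t) →
          Tendsto (fun n => ⨆ B : {B : Set S2 // MeasurableSet B},
            |(∫ x in Set.univ ×ˢ B.1, f x.1 ∂(Ψ (s n))) -
              ∫ x in Set.univ ×ˢ B.1, f x.1 ∂(Ψ t)|) atTop (𝓝 0)) := by
  refine ⟨fun hΨ => ?_, fun ⟨F, _, h1, hF, hΨ⟩ => ?_⟩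
  · exact ⟨rampFamily S1, countable_rampFamily S1, Set.mem_insert _ _,
      isConvergenceDetermining_rampFamily S1, fun f _ s t hst => hΨ s t hst f⟩
  · exact semiUniformFeller_of_isConvergenceDetermining Ψ h1 hF hΨ

/-- A stochastic kernel `Ψ` on `S1 × S2` given `S3` is semi-uniform Feller if and only if there
exists a countable set `F` of bounded continuous functions on `S1` containing the constant
function `1`, determining weak convergence on `P(S1)`, and such that the semi-uniform Feller
convergence property holds for every `f ∈ F`. -/
theorem semiUniformFeller_iff_assumptionM
    {S1 S2 S3 : Type*}
    [MetricSpace S1] [TopologicalSpace.SeparableSpace S1] [MeasurableSpace S1] [BorelSpace S1]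
    [StandardBorelSpace S1] [Nonempty S1]
    [MetricSpace S2] [TopologicalSpace.SeparableSpace S2] [MeasurableSpace S2] [BorelSpace S2]
    [StandardBorelSpace S2] [Nonempty S2]
    [MetricSpace S3] [TopologicalSpace.SeparableSpace S3] [MeasurableSpace S3] [BorelSpace S3]
    [StandardBorelSpace S3] [Nonempty S3]
    (Ψ : Kernel S3 (S1 × S2)) [IsMarkovKernel Ψ] :
    SemiUniformFeller Ψ ↔
      ∃ F : Set (BoundedContinuousFunction S1 ℝ), F.Countable ∧
        (1 : BoundedContinuousFunction S1 ℝ) ∈ F ∧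
        (∀ (μ : ℕ → ProbabilityMeasure S1) (μ₀ : ProbabilityMeasure S1),
          Tendsto μ atTop (𝓝 μ₀) ↔
            ∀ f ∈ F, Tendsto (fun n => ∫ x, f x ∂(μ n : Measure S1)) atTop
              (𝓝 (∫ x, f x ∂(μ₀ : Measure S1)))) ∧
        (∀ f ∈ F, ∀ (s : ℕ → S3) (t : S3), Tendsto s atTop (𝓝 t) →
          Tendsto (fun n => ⨆ B : {B : Set S2 // MeasurableSet B},
            |(∫ x in Set.univ ×ˢ B.1, f x.1 ∂(Ψ (s n))) -
              ∫ x in Set.univ ×ˢ B.1, f x.1 ∂(Ψ t)|) atTop (𝓝 0)) :=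
  semiUniformFeller_iff_assumptionM_general Ψ
end

section
/- Suppose a stochastic kernel Ψ on S1×S2 given S3 satisfies: its marginal kernel Ψ(S1,·|·) on S2 given S3 is continuous in total variation, and there is a countable set F(S1) of bounded continuous functions on S1 determining weak convergence on P(S1) such that for every f ∈ F(S1) and every sequence s3^(n) → s3 in S3, sup_{B ∈ B(S2)} |∫_{S1} f(s1) Ψ(ds1,B|s3^(n)) − ∫_{S1} f(s1) Ψ(ds1,B|s3)| → 0. Let Φ be a stochastic kernel on S1 given S2×S3 with Ψ(A×B|s3) = ∫_B Φ(A|s2,s3) Ψ(S1,ds2|s3) for all Borel A, B, and all s3. Then for every sequence s3^(n) → s3 there is a subsequence s3^(n_k) such that Φ(·|s2,s3^(n_k)) converges weakly to Φ(·|s2,s3) for Ψ(S1,·|s3)-almost every s2 ∈ S2. -/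
open MeasureTheory ProbabilityTheory Filter Topology

open scoped BoundedContinuousFunction

/-!
Write `g_t y = ∫ f dΦ(·|y, t)` and `ν_t` for the `S2`-marginal of `Ψ(·|t)`. Disintegration turns
`∫_{S1 × B} f dΨ(·|t)` into `∫_B g_t dν_t`. Continuity of `ν` in total variation lets one replace
`ν_{tₙ}` by `ν_t` at a cost of `2‖f‖` times the total variation distance, so the semi-uniform
Feller hypothesis gives `sup_B |∫_B (g_{tₙ} - g_t) dν_t| → 0`, that is, `g_{tₙ} → g_t` in
`L¹(ν_t)`. For the countably many `f ∈ F` a single subsequence with summable `L¹` errors converges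
`ν_t`-a.e. for all of them at once, and `F` determines weak convergence.
-/

section IntegralEstimates

variable {α : Type*} [MeasurableSpace α] {μ ν : Measure α}

lemma abs_integral_sub_integral_le_of_le [IsFiniteMeasure μ] (hle : ν ≤ μ) {g : α → ℝ}
    (hg : AEStronglyMeasurable g μ) {M : ℝ} (hgb : ∀ x, |g x| ≤ M) :
    |∫ x, g x ∂μ - ∫ x, g x ∂ν| ≤ M * (μ.real Set.univ - ν.real Set.univ) := by
  have : IsFiniteMeasure ν := isFiniteMeasure_of_le μ hle
  have hgb' : ∀ᵐ x ∂(μ - ν), ‖g x‖ ≤ M := .of_forall hgb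
  have hint : ∀ ρ ≤ μ, Integrable g ρ := fun ρ hρ =>
    have : IsFiniteMeasure ρ := isFiniteMeasure_of_le μ hρ
    .of_bound (hg.mono_measure hρ) M (.of_forall hgb)
  have hsplit : ∫ x, g x ∂μ = ∫ x, g x ∂(μ - ν) + ∫ x, g x ∂ν := by
    rw [← integral_add_measure (hint _ Measure.sub_le) (hint _ hle),
      Measure.sub_add_cancel_of_le hle]
  have hmass : (μ - ν).real Set.univ = μ.real Set.univ - ν.real Set.univ := by
    rw [measureReal_def, Measure.sub_apply .univ hle,
      ENNReal.toReal_sub_of_le (hle Set.univ) (measure_ne_top _ _)]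
    rfl
  rw [hsplit, add_sub_cancel_right, ← Real.norm_eq_abs, ← hmass]
  exact norm_integral_le_of_norm_le_const hgb'

lemma abs_integral_sub_integral_le_of_forall_abs_measureReal_sub_le [IsFiniteMeasure μ]
    [IsFiniteMeasure ν] {g : α → ℝ} (hg : Measurable g) {M ε : ℝ} (hM : 0 ≤ M)
    (hgb : ∀ x, |g x| ≤ M) (hε : ∀ B, MeasurableSet B → |μ.real B - ν.real B| ≤ ε) :
    |∫ x, g x ∂μ - ∫ x, g x ∂ν| ≤ 2 * M * ε := by
  obtain ⟨u, hu, hνμ, hμν⟩ := hahn_decomposition μ ν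
  have hle_on : ν.restrict u ≤ μ.restrict u := by
    refine Measure.le_iff.2 fun B hB => ?_
    rw [Measure.restrict_apply hB, Measure.restrict_apply hB]
    exact hνμ _ (hB.inter hu) Set.inter_subset_right
  have hle_off : μ.restrict uᶜ ≤ ν.restrict uᶜ := by
    refine Measure.le_iff.2 fun B hB => ?_
    rw [Measure.restrict_apply hB, Measure.restrict_apply hB]
    exact hμν _ (hB.inter hu.compl) Set.inter_subset_right
  have h_on : |∫ x in u, g x ∂μ - ∫ x in u, g x ∂ν| ≤ M * ε := by
    refine (abs_integral_sub_integral_le_of_le hle_on hg.aestronglyMeasurable hgb).trans ?_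
    simp only [measureReal_restrict_apply_univ]
    exact mul_le_mul_of_nonneg_left ((le_abs_self _).trans (hε u hu)) hM
  have h_off : |∫ x in uᶜ, g x ∂μ - ∫ x in uᶜ, g x ∂ν| ≤ M * ε := by
    rw [abs_sub_comm]
    refine (abs_integral_sub_integral_le_of_le hle_off hg.aestronglyMeasurable hgb).trans ?_
    simp only [measureReal_restrict_apply_univ]
    refine mul_le_mul_of_nonneg_left ((le_abs_self _).trans ?_) hM
    rw [abs_sub_comm]
    exact hε _ hu.compl
  have hint : ∀ ρ : Measure α, IsFiniteMeasure ρ → Integrable g ρ := fun ρ _ =>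
    .of_bound hg.aestronglyMeasurable M (.of_forall hgb)
  rw [← integral_add_compl hu (hint μ inferInstance),
    ← integral_add_compl hu (hint ν inferInstance)]
  calc _ = |(∫ x in u, g x ∂μ - ∫ x in u, g x ∂ν) +
        (∫ x in uᶜ, g x ∂μ - ∫ x in uᶜ, g x ∂ν)| := by
        ring_nf
    _ ≤ M * ε + M * ε := (abs_add_le _ _).trans (add_le_add h_on h_off)
    _ = 2 * M * ε := by ring

lemma integral_abs_le_two_mul_of_forall_abs_setIntegral_le {w : α → ℝ} (hwm : Measurable w)
    (hwi : Integrable w μ) {ε : ℝ} (hε : ∀ B, MeasurableSet B → |∫ x in B, w x ∂μ| ≤ ε) :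
    ∫ x, |w x| ∂μ ≤ 2 * ε := by
  have hpos := hε {x | 0 ≤ w x} (measurableSet_le measurable_const hwm)
  have hneg := hε {x | w x ≤ 0} (measurableSet_le hwm measurable_const)
  simp_rw [← Real.norm_eq_abs, integral_norm_eq_pos_sub_neg hwi]
  linarith [le_abs_self (∫ x in {x | 0 ≤ w x}, w x ∂μ),
    neg_abs_le (∫ x in {x | w x ≤ 0}, w x ∂μ)]

end IntegralEstimates

section AESubsequence

lemma exists_strictMono_forall_summable {ι : Type*} [Countable ι] {u : ι → ℕ → ℝ}
    (hu : ∀ i, Tendsto (u i) atTop (𝓝 0)) :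
    ∃ φ : ℕ → ℕ, StrictMono φ ∧ ∀ i, Summable fun k => u i (φ k) := by
  obtain ⟨code, hcode⟩ := Countable.exists_injective_nat ι
  have hev : ∀ k, ∀ᶠ n in atTop, ∀ i ∈ {i | code i ≤ k}, ‖u i n‖ ≤ (1 / 2 : ℝ) ^ k := fun k =>
    (((Set.finite_Iic k).preimage hcode.injOn).eventually_all).2 fun i _ =>
      (by simpa using (hu i).norm : Tendsto (fun n => ‖u i n‖) atTop (𝓝 0)).eventually_le_const
        (by positivity)
  obtain ⟨φ, hφ, hφu⟩ := extraction_forall_of_eventually hev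
  refine ⟨φ, hφ, fun i => .of_norm_bounded_eventually_nat summable_geometric_two ?_⟩
  filter_upwards [eventually_ge_atTop (code i)] with k hk using hφu k i hk

variable {α : Type*} [MeasurableSpace α] {μ : Measure α}

lemma ae_tendsto_zero_of_summable_integral {d : ℕ → α → ℝ} (hd0 : ∀ k x, 0 ≤ d k x)
    (hdi : ∀ k, Integrable (d k) μ) (hs : Summable fun k => ∫ x, d k x ∂μ) :
    ∀ᵐ x ∂μ, Tendsto (fun k => d k x) atTop (𝓝 0) := by
  have hmeas : ∀ k, AEMeasurable (fun x => ENNReal.ofReal (d k x)) μ := fun k =>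
    (hdi k).1.aemeasurable.ennreal_ofReal
  have hlint : ∫⁻ x, ∑' k, ENNReal.ofReal (d k x) ∂μ ≠ ⊤ := by
    rw [lintegral_tsum hmeas]
    simp_rw [← ofReal_integral_eq_lintegral_ofReal (hdi _) (.of_forall (hd0 _))]
    rw [← ENNReal.ofReal_tsum_of_nonneg (fun k => integral_nonneg (hd0 k)) hs]
    exact ENNReal.ofReal_ne_top
  filter_upwards [ae_lt_top' (AEMeasurable.tsum hmeas) hlint] with x hx
  have h := (ENNReal.tendsto_toReal ENNReal.zero_ne_top).comp
    (ENNReal.tendsto_atTop_zero_of_tsum_ne_top hx.ne)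
  simpa [Function.comp_def, ENNReal.toReal_ofReal (hd0 _ x)] using h

lemma exists_strictMono_ae_forall_tendsto_zero {ι : Type*} [Countable ι]
    {d : ι → ℕ → α → ℝ} (hd0 : ∀ i n x, 0 ≤ d i n x) (hdi : ∀ i n, Integrable (d i n) μ)
    (hd : ∀ i, Tendsto (fun n => ∫ x, d i n x ∂μ) atTop (𝓝 0)) :
    ∃ φ : ℕ → ℕ, StrictMono φ ∧ ∀ᵐ x ∂μ, ∀ i, Tendsto (fun k => d i (φ k) x) atTop (𝓝 0) := by
  obtain ⟨φ, hφ, hsum⟩ := exists_strictMono_forall_summable hd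
  exact ⟨φ, hφ, ae_all_iff.2 fun i =>
    ae_tendsto_zero_of_summable_integral (fun k => hd0 i (φ k)) (fun k => hdi i (φ k)) (hsum i)⟩

end AESubsequence

section Disintegration

variable {X Y : Type*} [MeasurableSpace X] [MeasurableSpace Y]

lemma isCondKernel_map_swap_of_forall_prod {ρ : Measure (X × Y)} [IsFiniteMeasure ρ]
    {κ : Kernel Y X} [IsSFiniteKernel κ]
    (h : ∀ A B, MeasurableSet A → MeasurableSet B → ρ (A ×ˢ B) = ∫⁻ y in B, κ y A ∂ρ.snd) :
    (ρ.map Prod.swap).IsCondKernel κ := by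
  refine ⟨(Measure.ext_prod fun {B A} hB hA => ?_).symm⟩
  rw [Measure.fst_map_swap, Measure.compProd_apply_prod hB hA,
    Measure.map_apply measurable_swap (hB.prod hA), Set.preimage_swap_prod, h A B hA hB]

lemma setIntegral_univ_prod_eq_setIntegral_integral {ρ : Measure (X × Y)} {κ : Kernel Y X}
    [SFinite ρ] [IsSFiniteKernel κ] [(ρ.map Prod.swap).IsCondKernel κ] {f : X → ℝ}
    (hf : Integrable (fun p : X × Y => f p.1) ρ) {B : Set Y} (hB : MeasurableSet B) :
    ∫ p in Set.univ ×ˢ B, f p.1 ∂ρ = ∫ y in B, ∫ x, f x ∂κ y ∂ρ.snd := by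
  have hswap : ρ.map Prod.swap = ρ.map MeasurableEquiv.prodComm := rfl
  have hf' : Integrable (fun q : Y × X => f q.2) (ρ.map Prod.swap) := by
    rw [hswap, integrable_map_equiv]
    exact hf
  calc ∫ p in Set.univ ×ˢ B, f p.1 ∂ρ = ∫ q in B ×ˢ Set.univ, f q.2 ∂(ρ.map Prod.swap) := by
        rw [hswap, setIntegral_map_equiv]
        exact congrArg (fun s => ∫ p in s, f p.1 ∂ρ) (Set.preimage_swap_prod B Set.univ).symm
    _ = ∫ q in B ×ˢ Set.univ, f q.2 ∂(ρ.snd ⊗ₘ κ) := by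
        rw [← Measure.fst_map_swap, Measure.disintegrate]
    _ = ∫ y in B, ∫ x, f x ∂κ y ∂ρ.snd := by
        rw [Measure.setIntegral_compProd hB .univ]
        · simp only [Measure.restrict_univ]
        rw [← Measure.fst_map_swap, Measure.disintegrate]
        exact hf'.integrableOn

lemma abs_sub_le_ciSup_abs_sub {ι : Sort*} {a b : ι → ℝ} {C : ℝ} (ha : ∀ i, |a i| ≤ C)
    (hb : ∀ i, |b i| ≤ C) (i : ι) : |a i - b i| ≤ ⨆ j, |a j - b j| :=
  le_ciSup (f := fun j => |a j - b j|)
    ⟨2 * C, Set.forall_mem_range.2 fun j => by linarith [abs_sub (a j) (b j), ha j, hb j]⟩ i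

lemma abs_measureReal_snd_sub_le_iSup (ρ ρ' : Measure (X × Y)) [IsProbabilityMeasure ρ]
    [IsProbabilityMeasure ρ'] {B : Set Y} (hB : MeasurableSet B) :
    |ρ'.snd.real B - ρ.snd.real B| ≤ ⨆ C : {C : Set Y // MeasurableSet C},
      |(ρ' (Set.univ ×ˢ C.1)).toReal - (ρ (Set.univ ×ˢ C.1)).toReal| := by
  have hbound : ∀ (σ : Measure (X × Y)) [IsProbabilityMeasure σ]
      (C : {C : Set Y // MeasurableSet C}), |(σ (Set.univ ×ˢ C.1)).toReal| ≤ 1 := fun σ _ C =>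
    (abs_of_nonneg ENNReal.toReal_nonneg).trans_le measureReal_le_one
  simp only [measureReal_def, Measure.snd_apply hB, ← Set.univ_prod]
  exact abs_sub_le_ciSup_abs_sub (hbound ρ') (hbound ρ) ⟨B, hB⟩

lemma abs_setIntegral_sub_le_iSup [TopologicalSpace X] (ρ ρ' : Measure (X × Y))
    [IsProbabilityMeasure ρ] [IsProbabilityMeasure ρ'] (f : X →ᵇ ℝ) {B : Set Y}
    (hB : MeasurableSet B) :
    |∫ p in Set.univ ×ˢ B, f p.1 ∂ρ' - ∫ p in Set.univ ×ˢ B, f p.1 ∂ρ| ≤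
      ⨆ C : {C : Set Y // MeasurableSet C},
        |∫ p in Set.univ ×ˢ C.1, f p.1 ∂ρ' - ∫ p in Set.univ ×ˢ C.1, f p.1 ∂ρ| := by
  have hbound : ∀ (σ : Measure (X × Y)) [IsProbabilityMeasure σ]
      (C : {C : Set Y // MeasurableSet C}), |∫ p in Set.univ ×ˢ C.1, f p.1 ∂σ| ≤ ‖f‖ :=
    fun σ _ C => (norm_setIntegral_le_of_norm_le_const (measure_lt_top _ _)
      fun (p : X × Y) _ => f.norm_coe_le_norm p.1).trans
        (mul_le_of_le_one_right (norm_nonneg f) measureReal_le_one)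
  exact abs_sub_le_ciSup_abs_sub (hbound ρ') (hbound ρ) ⟨B, hB⟩

variable [TopologicalSpace X] [OpensMeasurableSpace X]

lemma measurable_integral_boundedContinuousFunction (κ : Kernel Y X) (f : X →ᵇ ℝ) :
    Measurable fun y => ∫ x, f x ∂κ y :=
  (f.continuous.stronglyMeasurable.integral_kernel (κ := κ)).measurable

lemma abs_integral_boundedContinuousFunction_le (κ : Kernel Y X) [IsMarkovKernel κ]
    (f : X →ᵇ ℝ) (y : Y) : |∫ x, f x ∂κ y| ≤ ‖f‖ :=
  f.norm_integral_le_norm (κ y)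

lemma integrable_integral_boundedContinuousFunction (μ : Measure Y) [IsFiniteMeasure μ]
    (κ : Kernel Y X) [IsMarkovKernel κ] (f : X →ᵇ ℝ) :
    Integrable (fun y => ∫ x, f x ∂κ y) μ :=
  .of_bound (measurable_integral_boundedContinuousFunction κ f).aestronglyMeasurable ‖f‖
    (.of_forall (abs_integral_boundedContinuousFunction_le κ f))

lemma integrable_comp_fst_boundedContinuousFunction (ρ : Measure (X × Y)) [IsFiniteMeasure ρ]
    (f : X →ᵇ ℝ) : Integrable (fun p => f p.1) ρ :=
  .of_bound (f.continuous.measurable.comp measurable_fst).aestronglyMeasurable ‖f‖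
    (.of_forall fun p => f.norm_coe_le_norm p.1)

lemma integral_abs_integral_sub_integral_le {ρ ρ' : Measure (X × Y)} [IsFiniteMeasure ρ]
    [IsFiniteMeasure ρ'] {κ κ' : Kernel Y X} [IsMarkovKernel κ] [IsMarkovKernel κ']
    [(ρ.map Prod.swap).IsCondKernel κ] [(ρ'.map Prod.swap).IsCondKernel κ'] (f : X →ᵇ ℝ)
    {εTV εF : ℝ} (hTV : ∀ B, MeasurableSet B → |ρ'.snd.real B - ρ.snd.real B| ≤ εTV)
    (hF : ∀ B, MeasurableSet B →
      |∫ p in Set.univ ×ˢ B, f p.1 ∂ρ' - ∫ p in Set.univ ×ˢ B, f p.1 ∂ρ| ≤ εF) :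
    ∫ y, |∫ x, f x ∂κ' y - ∫ x, f x ∂κ y| ∂ρ.snd ≤ 2 * (2 * ‖f‖ * εTV + εF) := by
  set g' : Y → ℝ := fun y => ∫ x, f x ∂κ' y
  set g : Y → ℝ := fun y => ∫ x, f x ∂κ y
  have hg' := measurable_integral_boundedContinuousFunction κ' f
  have hg := measurable_integral_boundedContinuousFunction κ f
  have hint' := integrable_integral_boundedContinuousFunction ρ.snd κ' f
  have hint := integrable_integral_boundedContinuousFunction ρ.snd κ f
  refine integral_abs_le_two_mul_of_forall_abs_setIntegral_le (hg'.sub hg)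
    (hint'.sub hint) fun B hB => ?_
  have hmarginal : |∫ y in B, g' y ∂ρ.snd - ∫ y in B, g' y ∂ρ'.snd| ≤ 2 * ‖f‖ * εTV := by
    refine abs_integral_sub_integral_le_of_forall_abs_measureReal_sub_le hg' (norm_nonneg f)
      (abs_integral_boundedContinuousFunction_le κ' f) fun C hC => ?_
    rw [measureReal_restrict_apply hC, measureReal_restrict_apply hC, abs_sub_comm]
    exact hTV _ (hC.inter hB)
  have hjoint : |∫ y in B, g' y ∂ρ'.snd - ∫ y in B, g y ∂ρ.snd| ≤ εF := by
    rw [← setIntegral_univ_prod_eq_setIntegral_integral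
        (integrable_comp_fst_boundedContinuousFunction ρ' f) hB,
      ← setIntegral_univ_prod_eq_setIntegral_integral
        (integrable_comp_fst_boundedContinuousFunction ρ f) hB]
    exact hF B hB
  simp only [Pi.sub_apply]
  rw [integral_sub hint'.integrableOn hint.integrableOn]
  exact (abs_sub_le _ _ _).trans (add_le_add hmarginal hjoint)

end Disintegration

theorem assumptionM_implies_assumptionH_general
    {S1 S2 S3 : Type*}
    [MetricSpace S1] [MeasurableSpace S1] [BorelSpace S1]
    [MeasurableSpace S2]
    [MetricSpace S3] [MeasurableSpace S3]
    (Ψ : Kernel S3 (S1 × S2)) [IsMarkovKernel Ψ]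
    (hTV : ∀ (s : ℕ → S3) (t : S3), Tendsto s atTop (𝓝 t) →
      Tendsto (fun n => ⨆ B : {B : Set S2 // MeasurableSet B},
        |((Ψ (s n)) ((Set.univ : Set S1) ×ˢ B.1)).toReal -
          ((Ψ t) ((Set.univ : Set S1) ×ˢ B.1)).toReal|) atTop (𝓝 0))
    (F : Set (BoundedContinuousFunction S1 ℝ)) (hFc : F.Countable)
    (hFdet : ∀ (μ : ℕ → ProbabilityMeasure S1) (μ₀ : ProbabilityMeasure S1),
      Tendsto μ atTop (𝓝 μ₀) ↔
        ∀ f ∈ F, Tendsto (fun n => ∫ x, f x ∂(μ n : Measure S1)) atTop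
          (𝓝 (∫ x, f x ∂(μ₀ : Measure S1))))
    (hF : ∀ f ∈ F, ∀ (s : ℕ → S3) (t : S3), Tendsto s atTop (𝓝 t) →
      Tendsto (fun n => ⨆ B : {B : Set S2 // MeasurableSet B},
        |(∫ x in Set.univ ×ˢ B.1, f x.1 ∂(Ψ (s n))) -
          ∫ x in Set.univ ×ˢ B.1, f x.1 ∂(Ψ t)|) atTop (𝓝 0))
    (Φ : Kernel (S2 × S3) S1) [IsMarkovKernel Φ]
    (hΦ : ∀ (t : S3) (A : Set S1) (B : Set S2), MeasurableSet A → MeasurableSet B →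
      Ψ t (A ×ˢ B) = ∫⁻ s2 in B, Φ (s2, t) A ∂(Measure.map Prod.snd (Ψ t))) :
    ∀ (s : ℕ → S3) (t : S3), Tendsto s atTop (𝓝 t) →
      ∃ φ : ℕ → ℕ, StrictMono φ ∧
        ∀ᵐ s2 ∂(Measure.map Prod.snd (Ψ t)), ∀ f : BoundedContinuousFunction S1 ℝ,
          Tendsto (fun k => ∫ x, f x ∂(Φ (s2, s (φ k)))) atTop
            (𝓝 (∫ x, f x ∂(Φ (s2, t)))) := by
  intro s t hst
  have : ∀ t', ((Ψ t').map Prod.swap).IsCondKernel (Φ.sectL t') := fun t' =>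
    isCondKernel_map_swap_of_forall_prod (hΦ t')
  have hL1 : ∀ f : F, Tendsto (fun n => ∫ y, |∫ x, (f : S1 →ᵇ ℝ) x ∂Φ (y, s n) -
      ∫ x, (f : S1 →ᵇ ℝ) x ∂Φ (y, t)| ∂(Ψ t).snd) atTop (𝓝 0) := by
    rintro ⟨f, hf⟩
    have hlim := (((hTV s t hst).const_mul (2 * ‖f‖)).add (hF f hf s t hst)).const_mul 2
    rw [mul_zero, zero_add, mul_zero] at hlim
    refine squeeze_zero (fun n => integral_nonneg fun _ => abs_nonneg _) (fun n => ?_) hlim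
    exact integral_abs_integral_sub_integral_le (κ := Φ.sectL t) (κ' := Φ.sectL (s n)) f
      (fun B hB => abs_measureReal_snd_sub_le_iSup _ _ hB)
      (fun B hB => abs_setIntegral_sub_le_iSup _ _ f hB)
  have := hFc.to_subtype
  obtain ⟨φ, hφ, hae⟩ := exists_strictMono_ae_forall_tendsto_zero
    (d := fun (f : F) n y =>
      |∫ x, (f : S1 →ᵇ ℝ) x ∂Φ (y, s n) - ∫ x, (f : S1 →ᵇ ℝ) x ∂Φ (y, t)|)
    (fun _ _ _ => abs_nonneg _) (fun f n =>
      ((integrable_integral_boundedContinuousFunction _ (Φ.sectL (s n)) f).sub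
        (integrable_integral_boundedContinuousFunction _ (Φ.sectL t) f)).abs) hL1
  refine ⟨φ, hφ, ?_⟩
  filter_upwards [hae] with y hy
  let μ : ℕ → ProbabilityMeasure S1 := fun k => ⟨Φ (y, s (φ k)), inferInstance⟩
  have hμ : Tendsto μ atTop (𝓝 ⟨Φ (y, t), inferInstance⟩) := (hFdet _ _).2 fun f hf =>
    tendsto_iff_norm_sub_tendsto_zero.2 (hy ⟨f, hf⟩)
  exact ProbabilityMeasure.tendsto_iff_forall_integral_tendsto.1 hμ

/-- If the marginal of `Ψ` on `S2` is continuous in total variation and the semi-uniform Feller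
convergence property holds for every `f` in a countable set `F` of bounded continuous functions
determining weak convergence on `P(S1)`, then for any disintegrating kernel `Φ` and any sequence
`s3⁽ⁿ⁾ → s3` there is a subsequence along which `Φ(·|s2, s3⁽ⁿᵏ⁾) → Φ(·|s2, s3)` weakly for
`Ψ(S1, ·|s3)`-almost every `s2`. -/
theorem assumptionM_implies_assumptionH
    {S1 S2 S3 : Type*}
    [MetricSpace S1] [TopologicalSpace.SeparableSpace S1] [MeasurableSpace S1] [BorelSpace S1]
    [StandardBorelSpace S1] [Nonempty S1]
    [MetricSpace S2] [TopologicalSpace.SeparableSpace S2] [MeasurableSpace S2] [BorelSpace S2]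
    [StandardBorelSpace S2] [Nonempty S2]
    [MetricSpace S3] [TopologicalSpace.SeparableSpace S3] [MeasurableSpace S3] [BorelSpace S3]
    [StandardBorelSpace S3] [Nonempty S3]
    (Ψ : Kernel S3 (S1 × S2)) [IsMarkovKernel Ψ]
    (hTV : ∀ (s : ℕ → S3) (t : S3), Tendsto s atTop (𝓝 t) →
      Tendsto (fun n => ⨆ B : {B : Set S2 // MeasurableSet B},
        |((Ψ (s n)) ((Set.univ : Set S1) ×ˢ B.1)).toReal -
          ((Ψ t) ((Set.univ : Set S1) ×ˢ B.1)).toReal|) atTop (𝓝 0))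
    (F : Set (BoundedContinuousFunction S1 ℝ)) (hFc : F.Countable)
    (hFdet : ∀ (μ : ℕ → ProbabilityMeasure S1) (μ₀ : ProbabilityMeasure S1),
      Tendsto μ atTop (𝓝 μ₀) ↔
        ∀ f ∈ F, Tendsto (fun n => ∫ x, f x ∂(μ n : Measure S1)) atTop
          (𝓝 (∫ x, f x ∂(μ₀ : Measure S1))))
    (hF : ∀ f ∈ F, ∀ (s : ℕ → S3) (t : S3), Tendsto s atTop (𝓝 t) →
      Tendsto (fun n => ⨆ B : {B : Set S2 // MeasurableSet B},
        |(∫ x in Set.univ ×ˢ B.1, f x.1 ∂(Ψ (s n))) -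
          ∫ x in Set.univ ×ˢ B.1, f x.1 ∂(Ψ t)|) atTop (𝓝 0))
    (Φ : Kernel (S2 × S3) S1) [IsMarkovKernel Φ]
    (hΦ : ∀ (t : S3) (A : Set S1) (B : Set S2), MeasurableSet A → MeasurableSet B →
      Ψ t (A ×ˢ B) = ∫⁻ s2 in B, Φ (s2, t) A ∂(Measure.map Prod.snd (Ψ t))) :
    ∀ (s : ℕ → S3) (t : S3), Tendsto s atTop (𝓝 t) →
      ∃ φ : ℕ → ℕ, StrictMono φ ∧
        ∀ᵐ s2 ∂(Measure.map Prod.snd (Ψ t)), ∀ f : BoundedContinuousFunction S1 ℝ,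
          Tendsto (fun k => ∫ x, f x ∂(Φ (s2, s (φ k)))) atTop
            (𝓝 (∫ x, f x ∂(Φ (s2, t)))) :=
  assumptionM_implies_assumptionH_general Ψ hTV F hFc hFdet hF Φ hΦ
end

section
/- Let P1 be a stochastic kernel on W given W×A and Q1 a stochastic kernel on Y given W×A, and define the stochastic kernel P on W×Y given W×A by P(B×C|w,a) := P1(B|w,a)·Q1(C|w,a) for Borel B ⊆ W and C ⊆ Y. Then P is semi-uniform Feller if and only if P1 is weakly continuous and Q1 is continuous in total variation. -/
open MeasureTheory ProbabilityTheory Filter Topology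

namespace ProbabilityTheory.Kernel

variable {T X : Type*} [TopologicalSpace T] [MeasurableSpace T] [MeasurableSpace X]

def IsWeaklyContinuous [TopologicalSpace X] (κ : Kernel T X) : Prop :=
  ∀ (s : ℕ → T) (t : T), Tendsto s atTop (𝓝 t) → ∀ f : BoundedContinuousFunction X ℝ,
    Tendsto (fun n => ∫ x, f x ∂(κ (s n))) atTop (𝓝 (∫ x, f x ∂(κ t)))

def IsTVContinuous (κ : Kernel T X) : Prop :=
  ∀ (s : ℕ → T) (t : T), Tendsto s atTop (𝓝 t) →
    Tendsto (fun n => ⨆ C : {C : Set X // MeasurableSet C}, |(κ (s n)).real C - (κ t).real C|)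
      atTop (𝓝 0)

end ProbabilityTheory.Kernel

theorem abs_mul_sub_mul_le {a a' b b' M : ℝ} (hb' : |b'| ≤ 1) (ha : |a| ≤ M) :
    |b' * a' - b * a| ≤ |a' - a| + M * |b' - b| :=
  calc |b' * a' - b * a| = |b' * (a' - a) + (b' - b) * a| := by ring_nf
    _ ≤ |b'| * |a' - a| + |b' - b| * |a| := by
      rw [← abs_mul, ← abs_mul]; exact abs_add_le _ _
    _ ≤ 1 * |a' - a| + |b' - b| * M := by gcongr
    _ = |a' - a| + M * |b' - b| := by ring

theorem setIntegral_univ_prod_comp_fst {α β E : Type*} [MeasurableSpace α] [MeasurableSpace β]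
    [NormedAddCommGroup E] [NormedSpace ℝ E] (μ : Measure α) (ν : Measure β) [SFinite μ]
    [SFinite ν] (g : α → E) (s : Set β) :
    ∫ z in Set.univ ×ˢ s, g z.1 ∂μ.prod ν = ν.real s • ∫ x, g x ∂μ := by
  rw [← Measure.prod_restrict, Measure.restrict_univ, integral_fun_fst,
    measureReal_restrict_apply_univ]

theorem BoundedContinuousFunction.abs_integral_le_norm {X : Type*} [TopologicalSpace X]
    [MeasurableSpace X] (μ : Measure X) [IsProbabilityMeasure μ]
    (f : BoundedContinuousFunction X ℝ) :
    |∫ x, f x ∂μ| ≤ ‖f‖ := by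
  simpa using norm_integral_le_of_norm_le_const (μ := μ) (Eventually.of_forall f.norm_coe_le_norm)

theorem abs_measureReal_le_one {X : Type*} [MeasurableSpace X] {μ : Measure X}
    [IsZeroOrProbabilityMeasure μ] {s : Set X} : |μ.real s| ≤ 1 :=
  (abs_of_nonneg measureReal_nonneg).trans_le measureReal_le_one

theorem abs_measureReal_sub_le_one {X : Type*} [MeasurableSpace X] (μ ν : Measure X)
    [IsZeroOrProbabilityMeasure μ] [IsZeroOrProbabilityMeasure ν] (s : Set X) :
    |μ.real s - ν.real s| ≤ 1 := by
  have hμ : μ.real s ≤ 1 := measureReal_le_one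
  have hν : ν.real s ≤ 1 := measureReal_le_one
  exact abs_sub_le_iff.2 ⟨by linarith [measureReal_nonneg (μ := ν) (s := s)],
    by linarith [measureReal_nonneg (μ := μ) (s := s)]⟩

section ProductSupremum

variable {Y : Type*} [MeasurableSpace Y] (ν ν' : Measure Y) [IsZeroOrProbabilityMeasure ν]
  [IsZeroOrProbabilityMeasure ν']

theorem bddAbove_range_abs_measureReal_sub :
    BddAbove (Set.range fun C : {C : Set Y // MeasurableSet C} => |ν'.real C - ν.real C|) :=
  ⟨1, by rintro _ ⟨C, rfl⟩; exact abs_measureReal_sub_le_one ν' ν C⟩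

theorem bddAbove_range_abs_measureReal_mul_sub (a a' : ℝ) :
    BddAbove (Set.range fun B : {B : Set Y // MeasurableSet B} =>
      |ν'.real B * a' - ν.real B * a|) := by
  refine ⟨|a' - a| + |a| * 1, ?_⟩
  rintro _ ⟨B, rfl⟩
  refine (abs_mul_sub_mul_le abs_measureReal_le_one le_rfl).trans ?_
  gcongr
  exact abs_measureReal_sub_le_one ν' ν B

theorem iSup_abs_measureReal_mul_sub_le {a a' M : ℝ} (ha : |a| ≤ M) :
    ⨆ B : {B : Set Y // MeasurableSet B}, |ν'.real B * a' - ν.real B * a| ≤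
      |a' - a| + M * ⨆ C : {C : Set Y // MeasurableSet C}, |ν'.real C - ν.real C| := by
  have hM : 0 ≤ M := (abs_nonneg a).trans ha
  refine Real.iSup_le (fun B => (abs_mul_sub_mul_le abs_measureReal_le_one ha).trans ?_) ?_
  · gcongr
    exact le_ciSup (bddAbove_range_abs_measureReal_sub ν ν') B
  · exact add_nonneg (abs_nonneg _) (mul_nonneg hM (Real.iSup_nonneg fun _ => abs_nonneg _))

end ProductSupremum

theorem abs_sub_le_iSup_abs_measureReal_mul_sub {Y : Type*} [MeasurableSpace Y]
    (ν ν' : Measure Y) [IsProbabilityMeasure ν] [IsProbabilityMeasure ν'] (a a' : ℝ) :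
    |a' - a| ≤ ⨆ B : {B : Set Y // MeasurableSet B}, |ν'.real B * a' - ν.real B * a| := by
  simpa using le_ciSup (bddAbove_range_abs_measureReal_mul_sub ν ν' a a') ⟨_, MeasurableSet.univ⟩

namespace ProbabilityTheory.Kernel

variable {T X Y : Type*} [TopologicalSpace T] [MeasurableSpace T] [TopologicalSpace X]
  [MeasurableSpace X] [MeasurableSpace Y]

theorem semiUniformFeller_prod_iff (κ : Kernel T X) [IsMarkovKernel κ] (η : Kernel T Y)
    [IsMarkovKernel η] :
    SemiUniformFeller (κ ×ₖ η) ↔ κ.IsWeaklyContinuous ∧ η.IsTVContinuous := by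
  simp only [SemiUniformFeller, prod_apply, setIntegral_univ_prod_comp_fst, smul_eq_mul]
  constructor
  · intro h
    refine ⟨fun s t hst f => ?_, fun s t hst => ?_⟩
    · rw [tendsto_iff_dist_tendsto_zero]
      exact squeeze_zero (fun n => dist_nonneg)
        (fun n => abs_sub_le_iSup_abs_measureReal_mul_sub _ _ _ _) (h s t hst f)
    · simpa using h s t hst 1
  · rintro ⟨hκ, hη⟩ s t hst f
    refine squeeze_zero (fun n => Real.iSup_nonneg fun _ => abs_nonneg _)
      (fun n => iSup_abs_measureReal_mul_sub_le _ _ (f.abs_integral_le_norm _)) ?_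
    simpa using
      ((hκ s t hst f).sub_const (∫ x, f x ∂κ t)).abs.add ((hη s t hst).const_mul ‖f‖)

end ProbabilityTheory.Kernel

theorem semiUniformFeller_pomdp1_general
    {W Y A : Type*}
    [MetricSpace W] [MeasurableSpace W]
    [MeasurableSpace Y]
    [MetricSpace A] [MeasurableSpace A]
    (P1 : Kernel (W × A) W) [IsMarkovKernel P1]
    (Q1 : Kernel (W × A) Y) [IsMarkovKernel Q1]
    (P : Kernel (W × A) (W × Y))
    (hP : ∀ (w : W) (a : A) (B : Set W) (C : Set Y), MeasurableSet B → MeasurableSet C →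
      P (w, a) (B ×ˢ C) = P1 (w, a) B * Q1 (w, a) C) :
    SemiUniformFeller P ↔
      ((∀ (p : ℕ → W × A) (p₀ : W × A), Tendsto p atTop (𝓝 p₀) →
          ∀ f : BoundedContinuousFunction W ℝ,
            Tendsto (fun n => ∫ x, f x ∂(P1 (p n))) atTop (𝓝 (∫ x, f x ∂(P1 p₀)))) ∧
        (∀ (p : ℕ → W × A) (p₀ : W × A), Tendsto p atTop (𝓝 p₀) →
          Tendsto (fun n => ⨆ C : {C : Set Y // MeasurableSet C},
            |((Q1 (p n)) C.1).toReal - ((Q1 p₀) C.1).toReal|) atTop (𝓝 0))) := by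
  obtain rfl : P = P1 ×ₖ Q1 := by
    ext1 t
    rw [Kernel.prod_apply]
    exact (Measure.prod_eq fun B C hB hC => hP t.1 t.2 B C hB hC).symm
  exact Kernel.semiUniformFeller_prod_iff P1 Q1

/-- For a `POMDP₁` with transition kernel `P(B × C | w, a) = P₁(B | w, a) · Q₁(C | w, a)`, the
kernel `P` is semi-uniform Feller if and only if `P₁` is weakly continuous and `Q₁` is
continuous in total variation. -/
theorem semiUniformFeller_pomdp1
    {W Y A : Type*}
    [MetricSpace W] [TopologicalSpace.SeparableSpace W] [MeasurableSpace W] [BorelSpace W]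
    [StandardBorelSpace W] [Nonempty W]
    [MetricSpace Y] [TopologicalSpace.SeparableSpace Y] [MeasurableSpace Y] [BorelSpace Y]
    [StandardBorelSpace Y] [Nonempty Y]
    [MetricSpace A] [TopologicalSpace.SeparableSpace A] [MeasurableSpace A] [BorelSpace A]
    [StandardBorelSpace A] [Nonempty A]
    (P1 : Kernel (W × A) W) [IsMarkovKernel P1]
    (Q1 : Kernel (W × A) Y) [IsMarkovKernel Q1]
    (P : Kernel (W × A) (W × Y)) [IsMarkovKernel P]
    (hP : ∀ (w : W) (a : A) (B : Set W) (C : Set Y), MeasurableSet B → MeasurableSet C →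
      P (w, a) (B ×ˢ C) = P1 (w, a) B * Q1 (w, a) C) :
    SemiUniformFeller P ↔
      ((∀ (p : ℕ → W × A) (p₀ : W × A), Tendsto p atTop (𝓝 p₀) →
          ∀ f : BoundedContinuousFunction W ℝ,
            Tendsto (fun n => ∫ x, f x ∂(P1 (p n))) atTop (𝓝 (∫ x, f x ∂(P1 p₀)))) ∧
        (∀ (p : ℕ → W × A) (p₀ : W × A), Tendsto p atTop (𝓝 p₀) →
          Tendsto (fun n => ⨆ C : {C : Set Y // MeasurableSet C},
            |((Q1 (p n)) C.1).toReal - ((Q1 p₀) C.1).toReal|) atTop (𝓝 0))) :=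
  semiUniformFeller_pomdp1_general P1 Q1 P hP
end
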